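/- arXiv:2405.08422 — 7 statements merged into one kernel-verified Lean document; each statement's English description precedes it below -/
import Mathlib

section
/- Let σ be a first-order signature containing only relation symbols (no function or constant symbols), let Θ be a Σ2 sentence of σ, and let K be the class of all nonempty models of Θ. Then for every Π2 sentence Φ of σ: Φ is true in every structure in K if and only if Φ is true in every finite structure in K. In other words, the Π2-theory of K coincides with the Π2-theory of the finite structures in K. -/
open FirstOrder FirstOrder.Language

universe u

/-- A bounded formula is Σ₁ if it consists of a (possibly empty) block of existential
quantifiers followed by a quantifier-free formula. -/
inductive IsSigma1 {L : Language} {α : Type*} : {n : ℕ} → L.BoundedFormula α n → Prop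
  | of_isQF {n : ℕ} {φ : L.BoundedFormula α n} : φ.IsQF → IsSigma1 φ
  | ex {n : ℕ} {φ : L.BoundedFormula α (n + 1)} : IsSigma1 φ → IsSigma1 φ.ex

/-- A bounded formula is Π₁ if it consists of a (possibly empty) block of universal
quantifiers followed by a quantifier-free formula. -/
inductive IsPi1 {L : Language} {α : Type*} : {n : ℕ} → L.BoundedFormula α n → Prop
  | of_isQF {n : ℕ} {φ : L.BoundedFormula α n} : φ.IsQF → IsPi1 φ
  | all {n : ℕ} {φ : L.BoundedFormula α (n + 1)} : IsPi1 φ → IsPi1 φ.all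

/-- A bounded formula is Π₂ if it has the form ∀x₁…∀xₘ ∃y₁…∃yₖ ψ with ψ quantifier-free. -/
inductive IsPi2 {L : Language} {α : Type*} : {n : ℕ} → L.BoundedFormula α n → Prop
  | of_isSigma1 {n : ℕ} {φ : L.BoundedFormula α n} : IsSigma1 φ → IsPi2 φ
  | all {n : ℕ} {φ : L.BoundedFormula α (n + 1)} : IsPi2 φ → IsPi2 φ.all

/-- A bounded formula is Σ₂ if it has the form ∃x₁…∃xₘ ∀y₁…∀yₖ ψ with ψ quantifier-free. -/
inductive IsSigma2 {L : Language} {α : Type*} : {n : ℕ} → L.BoundedFormula α n → Prop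
  | of_isPi1 {n : ℕ} {φ : L.BoundedFormula α n} : IsPi1 φ → IsSigma2 φ
  | ex {n : ℕ} {φ : L.BoundedFormula α (n + 1)} : IsSigma2 φ → IsSigma2 φ.ex

section Aux

variable {L : Language} {α : Type*} {M : Type u} {N : Type u}
  [L.Structure M] [L.Structure N]

/-- Π₁ formulas are reflected by embeddings (preserved downward to substructures). -/
lemma myIsPi1_realize_embedding {n : ℕ} {φ : L.BoundedFormula α n} (h : IsPi1 φ)
    (f : N ↪[L] M) {v : α → N} {xs : Fin n → N} :
    φ.Realize (f ∘ v) (f ∘ xs) → φ.Realize v xs := by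
  induction h with
  | of_isQF hqf => exact (hqf.realize_embedding f).mp
  | all _ ih =>
    intro hr
    rw [BoundedFormula.realize_all] at hr ⊢
    intro a
    apply ih
    rw [Fin.comp_snoc]
    exact hr (f a)

/-- Σ₁ formulas are preserved upward by embeddings. -/
lemma myIsSigma1_realize_embedding {n : ℕ} {φ : L.BoundedFormula α n} (h : IsSigma1 φ)
    (f : N ↪[L] M) {v : α → N} {xs : Fin n → N} :
    φ.Realize v xs → φ.Realize (f ∘ v) (f ∘ xs) := by
  induction h with
  | of_isQF hqf => exact (hqf.realize_embedding f).mpr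
  | ex _ ih =>
    intro hr
    rw [BoundedFormula.realize_ex] at hr ⊢
    obtain ⟨a, ha⟩ := hr
    exact ⟨f a, by rw [← Fin.comp_snoc]; exact ih ha⟩

/-- For a realized Σ₂ formula there is a finite set of witnesses such that the formula
holds in any substructure containing them. -/
lemma myIsSigma2_witness {n : ℕ} {φ : L.BoundedFormula Empty n} (h : IsSigma2 φ) :
    ∀ (xs : Fin n → M), φ.Realize default xs →
      ∃ s : Set M, s.Finite ∧ ∀ (N : Type u) [L.Structure N] (f : N ↪[L] M)
        (xs' : Fin n → N), s ⊆ Set.range f → f ∘ xs' = xs → φ.Realize default xs' := by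
  induction h with
  | of_isPi1 hp =>
    intro xs hxs
    refine ⟨∅, Set.finite_empty, fun N _ f xs' _ hxs' => ?_⟩
    apply myIsPi1_realize_embedding hp f
    rw [hxs', Subsingleton.elim (f ∘ (default : Empty → N)) default]
    exact hxs
  | ex _ ih =>
    intro xs hxs
    rw [BoundedFormula.realize_ex] at hxs
    obtain ⟨a, ha⟩ := hxs
    obtain ⟨s, hsfin, hs⟩ := ih _ ha
    refine ⟨insert a s, hsfin.insert a, fun N _ f xs' hsub hxs' => ?_⟩
    obtain ⟨b, hb⟩ := hsub (Set.mem_insert a s)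
    rw [BoundedFormula.realize_ex]
    refine ⟨b, hs N f (Fin.snoc xs' b) (fun x hx => hsub (Set.mem_insert_of_mem a hx)) ?_⟩
    rw [Fin.comp_snoc, hxs', hb]

/-- For a falsified Π₂ formula there is a finite set of witnesses such that the formula
fails in any substructure containing them. -/
lemma myIsPi2_counterwitness {n : ℕ} {φ : L.BoundedFormula Empty n} (h : IsPi2 φ) :
    ∀ (xs : Fin n → M), ¬ φ.Realize default xs →
      ∃ s : Set M, s.Finite ∧ ∀ (N : Type u) [L.Structure N] (f : N ↪[L] M)
        (xs' : Fin n → N), s ⊆ Set.range f → f ∘ xs' = xs → ¬ φ.Realize default xs' := by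
  induction h with
  | of_isSigma1 hp =>
    intro xs hxs
    refine ⟨∅, Set.finite_empty, fun N _ f xs' _ hxs' hcon => ?_⟩
    apply hxs
    have := myIsSigma1_realize_embedding hp f hcon
    rw [hxs', Subsingleton.elim (f ∘ (default : Empty → N)) default] at this
    exact this
  | all _ ih =>
    intro xs hxs
    rw [BoundedFormula.realize_all] at hxs
    push_neg at hxs
    obtain ⟨a, ha⟩ := hxs
    obtain ⟨s, hsfin, hs⟩ := ih _ ha
    refine ⟨insert a s, hsfin.insert a, fun N _ f xs' hsub hxs' hcon => ?_⟩
    obtain ⟨b, hb⟩ := hsub (Set.mem_insert a s)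
    rw [BoundedFormula.realize_all] at hcon
    refine hs N f (Fin.snoc xs' b) (fun x hx => hsub (Set.mem_insert_of_mem a hx)) ?_ (hcon b)
    rw [Fin.comp_snoc, hxs', hb]

end Aux

/-- Let σ be a relational signature, Θ a Σ₂ sentence, and K the class of all nonempty models
of Θ. Then a Π₂ sentence Φ is true in every structure in K iff it is true in every finite
structure in K: the Π₂-theory of K coincides with the Π₂-theory of the finite members of K. -/
theorem pi2_theory_of_sigma2_class_eq_pi2_theory_fin {L : Language} [L.IsRelational]
    (Θ : L.Sentence) (hΘ : IsSigma2 Θ) (Φ : L.Sentence) (hΦ : IsPi2 Φ) :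
    (∀ (M : Type u) [L.Structure M] [Nonempty M], M ⊨ Θ → M ⊨ Φ) ↔
      (∀ (M : Type u) [L.Structure M] [Nonempty M] [Finite M], M ⊨ Θ → M ⊨ Φ) := by
  constructor
  · intro h M _ _ _ hM
    exact h M hM
  · intro h M _ _ hMΘ
    by_contra hMΦ
    obtain ⟨s₁, hs₁fin, hs₁⟩ := myIsSigma2_witness (M := M) hΘ default hMΘ
    obtain ⟨s₂, hs₂fin, hs₂⟩ := myIsPi2_counterwitness (M := M) hΦ default hMΦ
    obtain ⟨m₀⟩ := ‹Nonempty M›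
    set t : Set M := insert m₀ (s₁ ∪ s₂) with ht
    have htfin : t.Finite := ((hs₁fin.union hs₂fin).insert m₀)
    -- the substructure on the (finite) set t
    let S : L.Substructure M := Substructure.closure L t
    have hS : (S : Set M) = t := Substructure.closure_eq_of_isRelational L t
    have hmem : ∀ x ∈ t, x ∈ S := fun x hx => by rw [← SetLike.mem_coe, hS]; exact hx
    have hSfin : Finite S := Set.Finite.to_subtype (hS ▸ htfin)
    have hSne : Nonempty S := ⟨⟨m₀, hmem m₀ (Set.mem_insert _ _)⟩⟩
    have hsub : ∀ x ∈ t, x ∈ Set.range (S.subtype) :=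
      fun x hx => ⟨⟨x, hmem x hx⟩, rfl⟩
    have hzero : ∀ (g : Fin 0 → M), S.subtype ∘ (default : Fin 0 → S) = g :=
      fun g => funext fun x => x.elim0
    have hSΘ : S ⊨ Θ :=
      hs₁ S S.subtype default
        (fun x hx => hsub x (Set.mem_insert_of_mem _ (Set.mem_union_left _ hx)))
        (hzero default)
    have hSΦ : ¬ S ⊨ Φ :=
      hs₂ S S.subtype default
        (fun x hx => hsub x (Set.mem_insert_of_mem _ (Set.mem_union_right _ hx)))
        (hzero default)
    exact hSΦ (h S hSΘ)
end

section
/- The class BiG*_fin of all finite bipartite graphs having at least three vertices in each of the two parts is Σ1-interpretable with parameters (a tuple of four parameter variables) in the class 2Eq_fin of all finite nonempty models of two equivalences. -/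
open FirstOrder FirstOrder.Language

/-- `K1` (a class of `σ1`-structures) is Σ₁-interpretable with parameters (indexed by `γ`)
in `K2` (a class of `σ2`-structures): there are Σ₁ formulas `ΦU` (with one object variable and
parameter variables `γ`) and, for each relation symbol `R` of `σ1`, Σ₁ formulas `ΦR R` and
`ΦnR R`, such that every `𝔄 ∈ K1` is isomorphic to the structure carved out, via these
formulas and a suitable tuple of parameters, from some `𝔅 ∈ K2`. -/
def Sigma1InterpretableWithParams (σ1 σ2 : Language)
    (K1 : (A : Type) → σ1.Structure A → Prop)
    (K2 : (B : Type) → σ2.Structure B → Prop) (γ : Type) : Prop :=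
  ∃ (ΦU : σ2.Formula (Fin 1 ⊕ γ))
    (ΦR ΦnR : (n : ℕ) → σ1.Relations n → σ2.Formula (Fin n ⊕ γ)),
    IsSigma1 ΦU ∧
    (∀ (n : ℕ) (R : σ1.Relations n), IsSigma1 (ΦR n R)) ∧
    (∀ (n : ℕ) (R : σ1.Relations n), IsSigma1 (ΦnR n R)) ∧
    ∀ (A : Type) (SA : σ1.Structure A), K1 A SA →
      ∃ (B : Type) (SB : σ2.Structure B) (p : γ → B),
        K2 B SB ∧
        (letI := SB
         -- (1) the interpreted universe B' = {b | 𝔅 ⊨ ΦU(b, p̄)} is nonempty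
         (∃ b : B, ΦU.Realize (Sum.elim (fun _ => b) p)) ∧
         -- (2) on B', the formula ΦnR defines exactly the complement of ΦR
         (∀ (n : ℕ) (R : σ1.Relations n) (b : Fin n → B),
            (∀ i, ΦU.Realize (Sum.elim (fun _ => b i) p)) →
            ((ΦnR n R).Realize (Sum.elim b p) ↔ ¬ (ΦR n R).Realize (Sum.elim b p))) ∧
         -- (3) 𝔄 is isomorphic to the structure induced on B' by the formulas ΦR
         (∃ g : A → B,
            Function.Injective g ∧
            (∀ b : B, ΦU.Realize (Sum.elim (fun _ => b) p) ↔ b ∈ Set.range g) ∧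
            (∀ (n : ℕ) (R : σ1.Relations n) (a : Fin n → A),
              SA.RelMap R a ↔ (ΦR n R).Realize (Sum.elim (g ∘ a) p))))

/-- Relation symbols of the language of bipartite graphs: two unary symbols (left, right)
and a binary symbol (edge). -/
inductive GraphRel : ℕ → Type
  | left : GraphRel 1
  | right : GraphRel 1
  | edge : GraphRel 2

/-- The language {L¹, R¹, E²} of bipartite graphs (purely relational). -/
def σG : Language := ⟨fun _ => Empty, GraphRel⟩

/-- Relation symbols of the language of two equivalences: two binary symbols P and Q. -/
inductive EqRel2 : ℕ → Type
  | P : EqRel2 2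
  | Q : EqRel2 2

/-- The language {P², Q²} of two equivalences (purely relational). -/
def σE : Language := ⟨fun _ => Empty, EqRel2⟩

/-- The class BiG*_fin of finite bipartite graphs with at least three vertices in each part:
the universe splits into the left part {x | L(x)} and right part {x | R(x)}, edges go from
the left part to the right part, and each part has at least three elements. -/
def BiGstarFin (A : Type) (SA : σG.Structure A) : Prop :=
  Finite A ∧
  (∀ a : A, SA.RelMap GraphRel.left ![a] ↔ ¬ SA.RelMap GraphRel.right ![a]) ∧
  (∀ a b : A, SA.RelMap GraphRel.edge ![a, b] →
    SA.RelMap GraphRel.left ![a] ∧ SA.RelMap GraphRel.right ![b]) ∧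
  3 ≤ Nat.card {a : A // SA.RelMap GraphRel.left ![a]} ∧
  3 ≤ Nat.card {a : A // SA.RelMap GraphRel.right ![a]}

/-- The class 2Eq_fin of finite nonempty models of two equivalences. -/
def TwoEqFin (B : Type) (SB : σE.Structure B) : Prop :=
  Finite B ∧ Nonempty B ∧
  Equivalence (fun x y : B => SB.RelMap EqRel2.P ![x, y]) ∧
  Equivalence (fun x y : B => SB.RelMap EqRel2.Q ![x, y])

/-! ### Auxiliary construction -/

inductive Bm (A : Type) : Type
  | vert : A → Bm A
  | eE : A → A → Bm A
  | eU : A → A → Bm A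
  | eW : A → A → Bm A
  | eV : A → A → Bm A
  | eZ : A → A → Bm A
  | tL : A → Bm A
  | tR : A → Bm A
  | mk : Fin 3 → Bm A

namespace Bm
variable {A : Type}

def decode : Bm A → (A ⊕ (A × A × Fin 5)) ⊕ ((A × Fin 2) ⊕ Fin 3)
  | vert a => .inl (.inl a)
  | eE a b => .inl (.inr (a, b, 0))
  | eU a b => .inl (.inr (a, b, 1))
  | eW a b => .inl (.inr (a, b, 2))
  | eV a b => .inl (.inr (a, b, 3))
  | eZ a b => .inl (.inr (a, b, 4))
  | tL a => .inr (.inl (a, 0))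
  | tR a => .inr (.inl (a, 1))
  | mk i => .inr (.inr i)

lemma decode_inj : Function.Injective (decode (A := A)) := by
  intro x y h
  cases x <;> cases y <;> simp [decode] at h <;> simp_all

instance [Finite A] : Finite (Bm A) := Finite.of_injective _ decode_inj

variable (l r : A → Prop) (E : A → A → Prop)

open Classical in
noncomputable def pL : Bm A → Bm A
  | vert a => vert a
  | eE a b => if l a ∧ r b ∧ E a b then vert a else eE a b
  | eU a b => if l a ∧ r b ∧ ¬ E a b then vert a else eU a b
  | eW a b => eW a b
  | eV a b => if l a ∧ r b ∧ ¬ E a b then eW a b else eV a b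
  | eZ a b => if l a ∧ r b ∧ ¬ E a b then mk 2 else eZ a b
  | tL a => if l a then mk 0 else tL a
  | tR a => if r a then vert a else tR a
  | mk i => mk i

open Classical in
noncomputable def qL : Bm A → Bm A
  | vert a => vert a
  | eE a b => if l a ∧ r b ∧ E a b then vert b else eE a b
  | eU a b => eU a b
  | eW a b => if l a ∧ r b ∧ ¬ E a b then eU a b else eW a b
  | eV a b => if l a ∧ r b ∧ ¬ E a b then vert b else eV a b
  | eZ a b => if l a ∧ r b ∧ ¬ E a b then eU a b else eZ a b
  | tL a => if l a then vert a else tL a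
  | tR a => if r a then mk 1 else tR a
  | mk i => mk i

noncomputable def St : σE.Structure (Bm A) where
  funMap := fun f => f.elim
  RelMap := fun {_} R v =>
    match R with
    | .P => pL l r E (v 0) = pL l r E (v 1)
    | .Q => qL l r E (v 0) = qL l r E (v 1)

@[simp] lemma relMap_P (v : Fin 2 → Bm A) :
    (St l r E).RelMap .P v ↔ pL l r E (v 0) = pL l r E (v 1) := Iff.rfl
@[simp] lemma relMap_Q (v : Fin 2 → Bm A) :
    (St l r E).RelMap .Q v ↔ qL l r E (v 0) = qL l r E (v 1) := Iff.rfl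

@[simp] lemma pL_mk (i : Fin 3) : pL l r E (mk i) = mk i := rfl
@[simp] lemma qL_mk (i : Fin 3) : qL l r E (mk i) = mk i := rfl

lemma pL_eq_mk0 (t : Bm A) : pL l r E t = mk 0 ↔ (t = mk 0 ∨ ∃ a, l a ∧ t = tL a) := by
  cases t <;> simp [pL] <;> split_ifs <;> simp_all

lemma qL_eq_mk1 (t : Bm A) : qL l r E t = mk 1 ↔ (t = mk 1 ∨ ∃ a, r a ∧ t = tR a) := by
  cases t <;> simp [qL] <;> split_ifs <;> simp_all

lemma pL_eq_mk2 (t : Bm A) :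
    pL l r E t = mk 2 ↔ (t = mk 2 ∨ ∃ a b, (l a ∧ r b ∧ ¬ E a b) ∧ t = eZ a b) := by
  cases t <;> simp [pL] <;> split_ifs <;> simp_all

lemma pL_eq_vert (t : Bm A) (c : A) : pL l r E t = vert c ↔
    (t = vert c ∨ (∃ b, (l c ∧ r b ∧ E c b) ∧ t = eE c b) ∨
     (∃ b, (l c ∧ r b ∧ ¬ E c b) ∧ t = eU c b) ∨ (r c ∧ t = tR c)) := by
  cases t <;> simp [pL] <;> split_ifs <;> simp_all <;> aesop

lemma qL_eq_vert (t : Bm A) (c : A) : qL l r E t = vert c ↔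
    (t = vert c ∨ (∃ a, (l a ∧ r c ∧ E a c) ∧ t = eE a c) ∨
     (∃ a, (l a ∧ r c ∧ ¬ E a c) ∧ t = eV a c) ∨ (l c ∧ t = tL c)) := by
  cases t <;> simp [qL] <;> split_ifs <;> simp_all <;> aesop

lemma qL_eq_eU (t : Bm A) (a b : A) : qL l r E t = eU a b ↔
    (t = eU a b ∨ ((l a ∧ r b ∧ ¬ E a b) ∧ (t = eW a b ∨ t = eZ a b))) := by
  cases t <;> simp [qL] <;> split_ifs <;> simp_all <;> aesop

lemma pL_eq_eW (t : Bm A) (a b : A) : pL l r E t = eW a b ↔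
    (t = eW a b ∨ ((l a ∧ r b ∧ ¬ E a b) ∧ t = eV a b)) := by
  cases t <;> simp [pL] <;> split_ifs <;> simp_all <;> aesop

end Bm

namespace Bm
variable {A : Type} {l r : A → Prop} {E : A → A → Prop}

lemma qL_eq_mk0 (t : Bm A) : qL l r E t = mk 0 ↔ t = mk 0 := by
  cases t <;> simp [qL] <;> split_ifs <;> simp_all

lemma pL_eq_mk1 (t : Bm A) : pL l r E t = mk 1 ↔ t = mk 1 := by
  cases t <;> simp [pL] <;> split_ifs <;> simp_all

variable (hpart : ∀ a, l a ↔ ¬ r a)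
include hpart

lemma left_sem (x : Bm A) :
    (∃ t, qL l r E x = qL l r E t ∧ pL l r E t = mk 0 ∧ t ≠ x) ↔ ∃ a, l a ∧ x = vert a := by
  constructor
  · rintro ⟨t, hq, hp, hne⟩
    rcases (pL_eq_mk0 l r E t).1 hp with h0 | ⟨a, ha, h0⟩
    · subst h0; simp [qL] at hq
      exact absurd ((qL_eq_mk0 x).1 hq) (Ne.symm hne)
    · subst h0
      have : qL l r E x = vert a := by simpa [qL, ha] using hq
      rcases (qL_eq_vert l r E x a).1 this with h | ⟨a', ⟨_, hra, _⟩, _⟩ | ⟨a', ⟨_, hra, _⟩, _⟩ | ⟨_, h⟩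
      · exact ⟨a, ha, h⟩
      · exact absurd hra ((hpart a).1 ha)
      · exact absurd hra ((hpart a).1 ha)
      · exact absurd rfl (h ▸ hne)
  · rintro ⟨a, ha, rfl⟩
    exact ⟨tL a, by simp [qL, pL, ha]⟩

lemma right_sem (x : Bm A) :
    (∃ s, pL l r E x = pL l r E s ∧ qL l r E s = mk 1 ∧ s ≠ x) ↔ ∃ b, r b ∧ x = vert b := by
  constructor
  · rintro ⟨s, hp, hq, hne⟩
    rcases (qL_eq_mk1 l r E s).1 hq with h0 | ⟨b, hb, h0⟩
    · subst h0; simp [pL] at hp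
      exact absurd ((pL_eq_mk1 x).1 hp) (Ne.symm hne)
    · subst h0
      have : pL l r E x = vert b := by simpa [pL, hb] using hp
      rcases (pL_eq_vert l r E x b).1 this with h | ⟨b', ⟨hlb, _⟩, _⟩ | ⟨b', ⟨hlb, _⟩, _⟩ | ⟨_, h⟩
      · exact ⟨b, hb, h⟩
      · exact absurd hb ((hpart b).1 hlb)
      · exact absurd hb ((hpart b).1 hlb)
      · exact absurd rfl (h ▸ hne)
  · rintro ⟨b, hb, rfl⟩
    exact ⟨tR b, by simp [qL, pL, hb]⟩

omit hpart

lemma edge_sem (x y : A) :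
    (∃ e, pL l r E (vert x) = pL l r E e ∧ qL l r E e = qL l r E (vert y) ∧
      e ≠ vert x ∧ e ≠ vert y) ↔ (l x ∧ r y ∧ E x y) := by
  constructor
  · rintro ⟨e, hp, hq, hne1, hne2⟩
    simp only [pL, qL] at hp hq
    rcases (pL_eq_vert l r E e x).1 hp.symm with h | ⟨b, hb, h⟩ | ⟨b, hb, h⟩ | ⟨hrx, h⟩
    · exact absurd h hne1
    · subst h
      have : vert (A := A) b = vert y := by simpa [qL, hb] using hq
      simp at this; subst this; exact hb
    · subst h; simp [qL] at hq
    · subst h; simp [qL, hrx] at hq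
  · rintro ⟨hx, hy, hE⟩
    exact ⟨eE x y, by simp [pL, qL, hx, hy, hE]⟩

include hpart in
lemma chain_sem (x y : A) (hx : l x) (hy : r y) :
    (∃ u z w v : Bm A, pL l r E (vert x) = pL l r E u ∧ qL l r E u = qL l r E z ∧
      pL l r E z = mk 2 ∧ qL l r E u = qL l r E w ∧ w ≠ u ∧ pL l r E w = pL l r E v ∧
      qL l r E v = qL l r E (vert y)) ↔ ¬ E x y := by
  constructor
  · rintro ⟨u, z, w, v, hu, huz, hz, huw, hwu, hwv, hvy⟩
    simp only [pL, qL] at hu hvy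
    rcases (pL_eq_mk2 l r E z).1 hz with h0 | ⟨a', b', hab', h0⟩
    · subst h0; simp [qL] at huz
      rcases (pL_eq_vert l r E u x).1 hu.symm with h | ⟨b, hb, h⟩ | ⟨b, hb, h⟩ | ⟨hrx, h⟩
      · subst h; simp [qL] at huz
      · subst h; simp [qL, hb] at huz
      · subst h; simp [qL] at huz
      · exact absurd hrx ((hpart x).1 hx)
    · subst h0
      have huz' : qL l r E u = eU a' b' := by simpa [qL, hab'] using huz
      rcases (pL_eq_vert l r E u x).1 hu.symm with h | ⟨b, hb, h⟩ | ⟨b, hb, h⟩ | ⟨hrx, h⟩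
      · subst h; simp [qL] at huz'
      · subst h; simp [qL, hb] at huz'
      · subst h
        have : eU (A:=A) x b = eU a' b' := by simpa [qL] using huz'
        simp at this
        obtain ⟨rfl, rfl⟩ := this
        have hw : qL l r E w = eU x b := by
          rw [← huw]; simp [qL]
        rcases (qL_eq_eU l r E w x b).1 hw with h | ⟨_, h | h⟩
        · exact absurd h hwu
        · subst h
          have hv : pL l r E v = eW x b := by
            rw [← hwv]; simp [pL]
          rcases (pL_eq_eW l r E v x b).1 hv with h | ⟨hnact, h⟩
          · subst h; simp [qL, hb] at hvy
          · subst h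
            have : vert (A:=A) b = vert y := by simpa [qL, hnact] using hvy
            simp at this; subst this; exact hnact.2.2
        · subst h
          have hv : pL l r E v = mk 2 := by rw [← hwv]; simp [pL, hb]
          rcases (pL_eq_mk2 l r E v).1 hv with h | ⟨a'', b'', hn, h⟩
          · subst h; simp [qL] at hvy
          · subst h; simp [qL, hn] at hvy
      · exact absurd hrx ((hpart x).1 hx)
  · intro hne
    have hn : l x ∧ r y ∧ ¬ E x y := ⟨hx, hy, hne⟩
    exact ⟨eU x y, eZ x y, eW x y, eV x y, by simp [pL, qL, hn]⟩

end Bm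


/-! ### The interpreting formulas -/

namespace BiGInterp
open Bm

def vx {n k : ℕ} (i : Fin n) : σE.Term ((Fin n ⊕ Fin 4) ⊕ Fin k) := Term.var (.inl (.inl i))
def vp {n k : ℕ} (j : Fin 4) : σE.Term ((Fin n ⊕ Fin 4) ⊕ Fin k) := Term.var (.inl (.inr j))
def vb {n k : ℕ} (i : Fin k) : σE.Term ((Fin n ⊕ Fin 4) ⊕ Fin k) := Term.var (.inr i)

def prel {n k : ℕ} (t s : σE.Term ((Fin n ⊕ Fin 4) ⊕ Fin k)) :
    σE.BoundedFormula (Fin n ⊕ Fin 4) k :=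
  Relations.boundedFormula₂ EqRel2.P t s
def qrel {n k : ℕ} (t s : σE.Term ((Fin n ⊕ Fin 4) ⊕ Fin k)) :
    σE.BoundedFormula (Fin n ⊕ Fin 4) k :=
  Relations.boundedFormula₂ EqRel2.Q t s

lemma prel_isQF {n k : ℕ} (t s : σE.Term ((Fin n ⊕ Fin 4) ⊕ Fin k)) : (prel t s).IsQF :=
  (BoundedFormula.IsAtomic.rel _ _).isQF
lemma qrel_isQF {n k : ℕ} (t s : σE.Term ((Fin n ⊕ Fin 4) ⊕ Fin k)) : (qrel t s).IsQF :=
  (BoundedFormula.IsAtomic.rel _ _).isQF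
lemma eq_isQF {n k : ℕ} (t s : σE.Term ((Fin n ⊕ Fin 4) ⊕ Fin k)) : (Term.bdEqual t s).IsQF :=
  (BoundedFormula.IsAtomic.equal _ _).isQF

/-- x is a left vertex (one free var). -/
def leftF {n : ℕ} (i : Fin n) : σE.Formula (Fin n ⊕ Fin 4) :=
  BoundedFormula.ex <|
    (qrel (vx i) (vb 0) ⊓ prel (vb 0) (vp 0)) ⊓ ∼(Term.bdEqual (vb 0) (vx i))

/-- x is a right vertex. -/
def rightF {n : ℕ} (i : Fin n) : σE.Formula (Fin n ⊕ Fin 4) :=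
  BoundedFormula.ex <|
    (prel (vx i) (vb 0) ⊓ qrel (vb 0) (vp 1)) ⊓ ∼(Term.bdEqual (vb 0) (vx i))

def ΦU : σE.Formula (Fin 1 ⊕ Fin 4) :=
  BoundedFormula.ex <|
    ((qrel (vx 0) (vb 0) ⊓ prel (vb 0) (vp 0)) ⊓ ∼(Term.bdEqual (vb 0) (vx 0))) ⊔
    ((prel (vx 0) (vb 0) ⊓ qrel (vb 0) (vp 1)) ⊓ ∼(Term.bdEqual (vb 0) (vx 0)))

def ΦE : σE.Formula (Fin 2 ⊕ Fin 4) :=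
  BoundedFormula.ex <|
    (prel (vx 0) (vb 0) ⊓ qrel (vb 0) (vx 1)) ⊓
    (∼(Term.bdEqual (vb 0) (vx 0)) ⊓ ∼(Term.bdEqual (vb 0) (vx 1)))

/-- Bound vars (k = 5): t = vb 0, u = vb 1, z = vb 2, w = vb 3, v = vb 4. -/
def ΦnE : σE.Formula (Fin 2 ⊕ Fin 4) :=
  (((((
    (((qrel (vx 1) (vb 0) ⊓ prel (vb 0) (vp 0)) ⊓ ∼(Term.bdEqual (vb 0) (vx 1))) ⊔
     (((prel (vx 0) (vb 0) ⊓ qrel (vb 0) (vp 1)) ⊓ ∼(Term.bdEqual (vb 0) (vx 0))) ⊔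
      ((prel (vx 0) (vb 1) ⊓ qrel (vb 1) (vb 2)) ⊓
       ((prel (vb 2) (vp 2) ⊓ qrel (vb 1) (vb 3)) ⊓
        ((∼(Term.bdEqual (vb 3) (vb 1)) ⊓ prel (vb 3) (vb 4)) ⊓
         qrel (vb 4) (vx 1)))))) : σE.BoundedFormula (Fin 2 ⊕ Fin 4) 5).ex).ex).ex).ex).ex

lemma leftF_isSigma1 {n : ℕ} (i : Fin n) : IsSigma1 (leftF i) :=
  .ex (.of_isQF (((qrel_isQF _ _).inf (prel_isQF _ _)).inf (eq_isQF _ _).not))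

lemma rightF_isSigma1 {n : ℕ} (i : Fin n) : IsSigma1 (rightF i) :=
  .ex (.of_isQF (((prel_isQF _ _).inf (qrel_isQF _ _)).inf (eq_isQF _ _).not))

lemma ΦU_isSigma1 : IsSigma1 ΦU :=
  .ex (.of_isQF ((((qrel_isQF _ _).inf (prel_isQF _ _)).inf (eq_isQF _ _).not).sup
    (((prel_isQF _ _).inf (qrel_isQF _ _)).inf (eq_isQF _ _).not)))

lemma ΦE_isSigma1 : IsSigma1 ΦE :=
  .ex (.of_isQF (((prel_isQF _ _).inf (qrel_isQF _ _)).inf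
    (((eq_isQF _ _).not).inf ((eq_isQF _ _).not))))

lemma ΦnE_isSigma1 : IsSigma1 ΦnE := by
  refine .ex (.ex (.ex (.ex (.ex (.of_isQF ?_)))))
  exact ((((qrel_isQF _ _).inf (prel_isQF _ _)).inf (eq_isQF _ _).not).sup
    (((((prel_isQF _ _).inf (qrel_isQF _ _)).inf (eq_isQF _ _).not)).sup
     (((prel_isQF _ _).inf (qrel_isQF _ _)).inf
      (((prel_isQF _ _).inf (qrel_isQF _ _)).inf
       ((((eq_isQF _ _).not).inf (prel_isQF _ _)).inf (qrel_isQF _ _))))))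

/-! ### Realize lemmas -/

variable {A : Type} (l r : A → Prop) (E : A → A → Prop)

noncomputable def params : Fin 4 → Bm A := ![.mk 0, .mk 1, .mk 2, .mk 0]

lemma realize_P2 {α : Type} {k : ℕ} (t s : σE.Term (α ⊕ Fin k)) (v : α → Bm A)
    (xs : Fin k → Bm A) :
    letI := St l r E; ((Relations.boundedFormula₂ (L := σE) EqRel2.P t s).Realize v xs ↔
      pL l r E (t.realize (Sum.elim v xs)) = pL l r E (s.realize (Sum.elim v xs))) := Iff.rfl

lemma realize_Q2 {α : Type} {k : ℕ} (t s : σE.Term (α ⊕ Fin k)) (v : α → Bm A)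
    (xs : Fin k → Bm A) :
    letI := St l r E; ((Relations.boundedFormula₂ (L := σE) EqRel2.Q t s).Realize v xs ↔
      qL l r E (t.realize (Sum.elim v xs)) = qL l r E (s.realize (Sum.elim v xs))) := Iff.rfl

open Bm in
lemma realize_leftF {n : ℕ} (i : Fin n) (bb : Fin n → Bm A) :
    (letI := St l r E; (leftF i).Realize (Sum.elim bb (params (A := A)))) ↔
      ∃ t, qL l r E (bb i) = qL l r E t ∧ pL l r E t = mk 0 ∧ t ≠ bb i := by
  letI := St l r E
  simp [leftF, Formula.Realize, realize_P2, realize_Q2, prel, qrel, vx, vp, vb, Fin.snoc, params, pL, and_assoc]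

open Bm in
lemma realize_rightF {n : ℕ} (i : Fin n) (bb : Fin n → Bm A) :
    (letI := St l r E; (rightF i).Realize (Sum.elim bb (params (A := A)))) ↔
      ∃ s, pL l r E (bb i) = pL l r E s ∧ qL l r E s = mk 1 ∧ s ≠ bb i := by
  letI := St l r E
  simp [rightF, Formula.Realize, realize_P2, realize_Q2, prel, qrel, vx, vp, vb, Fin.snoc, params, qL, and_assoc]

open Bm in
lemma realize_ΦU (bb : Fin 1 → Bm A) :
    (letI := St l r E; ΦU.Realize (Sum.elim bb (params (A := A)))) ↔
      ((∃ t, qL l r E (bb 0) = qL l r E t ∧ pL l r E t = mk 0 ∧ t ≠ bb 0) ∨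
       (∃ s, pL l r E (bb 0) = pL l r E s ∧ qL l r E s = mk 1 ∧ s ≠ bb 0)) := by
  letI := St l r E
  simp [ΦU, Formula.Realize, realize_P2, realize_Q2, prel, qrel, vx, vp, vb, Fin.snoc, params, pL, qL, and_assoc,
    exists_or]

open Bm in
lemma realize_ΦE (bb : Fin 2 → Bm A) :
    (letI := St l r E; ΦE.Realize (Sum.elim bb (params (A := A)))) ↔
      ∃ e, pL l r E (bb 0) = pL l r E e ∧ qL l r E e = qL l r E (bb 1) ∧
        e ≠ bb 0 ∧ e ≠ bb 1 := by
  letI := St l r E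
  simp [ΦE, Formula.Realize, realize_P2, realize_Q2, prel, qrel, vx, vp, vb, Fin.snoc, params, and_assoc]

open Bm in
lemma realize_ΦnE (bb : Fin 2 → Bm A) :
    (letI := St l r E; ΦnE.Realize (Sum.elim bb (params (A := A)))) ↔
      ((∃ t, qL l r E (bb 1) = qL l r E t ∧ pL l r E t = mk 0 ∧ t ≠ bb 1) ∨
       (∃ t, pL l r E (bb 0) = pL l r E t ∧ qL l r E t = mk 1 ∧ t ≠ bb 0) ∨
       (∃ u z w v : Bm A, pL l r E (bb 0) = pL l r E u ∧ qL l r E u = qL l r E z ∧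
         pL l r E z = mk 2 ∧ qL l r E u = qL l r E w ∧ w ≠ u ∧ pL l r E w = pL l r E v ∧
         qL l r E v = qL l r E (bb 1))) := by
  letI := St l r E
  simp (config := { decide := true }) only [ΦnE, Formula.Realize, BoundedFormula.realize_ex,
      BoundedFormula.realize_sup,
      BoundedFormula.realize_inf, BoundedFormula.realize_not, BoundedFormula.realize_bdEqual,
      BoundedFormula.realize_rel₂, prel, qrel, vx, vp, vb, relMap_P, relMap_Q, Term.realize_var,
      Sum.elim_inl, Sum.elim_inr, Fin.snoc, Fin.castLT, params, Matrix.cons_val_zero,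
      Matrix.cons_val_one, Matrix.head_cons, pL_mk, qL_mk, and_assoc, cast_eq, dite_true,
      dite_false, Matrix.cons_val_two, Matrix.tail_cons]
  constructor
  · rintro ⟨t, u, z, w, v, h | h | h⟩
    · exact Or.inl ⟨t, h⟩
    · exact Or.inr (Or.inl ⟨t, h⟩)
    · exact Or.inr (Or.inr ⟨u, z, w, v, h⟩)
  · rintro (⟨t, h⟩ | ⟨t, h⟩ | ⟨u, z, w, v, h⟩)
    · exact ⟨t, mk 0, mk 0, mk 0, mk 0, Or.inl h⟩
    · exact ⟨t, mk 0, mk 0, mk 0, mk 0, Or.inr (Or.inl h)⟩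
    · exact ⟨mk 0, u, z, w, v, Or.inr (Or.inr h)⟩

end BiGInterp


namespace BiGInterp
open Bm

def ΦRmap : (n : ℕ) → GraphRel n → σE.Formula (Fin n ⊕ Fin 4)
  | _, .left => leftF 0
  | _, .right => rightF 0
  | _, .edge => ΦE

def ΦnRmap : (n : ℕ) → GraphRel n → σE.Formula (Fin n ⊕ Fin 4)
  | _, .left => rightF 0
  | _, .right => leftF 0
  | _, .edge => ΦnE

end BiGInterp


/-- BiG*_fin is Σ₁-interpretable with parameters (a tuple of four parameter variables)
in 2Eq_fin. -/
theorem biGstarFin_sigma1_interpretable_with_params_in_twoEqFin :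
    Sigma1InterpretableWithParams σG σE BiGstarFin TwoEqFin (Fin 4) := by
  classical
  open BiGInterp Bm in
  refine ⟨ΦU, ΦRmap, ΦnRmap, ΦU_isSigma1, ?_, ?_, ?_⟩
  · intro n R
    cases R
    · exact leftF_isSigma1 0
    · exact rightF_isSigma1 0
    · exact ΦE_isSigma1
  · intro n R
    cases R
    · exact rightF_isSigma1 0
    · exact leftF_isSigma1 0
    · exact ΦnE_isSigma1
  intro A SA hK
  obtain ⟨hfin, hpart, hedge, hcL, hcR⟩ := hK
  set l : A → Prop := fun a => SA.RelMap GraphRel.left ![a] with hl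
  set r : A → Prop := fun a => SA.RelMap GraphRel.right ![a] with hr
  set E : A → A → Prop := fun a b => SA.RelMap GraphRel.edge ![a, b] with hEdef
  have hpart' : ∀ a, l a ↔ ¬ r a := hpart
  refine ⟨Bm A, St l r E, params, ?_, ?_, ?_, ?_⟩
  · -- TwoEqFin
    refine ⟨inferInstance, ⟨mk 0⟩, ?_, ?_⟩
    · constructor
      · intro x; simp
      · intro x y h; simp at h ⊢; exact h.symm
      · intro x y z h1 h2; simp at h1 h2 ⊢; exact h1.trans h2
    · constructor
      · intro x; simp
      · intro x y h; simp at h ⊢; exact h.symm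
      · intro x y z h1 h2; simp at h1 h2 ⊢; exact h1.trans h2
  · -- nonempty
    letI := St l r E
    have h3 : 0 < Nat.card {a : A // l a} := lt_of_lt_of_le (by norm_num) hcL
    obtain ⟨⟨a0, ha0⟩⟩ := (Nat.card_pos_iff.mp h3).1
    refine ⟨vert a0, ?_⟩
    rw [realize_ΦU l r E (fun _ => vert a0)]
    exact Or.inl ((left_sem hpart' _).2 ⟨a0, ha0, rfl⟩)
  · -- complement condition
    letI := St l r E
    intro n R b hb
    have hexa : ∀ (c : A) (pp : A → Prop), (∃ a', pp a' ∧ (vert c : Bm A) = vert a') ↔ pp c := by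
      intro c pp
      constructor
      · rintro ⟨a', h, he⟩; cases he; exact h
      · intro h; exact ⟨c, h, rfl⟩
    have hvert : ∀ i, ∃ a : A, b i = vert a := by
      intro i
      have := hb i
      rw [realize_ΦU l r E (fun _ => b i)] at this
      rcases this with h | h
      · obtain ⟨a, _, h⟩ := (left_sem hpart' _).1 h
        exact ⟨a, h⟩
      · obtain ⟨a, _, h⟩ := (right_sem hpart' _).1 h
        exact ⟨a, h⟩
    cases R
    · -- left
      obtain ⟨α, hα⟩ := hvert 0
      show (rightF 0).Realize _ ↔ ¬ (leftF 0).Realize _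
      rw [realize_rightF l r E 0 b, realize_leftF l r E 0 b, hα,
        right_sem hpart', left_sem hpart', hexa, hexa]
      have h1 := hpart' α
      tauto
    · -- right
      obtain ⟨α, hα⟩ := hvert 0
      show (leftF 0).Realize _ ↔ ¬ (rightF 0).Realize _
      rw [realize_leftF l r E 0 b, realize_rightF l r E 0 b, hα,
        left_sem hpart', right_sem hpart', hexa, hexa]
      have h1 := hpart' α
      tauto
    · -- edge
      obtain ⟨α, hα⟩ := hvert 0
      obtain ⟨β, hβ⟩ := hvert 1
      show ΦnE.Realize _ ↔ ¬ ΦE.Realize _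
      rw [realize_ΦnE l r E b, realize_ΦE l r E b, hα, hβ,
        left_sem hpart', right_sem hpart', edge_sem, hexa, hexa]
      have h1 := hpart' α
      have h2 := hpart' β
      by_cases hlα : l α <;> by_cases hrβ : r β
      · rw [chain_sem hpart' α β hlα hrβ]
        tauto
      · tauto
      · tauto
      · tauto
  · -- isomorphism
    letI := St l r E
    refine ⟨vert, fun a b h => by simpa using h, ?_, ?_⟩
    · intro x
      rw [realize_ΦU l r E (fun _ => x)]
      constructor
      · rintro (h | h)
        · obtain ⟨a, _, h⟩ := (left_sem hpart' _).1 h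
          exact ⟨a, h.symm⟩
        · obtain ⟨a, _, h⟩ := (right_sem hpart' _).1 h
          exact ⟨a, h.symm⟩
      · rintro ⟨a, rfl⟩
        by_cases ha : l a
        · exact Or.inl ((left_sem hpart' _).2 ⟨a, ha, rfl⟩)
        · have hra : r a := by have := hpart' a; tauto
          exact Or.inr ((right_sem hpart' _).2 ⟨a, hra, rfl⟩)
    · intro n R a
      cases R
      · -- left
        have ha : (![a 0] : Fin 1 → A) = a := by
          funext i; fin_cases i; rfl
        show SA.RelMap GraphRel.left a ↔ (leftF 0).Realize _
        rw [realize_leftF l r E 0 (vert ∘ a), left_sem hpart']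
        simp only [Function.comp_apply, vert.injEq]
        rw [← ha]
        constructor
        · intro h; exact ⟨a 0, h, rfl⟩
        · rintro ⟨a', ha', rfl⟩; exact ha'
      · -- right
        have ha : (![a 0] : Fin 1 → A) = a := by
          funext i; fin_cases i; rfl
        show SA.RelMap GraphRel.right a ↔ (rightF 0).Realize _
        rw [realize_rightF l r E 0 (vert ∘ a), right_sem hpart']
        simp only [Function.comp_apply, vert.injEq]
        rw [← ha]
        constructor
        · intro h; exact ⟨a 0, h, rfl⟩
        · rintro ⟨a', ha', rfl⟩; exact ha'
      · -- edge
        have ha : (![a 0, a 1] : Fin 2 → A) = a := by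
          funext i; fin_cases i <;> rfl
        show SA.RelMap GraphRel.edge a ↔ ΦE.Realize _
        rw [realize_ΦE l r E (vert ∘ a)]
        simp only [Function.comp_apply]
        rw [edge_sem, ← ha]
        constructor
        · intro h
          exact ⟨(hedge _ _ h).1, (hedge _ _ h).2, h⟩
        · rintro ⟨_, _, h⟩; exact h
end

section
/- For every finite bipartite graph G with vertex set V, left part L and right part R each of size at least three, and edge relation E ⊆ L × R, there exist a finite set B, two equivalence relations P and Q on B, elements c_L, c_R, c_P, c_N ∈ B, and an injective map ι : V → B such that: (i) the image of ι equals the set of all b ∈ B satisfying (¬Q(b, c_L) ∧ P(b, c_L)) ∨ (¬Q(b, c_R) ∧ P(b, c_R)); (ii) for every v ∈ V: v ∈ L iff P(ι v, c_L), and v ∈ R iff P(ι v, c_R), and exactly one of these holds; (iii) for all u ∈ L and v ∈ R, exactly one of the following two conditions holds, and the first holds iff E(u, v): (a) there exist u_L, u_R, u_E ∈ B with Q(ι u, u_L), Q(ι v, u_R), u_L, u_R, u_E pairwise P-equivalent, and Q(u_E, c_P); (b) there exist u_L, u_R, u_E ∈ B with Q(ι u, u_L), Q(ι v, u_R), u_L,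 u_R, u_E pairwise P-equivalent, and Q(u_E, c_N). -/
namespace BipAux

/-- Base type: vertices, four parameters, and three copies of `V × V`
(the "left copy", "right copy" and "marker" of each potential cell). -/
abbrev B (V : Type) : Type := (V ⊕ Fin 4) ⊕ ((V × V) ⊕ ((V × V) ⊕ (V × V)))

def pl {V : Type} (el : V → Bool) (g : V × V → Bool) : B V → B V
  | .inl (.inl v) => if el v then .inl (.inr 0) else .inl (.inr 1)
  | .inl (.inr i) => .inl (.inr i)
  | .inr (.inl p) => .inr (.inl p)
  | .inr (.inr (.inl p)) => if g p then .inr (.inl p) else .inr (.inr (.inl p))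
  | .inr (.inr (.inr p)) => if g p then .inr (.inl p) else .inr (.inr (.inr p))

def ql {V : Type} (g eb : V × V → Bool) : B V → B V
  | .inl x => .inl x
  | .inr (.inl p) => if g p then .inl (.inl p.1) else .inr (.inl p)
  | .inr (.inr (.inl p)) => if g p then .inl (.inl p.2) else .inr (.inr (.inl p))
  | .inr (.inr (.inr p)) =>
      if g p then (if eb p then .inl (.inr 2) else .inl (.inr 3))
      else .inr (.inr (.inr p))

variable {V : Type} {L R : Set V} {g eb : V × V → Bool} {el : V → Bool}

lemma charL (hgood : ∀ p : V × V, g p = true ↔ p.1 ∈ L ∧ p.2 ∈ R)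
    (hLR : ∀ x ∈ L, x ∉ R) {u : V} (hu : u ∈ L) {b : B V}
    (h : ql g eb b = Sum.inl (Sum.inl u)) :
    b = Sum.inl (Sum.inl u) ∨
      ∃ p : V × V, g p = true ∧ p.1 = u ∧ b = Sum.inr (Sum.inl p) := by
  rcases b with (w | i) | p | p | p
  · left; simp only [ql] at h; rw [h]
  · simp [ql] at h
  · right
    simp only [ql] at h
    split at h
    · exact ⟨p, by assumption, by simpa using h, rfl⟩
    · simp at h
  · exfalso
    simp only [ql] at h
    split at h
    · have h2 : p.2 = u := by simpa using h
      exact hLR u hu (h2 ▸ ((hgood p).mp (by assumption)).2)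
    · simp at h
  · exfalso
    simp only [ql] at h
    split at h
    · split at h <;> simp at h
    · simp at h

lemma charR (hgood : ∀ p : V × V, g p = true ↔ p.1 ∈ L ∧ p.2 ∈ R)
    (hLR : ∀ x ∈ L, x ∉ R) {v : V} (hv : v ∈ R) {b : B V}
    (h : ql g eb b = Sum.inl (Sum.inl v)) :
    b = Sum.inl (Sum.inl v) ∨
      ∃ p : V × V, g p = true ∧ p.2 = v ∧ b = Sum.inr (Sum.inr (Sum.inl p)) := by
  rcases b with (w | i) | p | p | p
  · left; simp only [ql] at h; rw [h]
  · simp [ql] at h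
  · exfalso
    simp only [ql] at h
    split at h
    · have h1 : p.1 = v := by simpa using h
      exact hLR p.1 ((hgood p).mp (by assumption)).1 (h1 ▸ hv)
    · simp at h
  · right
    simp only [ql] at h
    split at h
    · exact ⟨p, by assumption, by simpa using h, rfl⟩
    · simp at h
  · exfalso
    simp only [ql] at h
    split at h
    · split at h <;> simp at h
    · simp at h

/-- Any witness triple for a pair `(u,v)` with `u ∈ L`, `v ∈ R` has its third
element inside the cell of `(u,v)`. -/
lemma key (hgood : ∀ p : V × V, g p = true ↔ p.1 ∈ L ∧ p.2 ∈ R)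
    (helb : ∀ w, el w = true ↔ w ∈ L)
    (hLR : ∀ x ∈ L, x ∉ R) {u v : V} (hu : u ∈ L) (hv : v ∈ R)
    {uL uR uE : B V}
    (qL : ql g eb uL = Sum.inl (Sum.inl u)) (qR : ql g eb uR = Sum.inl (Sum.inl v))
    (pLR : pl el g uL = pl el g uR) (pLE : pl el g uL = pl el g uE) :
    (uE = Sum.inr (Sum.inl (u, v)) ∨ uE = Sum.inr (Sum.inr (Sum.inl (u, v))) ∨
      uE = Sum.inr (Sum.inr (Sum.inr (u, v)))) := by
  have helu : el u = true := (helb u).mpr hu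
  have helv : el v = false := by
    rw [Bool.eq_false_iff]; intro h; exact hLR v ((helb v).mp h) hv
  have huv : u ≠ v := fun h => hLR u hu (h ▸ hv)
  rcases charL hgood hLR hu qL with rfl | ⟨p, hpg, hp1, rfl⟩
  · -- uL = ι u : impossible, comparing pl with uR
    exfalso
    rcases charR hgood hLR hv qR with rfl | ⟨q, hqg, hq2, rfl⟩
    · simp [pl, helu, helv] at pLR
    · simp [pl, helu, hqg] at pLR
  · rcases charR hgood hLR hv qR with rfl | ⟨q, hqg, hq2, rfl⟩
    · simp [pl, helv] at pLR
    · -- p = q = (u, v)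
      rw [pl, pl, if_pos hqg] at pLR
      have hpq : p = q := by simpa using pLR
      subst hpq
      have hp : p = (u, v) := by
        rw [← hp1, ← hq2]
      subst hp
      -- now analyze uE
      rw [pl] at pLE
      rcases uE with (w | i) | r | r | r
      · exfalso; rw [pl] at pLE; split at pLE <;> simp at pLE
      · exfalso; simp [pl] at pLE
      · left
        rw [pl] at pLE
        simpa using pLE.symm
      · right; left
        rw [pl] at pLE
        split at pLE
        · simpa using pLE.symm
        · simp at pLE
      · right; right
        rw [pl] at pLE
        split at pLE
        · simpa using pLE.symm
        · simp at pLE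

end BipAux

open BipAux

/-- Semantic content of the Σ₁-interpretation with parameters of finite bipartite graphs in
finite models of two equivalences: for every finite bipartite graph (vertex set `V`, left
part `L`, right part `R`, each of size at least three, edge relation `E ⊆ L × R`), there are
a finite set `B` with two equivalence relations `P`, `Q`, parameters `cL, cR, cP, cN ∈ B`,
and an injective `ι : V → B` such that (i) the image of `ι` is defined by the formula
`(¬Q(b,cL) ∧ P(b,cL)) ∨ (¬Q(b,cR) ∧ P(b,cR))`; (ii) membership in `L` (resp. `R`) is defined
by `P(ι v, cL)` (resp. `P(ι v, cR)`), and exactly one of the two holds; (iii) edges and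
non-edges between the parts are defined by the indicated existential conditions. -/
theorem bipartite_into_two_equivalences_with_params
    (V : Type) [Finite V] (L R : Set V) (E : V → V → Prop)
    (hpart : ∀ v : V, v ∈ L ↔ v ∉ R)
    (hL : 3 ≤ Nat.card L) (hR : 3 ≤ Nat.card R)
    (hE : ∀ u v : V, E u v → u ∈ L ∧ v ∈ R) :
    ∃ (B : Type) (_ : Finite B) (P Q : B → B → Prop)
      (_ : Equivalence P) (_ : Equivalence Q)
      (cL cR cP cN : B) (ι : V → B),
      Function.Injective ι ∧
      -- (i) the image of ι is exactly the set defined by Φ_U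
      (∀ b : B, ((¬ Q b cL ∧ P b cL) ∨ (¬ Q b cR ∧ P b cR)) ↔ b ∈ Set.range ι) ∧
      -- (ii) the parts are defined by P(·, cL) and P(·, cR), and exactly one of these holds
      (∀ v : V, (v ∈ L ↔ P (ι v) cL) ∧ (v ∈ R ↔ P (ι v) cR) ∧
        Xor' (P (ι v) cL) (P (ι v) cR)) ∧
      -- (iii) exactly one of (a), (b) holds, and (a) holds iff E(u,v)
      (∀ u ∈ L, ∀ v ∈ R,
        Xor'
          (∃ uL uR uE : B, Q (ι u) uL ∧ Q (ι v) uR ∧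
            (P uL uR ∧ P uL uE ∧ P uR uE) ∧ Q uE cP)
          (∃ uL uR uE : B, Q (ι u) uL ∧ Q (ι v) uR ∧
            (P uL uR ∧ P uL uE ∧ P uR uE) ∧ Q uE cN) ∧
        (E u v ↔
          (∃ uL uR uE : B, Q (ι u) uL ∧ Q (ι v) uR ∧
            (P uL uR ∧ P uL uE ∧ P uR uE) ∧ Q uE cP))) := by
  classical
  set el : V → Bool := fun v => decide (v ∈ L) with hel
  set g : V × V → Bool := fun p => decide (p.1 ∈ L ∧ p.2 ∈ R) with hg
  set eb : V × V → Bool := fun p => decide (E p.1 p.2) with heb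
  have helb : ∀ w, el w = true ↔ w ∈ L := fun w => by rw [hel]; exact decide_eq_true_iff
  have hgood : ∀ p : V × V, g p = true ↔ p.1 ∈ L ∧ p.2 ∈ R := fun p => by
    rw [hg]; exact decide_eq_true_iff
  have hebp : ∀ p : V × V, eb p = true ↔ E p.1 p.2 := fun p => by
    rw [heb]; exact decide_eq_true_iff
  have hLR : ∀ x ∈ L, x ∉ R := fun x hx => (hpart x).mp hx
  have hor : ∀ v : V, v ∈ L ∨ v ∈ R := by
    intro v
    by_cases h : v ∈ L
    · exact Or.inl h
    · exact Or.inr (by_contra fun h2 => h ((hpart v).mpr h2))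
  have helf : ∀ w ∈ R, el w = false := by
    intro w hw
    rw [Bool.eq_false_iff]
    exact fun h => hLR w ((helb w).mp h) hw
  clear_value el g eb
  clear hel hg heb hpart hE hL hR
  refine ⟨B V, inferInstance,
    fun a b => pl el g a = pl el g b, fun a b => ql g eb a = ql g eb b,
    ⟨fun _ => rfl, Eq.symm, Eq.trans⟩, ⟨fun _ => rfl, Eq.symm, Eq.trans⟩,
    Sum.inl (Sum.inr 0), Sum.inl (Sum.inr 1), Sum.inl (Sum.inr 2), Sum.inl (Sum.inr 3),
    fun v => Sum.inl (Sum.inl v), ?_, ?_, ?_, ?_⟩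
  · intro a b h
    simpa using h
  · -- (i)
    intro b
    constructor
    · rintro (⟨hq, hp⟩ | ⟨hq, hp⟩) <;>
      · rcases b with (w | i) | p | p | p
        · exact ⟨w, rfl⟩
        · exfalso
          simp only [pl, ql] at hp hq
          rw [hp] at hq
          exact hq rfl
        · exfalso; simp [pl] at hp
        · exfalso; simp only [pl] at hp; split at hp <;> simp at hp
        · exfalso; simp only [pl] at hp; split at hp <;> simp at hp
    · rintro ⟨v, rfl⟩
      rcases hor v with hv | hv
      · left
        refine ⟨by simp [ql], ?_⟩
        simp [pl, (helb v).mpr hv]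
      · right
        refine ⟨by simp [ql], ?_⟩
        simp [pl, helf v hv]
  · -- (ii)
    intro v
    rcases hor v with hv | hv
    · have h1 : el v = true := (helb v).mpr hv
      have h2 : pl el g (Sum.inl (Sum.inl v)) = pl el g (Sum.inl (Sum.inr 0)) := by
        simp [pl, h1]
      have h3 : ¬ pl el g (Sum.inl (Sum.inl v)) = pl el g (Sum.inl (Sum.inr 1)) := by
        simp [pl, h1]
      exact ⟨⟨fun _ => h2, fun _ => hv⟩,
        ⟨fun h => absurd h (hLR v hv), fun h => absurd h h3⟩,
        Or.inl ⟨h2, h3⟩⟩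
    · have hv' : v ∉ L := fun h => hLR v h hv
      have h1 : el v = false := helf v hv
      have h2 : pl el g (Sum.inl (Sum.inl v)) = pl el g (Sum.inl (Sum.inr 1)) := by
        simp [pl, h1]
      have h3 : ¬ pl el g (Sum.inl (Sum.inl v)) = pl el g (Sum.inl (Sum.inr 0)) := by
        simp [pl, h1]
      exact ⟨⟨fun h => absurd h hv', fun h => absurd h h3⟩,
        ⟨fun _ => h2, fun _ => hv⟩, Or.inr ⟨h2, h3⟩⟩
  · -- (iii)
    intro u hu v hv
    have hgp : g (u, v) = true := (hgood (u, v)).mpr ⟨hu, hv⟩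
    -- canonical witnesses
    have wit : ∀ c : B V, ql g eb (Sum.inr (Sum.inr (Sum.inr (u, v)))) = ql g eb c →
        (∃ uL uR uE : B V,
          ql g eb (Sum.inl (Sum.inl u)) = ql g eb uL ∧
          ql g eb (Sum.inl (Sum.inl v)) = ql g eb uR ∧
          (pl el g uL = pl el g uR ∧ pl el g uL = pl el g uE ∧ pl el g uR = pl el g uE) ∧
          ql g eb uE = ql g eb c) := by
      intro c hc
      refine ⟨Sum.inr (Sum.inl (u, v)), Sum.inr (Sum.inr (Sum.inl (u, v))),
        Sum.inr (Sum.inr (Sum.inr (u, v))), ?_, ?_, ⟨?_, ?_, ?_⟩, hc⟩ <;>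
        simp [pl, ql, hgp]
    have hA : (∃ uL uR uE : B V,
          ql g eb (Sum.inl (Sum.inl u)) = ql g eb uL ∧
          ql g eb (Sum.inl (Sum.inl v)) = ql g eb uR ∧
          (pl el g uL = pl el g uR ∧ pl el g uL = pl el g uE ∧ pl el g uR = pl el g uE) ∧
          ql g eb uE = ql g eb (Sum.inl (Sum.inr 2))) ↔ E u v := by
      constructor
      · rintro ⟨uL, uR, uE, qLh, qRh, ⟨p1, p2, p3⟩, qEh⟩
        have hqL : ql g eb uL = Sum.inl (Sum.inl u) := by rw [← qLh]; rfl
        have hqR : ql g eb uR = Sum.inl (Sum.inl v) := by rw [← qRh]; rfl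
        rcases key hgood helb hLR hu hv hqL hqR p1 p2 with rfl | rfl | rfl
        · exfalso; simp only [ql, if_pos hgp] at qEh; simp at qEh
        · exfalso; simp only [ql, if_pos hgp] at qEh; simp at qEh
        · simp only [ql, if_pos hgp] at qEh
          split at qEh
          · exact (hebp (u, v)).mp (by assumption)
          · exfalso; simp at qEh
      · intro hEuv
        refine wit _ ?_
        simp [ql, hgp, (hebp (u, v)).mpr hEuv]
    have hB : (∃ uL uR uE : B V,
          ql g eb (Sum.inl (Sum.inl u)) = ql g eb uL ∧
          ql g eb (Sum.inl (Sum.inl v)) = ql g eb uR ∧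
          (pl el g uL = pl el g uR ∧ pl el g uL = pl el g uE ∧ pl el g uR = pl el g uE) ∧
          ql g eb uE = ql g eb (Sum.inl (Sum.inr 3))) ↔ ¬ E u v := by
      constructor
      · rintro ⟨uL, uR, uE, qLh, qRh, ⟨p1, p2, p3⟩, qEh⟩
        have hqL : ql g eb uL = Sum.inl (Sum.inl u) := by rw [← qLh]; rfl
        have hqR : ql g eb uR = Sum.inl (Sum.inl v) := by rw [← qRh]; rfl
        rcases key hgood helb hLR hu hv hqL hqR p1 p2 with rfl | rfl | rfl
        · exfalso; simp only [ql, if_pos hgp] at qEh; simp at qEh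
        · exfalso; simp only [ql, if_pos hgp] at qEh; simp at qEh
        · simp only [ql, if_pos hgp] at qEh
          split at qEh
          · exfalso; simp at qEh
          · intro hEuv
            exact absurd ((hebp (u, v)).mpr hEuv) (by assumption)
      · intro hEuv
        refine wit _ ?_
        have : eb (u, v) = false := by
          rw [Bool.eq_false_iff]; exact fun h => hEuv ((hebp (u, v)).mp h)
        simp [ql, hgp, this]
    constructor
    · rcases Classical.em (E u v) with h | h
      · exact Or.inl ⟨hA.mpr h, fun hb => (hB.mp hb) h⟩
      · exact Or.inr ⟨hB.mpr h, fun ha => h (hA.mp ha)⟩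
    · exact hA.symm
end

section
/- The class BiG*_fin of all finite bipartite graphs having at least three vertices in each of the two parts is Σ1-interpretable without parameters in the class 2Eq_fin of all finite nonempty models of two equivalences. -/
open FirstOrder FirstOrder.Language

/-- `K1` (a class of `σ1`-structures) is Σ₁-interpretable without parameters in `K2`
(a class of `σ2`-structures): there are Σ₁ formulas `ΦU` (with one free variable) and, for
each relation symbol `R` of `σ1`, Σ₁ formulas `ΦR R` and `ΦnR R`, such that every `𝔄 ∈ K1`
is isomorphic to the structure carved out by these formulas from some `𝔅 ∈ K2`. -/
def Sigma1Interpretable (σ1 σ2 : Language)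
    (K1 : (A : Type) → σ1.Structure A → Prop)
    (K2 : (B : Type) → σ2.Structure B → Prop) : Prop :=
  ∃ (ΦU : σ2.Formula (Fin 1))
    (ΦR ΦnR : (n : ℕ) → σ1.Relations n → σ2.Formula (Fin n)),
    IsSigma1 ΦU ∧
    (∀ (n : ℕ) (R : σ1.Relations n), IsSigma1 (ΦR n R)) ∧
    (∀ (n : ℕ) (R : σ1.Relations n), IsSigma1 (ΦnR n R)) ∧
    ∀ (A : Type) (SA : σ1.Structure A), K1 A SA →
      ∃ (B : Type) (SB : σ2.Structure B),
        K2 B SB ∧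
        (letI := SB
         -- (1) the interpreted universe B' = {b | 𝔅 ⊨ ΦU(b)} is nonempty
         (∃ b : B, ΦU.Realize (fun _ => b)) ∧
         -- (2) on B', the formula ΦnR defines exactly the complement of ΦR
         (∀ (n : ℕ) (R : σ1.Relations n) (b : Fin n → B),
            (∀ i, ΦU.Realize (fun _ => b i)) →
            ((ΦnR n R).Realize b ↔ ¬ (ΦR n R).Realize b)) ∧
         -- (3) 𝔄 is isomorphic to the structure induced on B' by the formulas ΦR
         (∃ g : A → B,
            Function.Injective g ∧
            (∀ b : B, ΦU.Realize (fun _ => b) ↔ b ∈ Set.range g) ∧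
            (∀ (n : ℕ) (R : σ1.Relations n) (a : Fin n → A),
              SA.RelMap R a ↔ (ΦR n R).Realize (g ∘ a))))

set_option linter.unusedTactic false
set_option linter.unreachableTactic false
set_option linter.unnecessarySeqFocus false
set_option linter.unusedVariables false
set_option maxHeartbeats 1000000

namespace Test
variable {A : Type} {lft : A → Prop} {edg : A → A → Prop}

inductive Wit (lft : A → Prop) (edg : A → A → Prop) : Type
  | vt (a : A)
  | pm (a : A) (i : Fin 3) (h : i.val < 2 ∨ lft a)
  | qm (a : A) (i : Fin 3) (h : i.val < 2 ∨ ¬ lft a)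
  | kk (a : A) (i : Fin 2)
  | zz (a c : A) (h : edg a c) (i : Fin 2)
  | ww (a c : A) (h : edg a c)
  | uu (a c : A) (h : edg a c)
  | nn (a b : A) (h : a ≠ b) (h2 : ¬ edg a b)

open Wit

def pcol : Wit lft edg → ℕ × A × A
  | vt a => (0, a, a)
  | pm a _ _ => (0, a, a)
  | qm a _ _ => (1, a, a)
  | kk a _ => (1, a, a)
  | zz a _ _ _ => (0, a, a)
  | ww a c _ => (2, a, c)
  | uu a c _ => (2, a, c)
  | nn _ b _ _ => (0, b, b)

def qcol : Wit lft edg → ℕ × A × A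
  | vt a => (0, a, a)
  | pm a _ _ => (1, a, a)
  | qm a _ _ => (0, a, a)
  | kk a _ => (1, a, a)
  | zz a c _ _ => (2, a, c)
  | ww a c _ => (2, a, c)
  | uu _ c _ => (0, c, c)
  | nn a _ _ _ => (0, a, a)

def big2 (z : Wit lft edg) : Prop := ∃ y, y ≠ z ∧ pcol y = pcol z ∧ qcol y = qcol z

def big3 (z : Wit lft edg) : Prop :=
  ∃ y1 y2, y1 ≠ z ∧ y2 ≠ z ∧ y1 ≠ y2 ∧ pcol y1 = pcol z ∧ qcol y1 = qcol z ∧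
    pcol y2 = pcol z ∧ qcol y2 = qcol z

lemma nbig2_vt {a : A} : ¬ big2 (vt a : Wit lft edg) := by
  rintro ⟨y, hne, hp, hq⟩; cases y <;> simp_all [pcol, qcol] <;> subst_vars <;> simp_all

lemma nbig2_ww {a c : A} {h : edg a c} : ¬ big2 (ww a c h : Wit lft edg) := by
  rintro ⟨y, hne, hp, hq⟩; cases y <;> simp_all [pcol, qcol] <;> subst_vars <;> simp_all

lemma nbig2_uu {a c : A} {h : edg a c} : ¬ big2 (uu a c h : Wit lft edg) := by
  rintro ⟨y, hne, hp, hq⟩; cases y <;> simp_all [pcol, qcol] <;> subst_vars <;> simp_all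

lemma nbig2_nn {a b : A} {h : a ≠ b} {h2 : ¬ edg a b} : ¬ big2 (nn a b h h2 : Wit lft edg) := by
  rintro ⟨y, hne, hp, hq⟩; cases y <;> simp_all [pcol, qcol] <;> subst_vars <;> simp_all

lemma big2_pm {a : A} {i : Fin 3} {h : i.val < 2 ∨ lft a} : big2 (pm a i h : Wit lft edg) := by
  by_cases h0 : i = 0
  · exact ⟨pm a 1 (Or.inl (by norm_num)), by subst h0; simp [pcol, qcol]⟩
  · exact ⟨pm a 0 (Or.inl (by norm_num)), by simp [pcol, qcol, Ne.symm h0]⟩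

lemma big2_qm {a : A} {i : Fin 3} {h : i.val < 2 ∨ ¬ lft a} : big2 (qm a i h : Wit lft edg) := by
  by_cases h0 : i = 0
  · exact ⟨qm a 1 (Or.inl (by norm_num)), by subst h0; simp [pcol, qcol]⟩
  · exact ⟨qm a 0 (Or.inl (by norm_num)), by simp [pcol, qcol, Ne.symm h0]⟩

lemma big2_kk {a : A} {i : Fin 2} : big2 (kk a i : Wit lft edg) := by
  by_cases h0 : i = 0
  · exact ⟨kk a 1, by subst h0; simp [pcol, qcol]⟩
  · exact ⟨kk a 0, by simp [pcol, qcol, Ne.symm h0]⟩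

lemma big2_zz {a c : A} {hc : edg a c} {i : Fin 2} : big2 (zz a c hc i : Wit lft edg) := by
  by_cases h0 : i = 0
  · exact ⟨zz a c hc 1, by subst h0; simp [pcol, qcol]⟩
  · exact ⟨zz a c hc 0, by simp [pcol, qcol, Ne.symm h0]⟩

lemma big3_pm {a : A} {i : Fin 3} {h : i.val < 2 ∨ lft a} (hl : lft a) :
    big3 (pm a i h : Wit lft edg) := by
  fin_cases i
  · exact ⟨pm a 1 (Or.inr hl), pm a 2 (Or.inr hl), by simp [pcol, qcol]⟩
  · exact ⟨pm a 0 (Or.inr hl), pm a 2 (Or.inr hl), by simp [pcol, qcol]⟩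
  · exact ⟨pm a 0 (Or.inr hl), pm a 1 (Or.inr hl), by simp [pcol, qcol]⟩

lemma big3_qm {a : A} {i : Fin 3} {h : i.val < 2 ∨ ¬ lft a} (hl : ¬ lft a) :
    big3 (qm a i h : Wit lft edg) := by
  fin_cases i
  · exact ⟨qm a 1 (Or.inr hl), qm a 2 (Or.inr hl), by simp [pcol, qcol]⟩
  · exact ⟨qm a 0 (Or.inr hl), qm a 2 (Or.inr hl), by simp [pcol, qcol]⟩
  · exact ⟨qm a 0 (Or.inr hl), qm a 1 (Or.inr hl), by simp [pcol, qcol]⟩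

lemma big3_big2 {z : Wit lft edg} (h : big3 z) : big2 z := by
  obtain ⟨y1, y2, h1, h2, h3, h4, h5, h6, h7⟩ := h; exact ⟨y1, h1, h4, h5⟩

lemma invP0 {z : Wit lft edg} {a : A} (h : pcol z = (0,a,a)) :
    z = vt a ∨ (∃ i hi, z = pm a i hi) ∨ (∃ c hc i, z = zz a c hc i) ∨ (∃ b hb hb2, z = nn b a hb hb2) := by
  cases z <;> simp_all [pcol] <;> first | (subst_vars; tauto) | (obtain ⟨rfl, rfl⟩ := h; tauto) | (subst_vars; rename_i hh; exact hh.imp_left (fun h => by omega))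

lemma invP1 {z : Wit lft edg} {a : A} (h : pcol z = (1,a,a)) :
    (∃ i hi, z = qm a i hi) ∨ (∃ i, z = kk a i) := by
  cases z <;> simp_all [pcol] <;> first | (subst_vars; tauto) | (obtain ⟨rfl, rfl⟩ := h; tauto) | (subst_vars; rename_i hh; exact hh.imp_left (fun h => by omega))

lemma invP2 {z : Wit lft edg} {a c : A} (h : pcol z = (2,a,c)) :
    (∃ hc, z = ww a c hc) ∨ (∃ hc, z = uu a c hc) := by
  cases z <;> simp_all [pcol] <;> first | (subst_vars; tauto) | (obtain ⟨rfl, rfl⟩ := h; tauto) | (subst_vars; rename_i hh; exact hh.imp_left (fun h => by omega))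

lemma invQ0 {z : Wit lft edg} {a : A} (h : qcol z = (0,a,a)) :
    z = vt a ∨ (∃ i hi, z = qm a i hi) ∨ (∃ c hc, z = uu c a hc) ∨ (∃ b hb hb2, z = nn a b hb hb2) := by
  cases z <;> simp_all [qcol] <;> first | (subst_vars; tauto) | (obtain ⟨rfl, rfl⟩ := h; tauto) | (subst_vars; rename_i hh; exact hh.imp_left (fun h => by omega))

lemma invQ1 {z : Wit lft edg} {a : A} (h : qcol z = (1,a,a)) :
    (∃ i hi, z = pm a i hi) ∨ (∃ i, z = kk a i) := by
  cases z <;> simp_all [qcol] <;> first | (subst_vars; tauto) | (obtain ⟨rfl, rfl⟩ := h; tauto) | (subst_vars; rename_i hh; exact hh.imp_left (fun h => by omega))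

lemma invQ2 {z : Wit lft edg} {a c : A} (h : qcol z = (2,a,c)) :
    (∃ hc i, z = zz a c hc i) ∨ (∃ hc, z = ww a c hc) := by
  cases z <;> simp_all [qcol] <;> first | (subst_vars; tauto) | (obtain ⟨rfl, rfl⟩ := h; tauto) | (subst_vars; rename_i hh; exact hh.imp_left (fun h => by omega))

end Test

namespace Test2
open Test Test.Wit
variable {A : Type} {lft : A → Prop} {edg : A → A → Prop}

lemma pm_ne_iff {a : A} {i j : Fin 3} {h h'} : (pm a i h : Wit lft edg) ≠ pm a j h' ↔ i ≠ j := by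
  constructor
  · rintro hne rfl; exact hne rfl
  · rintro hne e; exact hne (by simpa using e)

lemma nbig3_pm {a : A} {i : Fin 3} {h} (hnl : ¬ lft a) : ¬ big3 (pm a i h : Wit lft edg) := by
  rintro ⟨y1, y2, h1, h2, h3, p1, q1, p2, q2⟩
  simp only [pcol, qcol] at p1 q1 p2 q2
  rcases invQ1 q1 with ⟨i1, hi1, rfl⟩ | ⟨i1, rfl⟩
  · rcases invQ1 q2 with ⟨i2, hi2, rfl⟩ | ⟨i2, rfl⟩
    · have e1 : i1 ≠ i := fun e => h1 (by subst e; rfl)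
      have e2 : i2 ≠ i := fun e => h2 (by subst e; rfl)
      have e3 : i1 ≠ i2 := fun e => h3 (by subst e; rfl)
      have v1 : i1.val < 2 := hi1.resolve_right hnl
      have v2 : i2.val < 2 := hi2.resolve_right hnl
      have v : i.val < 2 := h.resolve_right hnl
      have n1 : i1.val ≠ i.val := fun e => e1 (Fin.ext e)
      have n2 : i2.val ≠ i.val := fun e => e2 (Fin.ext e)
      have n3 : i1.val ≠ i2.val := fun e => e3 (Fin.ext e)
      omega
    · simp [pcol] at p2
  · simp [pcol] at p1

lemma nbig3_qm {a : A} {i : Fin 3} {h} (hl : lft a) : ¬ big3 (qm a i h : Wit lft edg) := by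
  rintro ⟨y1, y2, h1, h2, h3, p1, q1, p2, q2⟩
  simp only [pcol, qcol] at p1 q1 p2 q2
  rcases invP1 p1 with ⟨i1, hi1, rfl⟩ | ⟨i1, rfl⟩
  · rcases invP1 p2 with ⟨i2, hi2, rfl⟩ | ⟨i2, rfl⟩
    · have e1 : i1 ≠ i := fun e => h1 (by subst e; rfl)
      have e2 : i2 ≠ i := fun e => h2 (by subst e; rfl)
      have e3 : i1 ≠ i2 := fun e => h3 (by subst e; rfl)
      have v1 : i1.val < 2 := hi1.resolve_right (not_not_intro hl)
      have v2 : i2.val < 2 := hi2.resolve_right (not_not_intro hl)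
      have v : i.val < 2 := h.resolve_right (not_not_intro hl)
      have n1 : i1.val ≠ i.val := fun e => e1 (Fin.ext e)
      have n2 : i2.val ≠ i.val := fun e => e2 (Fin.ext e)
      have n3 : i1.val ≠ i2.val := fun e => e3 (Fin.ext e)
      omega
    · simp [qcol] at q2
  · simp [qcol] at q1

lemma nbig3_kk {a : A} {i : Fin 2} : ¬ big3 (kk a i : Wit lft edg) := by
  rintro ⟨y1, y2, h1, h2, h3, p1, q1, p2, q2⟩
  simp only [pcol, qcol] at p1 q1 p2 q2
  rcases invP1 p1 with ⟨i1, hi1, rfl⟩ | ⟨i1, rfl⟩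
  · simp [qcol] at q1
  · rcases invP1 p2 with ⟨i2, hi2, rfl⟩ | ⟨i2, rfl⟩
    · simp [qcol] at q2
    · have e1 : i1 ≠ i := fun e => h1 (by subst e; rfl)
      have e2 : i2 ≠ i := fun e => h2 (by subst e; rfl)
      have e3 : i1 ≠ i2 := fun e => h3 (by subst e; rfl)
      have n1 : i1.val ≠ i.val := fun e => e1 (Fin.ext e)
      have n2 : i2.val ≠ i.val := fun e => e2 (Fin.ext e)
      have n3 : i1.val ≠ i2.val := fun e => e3 (Fin.ext e)
      omega
  
lemma nbig3_zz {a c : A} {hc : edg a c} {i : Fin 2} : ¬ big3 (zz a c hc i : Wit lft edg) := by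
  rintro ⟨y1, y2, h1, h2, h3, p1, q1, p2, q2⟩
  simp only [pcol, qcol] at p1 q1 p2 q2
  rcases invQ2 q1 with ⟨hc1, i1, rfl⟩ | ⟨hc1, rfl⟩
  · rcases invQ2 q2 with ⟨hc2, i2, rfl⟩ | ⟨hc2, rfl⟩
    · have e1 : i1 ≠ i := fun e => h1 (by subst e; rfl)
      have e2 : i2 ≠ i := fun e => h2 (by subst e; rfl)
      have e3 : i1 ≠ i2 := fun e => h3 (by subst e; rfl)
      have n1 : i1.val ≠ i.val := fun e => e1 (Fin.ext e)
      have n2 : i2.val ≠ i.val := fun e => e2 (Fin.ext e)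
      have n3 : i1.val ≠ i2.val := fun e => e3 (Fin.ext e)
      omega
    · simp [pcol] at p2
  · simp [pcol] at p1

@[simp] lemma big2_vt_iff {a : A} : big2 (vt a : Wit lft edg) ↔ False := by simp [nbig2_vt]
@[simp] lemma big2_pm_iff {a : A} {i h} : big2 (pm a i h : Wit lft edg) ↔ True := by simp [big2_pm]
@[simp] lemma big2_qm_iff {a : A} {i h} : big2 (qm a i h : Wit lft edg) ↔ True := by simp [big2_qm]
@[simp] lemma big2_kk_iff {a : A} {i} : big2 (kk a i : Wit lft edg) ↔ True := by simp [big2_kk]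
@[simp] lemma big2_zz_iff {a c : A} {hc i} : big2 (zz a c hc i : Wit lft edg) ↔ True := by simp [big2_zz]
@[simp] lemma big2_ww_iff {a c : A} {hc} : big2 (ww a c hc : Wit lft edg) ↔ False := by simp [nbig2_ww]
@[simp] lemma big2_uu_iff {a c : A} {hc} : big2 (uu a c hc : Wit lft edg) ↔ False := by simp [nbig2_uu]
@[simp] lemma big2_nn_iff {a b : A} {h h2} : big2 (nn a b h h2 : Wit lft edg) ↔ False := by simp [nbig2_nn]

@[simp] lemma big3_vt_iff {a : A} : big3 (vt a : Wit lft edg) ↔ False :=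
  by simp only [iff_false]; exact fun h => nbig2_vt (big3_big2 h)
@[simp] lemma big3_ww_iff {a c : A} {hc} : big3 (ww a c hc : Wit lft edg) ↔ False :=
  by simp only [iff_false]; exact fun h => nbig2_ww (big3_big2 h)
@[simp] lemma big3_uu_iff {a c : A} {hc} : big3 (uu a c hc : Wit lft edg) ↔ False :=
  by simp only [iff_false]; exact fun h => nbig2_uu (big3_big2 h)
@[simp] lemma big3_nn_iff {a b : A} {h h2} : big3 (nn a b h h2 : Wit lft edg) ↔ False :=
  by simp only [iff_false]; exact fun h => nbig2_nn (big3_big2 h)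
@[simp] lemma big3_kk_iff {a : A} {i} : big3 (kk a i : Wit lft edg) ↔ False :=
  by simp only [iff_false]; exact nbig3_kk
@[simp] lemma big3_zz_iff {a c : A} {hc i} : big3 (zz a c hc i : Wit lft edg) ↔ False :=
  by simp only [iff_false]; exact nbig3_zz
@[simp] lemma big3_pm_iff {a : A} {i h} : big3 (pm a i h : Wit lft edg) ↔ lft a := by
  constructor
  · intro hb; by_contra hnl; exact nbig3_pm hnl hb
  · exact big3_pm
@[simp] lemma big3_qm_iff {a : A} {i h} : big3 (qm a i h : Wit lft edg) ↔ ¬ lft a := by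
  constructor
  · intro hb; by_contra hnl; exact nbig3_qm hnl hb
  · exact big3_qm

end Test2
namespace Test3
open Test Test.Wit Test2
variable {A : Type} {lft : A → Prop} {edg : A → A → Prop}

lemma left_iff (a : A) :
    (∃ z : Wit lft edg, pcol z = pcol (vt a : Wit lft edg) ∧ qcol z ≠ qcol (vt a : Wit lft edg) ∧ big3 z) ↔ lft a := by
  constructor
  · rintro ⟨z, h1, h2, h3⟩
    cases z <;> simp_all [pcol, qcol] <;> (try subst_vars) <;> simp_all
  · intro h
    exact ⟨pm a 0 (Or.inl (by norm_num)), by simp [pcol, qcol, h]⟩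

lemma right_iff (a : A) :
    (∃ z : Wit lft edg, qcol z = qcol (vt a : Wit lft edg) ∧ pcol z ≠ pcol (vt a : Wit lft edg) ∧ big3 z) ↔ ¬ lft a := by
  constructor
  · rintro ⟨z, h1, h2, h3⟩
    cases z <;> simp_all [pcol, qcol] <;> (try subst_vars) <;> simp_all
  · intro h
    exact ⟨qm a 0 (Or.inl (by norm_num)), by simp [pcol, qcol, h]⟩

lemma nedge_iff (hirr : ∀ c, ¬ edg c c) (a b : A) :
    (∃ z : Wit lft edg, qcol z = qcol (vt a : Wit lft edg) ∧ pcol z = pcol (vt b : Wit lft edg)) ↔ ¬ edg a b := by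
  constructor
  · rintro ⟨z, h1, h2⟩
    cases z <;> simp_all [pcol, qcol] <;> (try subst_vars) <;> simp_all [hirr]
  · intro h
    by_cases e : a = b
    · exact ⟨vt a, by simp [pcol, qcol, e]⟩
    · exact ⟨nn a b e h, by simp [pcol, qcol]⟩

lemma u_iff (x : Wit lft edg) :
    (∃ z w k : Wit lft edg, pcol z = pcol x ∧ qcol z ≠ qcol x ∧ big2 z ∧ qcol w = qcol x ∧
      pcol w ≠ pcol x ∧ big2 w ∧ qcol k = qcol z ∧ pcol k = pcol w ∧ big2 k) ↔ ∃ a, x = vt a := by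
  constructor
  · rintro ⟨z, w, k, h1, h2, h3, h4, h5, h6, h7, h8, h9⟩
    cases x with
    | vt a => exact ⟨a, rfl⟩
    | pm a i h =>
      exfalso
      simp only [pcol, qcol] at h1 h2 h4 h5
      rcases invP0 h1 with rfl | ⟨i1, hi1, rfl⟩ | ⟨c, hc, i1, rfl⟩ | ⟨b, hb, hb2, rfl⟩
      · exact nbig2_vt h3
      · simp [qcol] at h2
      · rcases invQ1 h4 with ⟨i2, hi2, rfl⟩ | ⟨i2, rfl⟩
        · simp [pcol] at h5
        · simp only [qcol, pcol] at h7 h8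
          rcases invP1 h8 with ⟨i3, hi3, rfl⟩ | ⟨i3, rfl⟩ <;> simp [qcol] at h7
      · exact nbig2_nn h3
    | qm a i h =>
      exfalso
      simp only [pcol, qcol] at h1 h2 h4 h5
      rcases invP1 h1 with ⟨i1, hi1, rfl⟩ | ⟨i1, rfl⟩
      · simp [qcol] at h2
      · rcases invQ0 h4 with rfl | ⟨i2, hi2, rfl⟩ | ⟨c, hc, rfl⟩ | ⟨b, hb, hb2, rfl⟩
        · exact nbig2_vt h6
        · simp [pcol] at h5
        · exact nbig2_uu h6
        · exact nbig2_nn h6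
    | kk a i =>
      exfalso
      simp only [pcol, qcol] at h1 h2 h4 h5
      rcases invP1 h1 with ⟨i1, hi1, rfl⟩ | ⟨i1, rfl⟩
      · rcases invQ1 h4 with ⟨i2, hi2, rfl⟩ | ⟨i2, rfl⟩
        · simp only [qcol, pcol] at h7 h8
          rcases invP0 h8 with rfl | ⟨i3, hi3, rfl⟩ | ⟨c, hc, i3, rfl⟩ | ⟨b, hb, hb2, rfl⟩
          · exact nbig2_vt h9
          · simp [qcol] at h7
          · simp [qcol] at h7
          · simp only [qcol, Prod.mk.injEq] at h7
            exact hb h7.2.1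
        · simp [pcol] at h5
      · simp [qcol] at h2
    | zz a c hc i =>
      exfalso
      simp only [pcol, qcol] at h4 h5
      rcases invQ2 h4 with ⟨hc1, i1, rfl⟩ | ⟨hc1, rfl⟩
      · simp [pcol] at h5
      · exact nbig2_ww h6
    | ww a c hc =>
      exfalso
      simp only [pcol, qcol] at h1 h2
      rcases invP2 h1 with ⟨hc1, rfl⟩ | ⟨hc1, rfl⟩
      · simp [qcol] at h2
      · exact nbig2_uu h3
    | uu a c hc =>
      exfalso
      simp only [pcol, qcol] at h1 h2
      rcases invP2 h1 with ⟨hc1, rfl⟩ | ⟨hc1, rfl⟩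
      · exact nbig2_ww h3
      · simp [qcol] at h2
    | nn a b hne hned =>
      exfalso
      simp only [pcol, qcol] at h1 h2 h4 h5
      rcases invQ0 h4 with rfl | ⟨i2, hi2, rfl⟩ | ⟨c, hc, rfl⟩ | ⟨b2, hb2, hb22, rfl⟩
      · exact nbig2_vt h6
      · rcases invP0 h1 with rfl | ⟨i1, hi1, rfl⟩ | ⟨c, hc, i1, rfl⟩ | ⟨b1, hb1, hb12, rfl⟩
        · exact nbig2_vt h3
        · simp only [pcol] at h8
          rcases invP1 h8 with ⟨i3, hi3, rfl⟩ | ⟨i3, rfl⟩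
          · simp [qcol] at h7
          · simp only [qcol, Prod.mk.injEq] at h7
            exact hne h7.2.1
        · simp only [pcol] at h8
          rcases invP1 h8 with ⟨i3, hi3, rfl⟩ | ⟨i3, rfl⟩ <;> simp [qcol] at h7
        · exact nbig2_nn h3
      · exact nbig2_uu h6
      · exact nbig2_nn h6
  · rintro ⟨a, rfl⟩
    exact ⟨pm a 0 (Or.inl (by norm_num)), qm a 0 (Or.inl (by norm_num)), kk a 0, by simp [pcol, qcol]⟩

lemma edge_iff (hirr : ∀ c, ¬ edg c c) (a b : A) :
    (∃ z w u : Wit lft edg, pcol z = pcol (vt a : Wit lft edg) ∧ qcol z ≠ qcol (vt a : Wit lft edg) ∧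
      big2 z ∧ qcol w = qcol z ∧ pcol w ≠ pcol z ∧ pcol u = pcol w ∧ qcol u ≠ qcol w ∧
      qcol u = qcol (vt b : Wit lft edg) ∧ qcol u ≠ qcol (vt a : Wit lft edg)) ↔ edg a b := by
  constructor
  · rintro ⟨z, w, u, h1, h2, h3, h4, h5, h6, h7, h8, h9⟩
    simp only [pcol, qcol] at h1 h2 h8 h9
    rcases invP0 h1 with rfl | ⟨i1, hi1, rfl⟩ | ⟨c, hc, i1, rfl⟩ | ⟨b1, hb1, hb12, rfl⟩
    · exact absurd h3 nbig2_vt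
    · simp only [qcol] at h2 h4
      rcases invQ1 h4 with ⟨i2, hi2, rfl⟩ | ⟨i2, rfl⟩
      · simp [pcol] at h5
      · simp only [pcol] at h6
        rcases invP1 h6 with ⟨i3, hi3, rfl⟩ | ⟨i3, rfl⟩
        · simp [qcol] at h9
        · simp [qcol] at h8
    · simp only [qcol] at h2 h4
      rcases invQ2 h4 with ⟨hc1, i2, rfl⟩ | ⟨hc1, rfl⟩
      · simp [pcol] at h5
      · simp only [pcol] at h6
        rcases invP2 h6 with ⟨hc2, rfl⟩ | ⟨hc2, rfl⟩
        · simp [qcol] at h7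
        · simp only [qcol, Prod.mk.injEq] at h8
          obtain ⟨-, rfl, -⟩ := h8
          exact hc
    · exact absurd h3 nbig2_nn
  · intro h
    have hne : a ≠ b := fun e => hirr a (by rw [e] at h ⊢; exact h)
    exact ⟨zz a b h 0, ww a b h, uu a b h, by simp [pcol, qcol, hne, Ne.symm hne]⟩

end Test3

namespace Plumb

lemma isSigma1_exs {L : Language} {α : Type*} :
    ∀ {n : ℕ} {φ : L.BoundedFormula α n}, IsSigma1 φ → IsSigma1 φ.exs := by
  intro n
  induction n with
  | zero => exact fun h => h
  | succ n ih => exact fun h => ih (IsSigma1.ex h)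

variable {W : Type} (pcol qcol : W → ℕ × W × W)

def pAtom {n k : ℕ} (t u : σE.Term (Fin n ⊕ Fin k)) : σE.BoundedFormula (Fin n) k :=
  Relations.boundedFormula₂ EqRel2.P t u

def qAtom {n k : ℕ} (t u : σE.Term (Fin n ⊕ Fin k)) : σE.BoundedFormula (Fin n) k :=
  Relations.boundedFormula₂ EqRel2.Q t u

lemma pAtom_qf {n k : ℕ} (t u : σE.Term (Fin n ⊕ Fin k)) : (pAtom t u).IsQF :=
  (BoundedFormula.IsAtomic.rel _ _).isQF

lemma qAtom_qf {n k : ℕ} (t u : σE.Term (Fin n ⊕ Fin k)) : (qAtom t u).IsQF :=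
  (BoundedFormula.IsAtomic.rel _ _).isQF

def xv {n k : ℕ} (i : Fin n) : σE.Term (Fin n ⊕ Fin k) := Term.var (Sum.inl i)
def bv {n k : ℕ} (i : Fin k) : σE.Term (Fin n ⊕ Fin k) := Term.var (Sum.inr i)

-- matrix of ΦU : z=0, w=1, k=2, z'=3, w'=4, k'=5
def matU : σE.BoundedFormula (Fin 1) 6 :=
  pAtom (bv 0) (xv 0) ⊓ ∼(qAtom (bv 0) (xv 0)) ⊓
  pAtom (bv 3) (bv 0) ⊓ qAtom (bv 3) (bv 0) ⊓ ∼(Term.bdEqual (bv 3) (bv 0)) ⊓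
  qAtom (bv 1) (xv 0) ⊓ ∼(pAtom (bv 1) (xv 0)) ⊓
  pAtom (bv 4) (bv 1) ⊓ qAtom (bv 4) (bv 1) ⊓ ∼(Term.bdEqual (bv 4) (bv 1)) ⊓
  qAtom (bv 2) (bv 0) ⊓ pAtom (bv 2) (bv 1) ⊓
  pAtom (bv 5) (bv 2) ⊓ qAtom (bv 5) (bv 2) ⊓ ∼(Term.bdEqual (bv 5) (bv 2))

def PhiU : σE.Formula (Fin 1) := matU.exs

lemma sigma1_PhiU : IsSigma1 PhiU := by
  apply isSigma1_exs
  apply IsSigma1.of_isQF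
  unfold matU
  repeat'
    first
      | apply BoundedFormula.IsQF.inf
      | apply BoundedFormula.IsQF.not
      | exact pAtom_qf _ _
      | exact qAtom_qf _ _
      | exact (BoundedFormula.IsAtomic.equal _ _).isQF


-- matrix of ΦLeft : z=0, y1=1, y2=2
def matL : σE.BoundedFormula (Fin 1) 3 :=
  pAtom (bv 0) (xv 0) ⊓ ∼(qAtom (bv 0) (xv 0)) ⊓
  ∼(Term.bdEqual (bv 1) (bv 0)) ⊓ ∼(Term.bdEqual (bv 2) (bv 0)) ⊓ ∼(Term.bdEqual (bv 1) (bv 2)) ⊓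
  pAtom (bv 1) (bv 0) ⊓ qAtom (bv 1) (bv 0) ⊓ pAtom (bv 2) (bv 0) ⊓ qAtom (bv 2) (bv 0)

def PhiL : σE.Formula (Fin 1) := matL.exs

-- matrix of ΦRight : z=0, y1=1, y2=2
def matR : σE.BoundedFormula (Fin 1) 3 :=
  qAtom (bv 0) (xv 0) ⊓ ∼(pAtom (bv 0) (xv 0)) ⊓
  ∼(Term.bdEqual (bv 1) (bv 0)) ⊓ ∼(Term.bdEqual (bv 2) (bv 0)) ⊓ ∼(Term.bdEqual (bv 1) (bv 2)) ⊓
  pAtom (bv 1) (bv 0) ⊓ qAtom (bv 1) (bv 0) ⊓ pAtom (bv 2) (bv 0) ⊓ qAtom (bv 2) (bv 0)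

def PhiR : σE.Formula (Fin 1) := matR.exs

-- matrix of ΦEdge : z=0, w=1, u=2, z'=3
def matE : σE.BoundedFormula (Fin 2) 4 :=
  pAtom (bv 0) (xv 0) ⊓ ∼(qAtom (bv 0) (xv 0)) ⊓
  ∼(Term.bdEqual (bv 3) (bv 0)) ⊓ pAtom (bv 3) (bv 0) ⊓ qAtom (bv 3) (bv 0) ⊓
  qAtom (bv 1) (bv 0) ⊓ ∼(pAtom (bv 1) (bv 0)) ⊓
  pAtom (bv 2) (bv 1) ⊓ ∼(qAtom (bv 2) (bv 1)) ⊓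
  qAtom (bv 2) (xv 1) ⊓ ∼(qAtom (bv 2) (xv 0))

def PhiE : σE.Formula (Fin 2) := matE.exs

-- matrix of ΦnEdge : z=0
def matNE : σE.BoundedFormula (Fin 2) 1 :=
  qAtom (bv 0) (xv 0) ⊓ pAtom (bv 0) (xv 1)

def PhiNE : σE.Formula (Fin 2) := matNE.exs

lemma sigma1_PhiL : IsSigma1 PhiL := by
  apply isSigma1_exs; apply IsSigma1.of_isQF; unfold matL
  repeat'
    first
      | apply BoundedFormula.IsQF.inf
      | apply BoundedFormula.IsQF.not
      | exact pAtom_qf _ _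
      | exact qAtom_qf _ _
      | exact (BoundedFormula.IsAtomic.equal _ _).isQF

lemma sigma1_PhiR : IsSigma1 PhiR := by
  apply isSigma1_exs; apply IsSigma1.of_isQF; unfold matR
  repeat'
    first
      | apply BoundedFormula.IsQF.inf
      | apply BoundedFormula.IsQF.not
      | exact pAtom_qf _ _
      | exact qAtom_qf _ _
      | exact (BoundedFormula.IsAtomic.equal _ _).isQF

lemma sigma1_PhiE : IsSigma1 PhiE := by
  apply isSigma1_exs; apply IsSigma1.of_isQF; unfold matE
  repeat'
    first
      | apply BoundedFormula.IsQF.inf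
      | apply BoundedFormula.IsQF.not
      | exact pAtom_qf _ _
      | exact qAtom_qf _ _
      | exact (BoundedFormula.IsAtomic.equal _ _).isQF

lemma sigma1_PhiNE : IsSigma1 PhiNE := by
  apply isSigma1_exs; apply IsSigma1.of_isQF; unfold matNE
  repeat'
    first
      | apply BoundedFormula.IsQF.inf
      | apply BoundedFormula.IsQF.not
      | exact pAtom_qf _ _
      | exact qAtom_qf _ _
      | exact (BoundedFormula.IsAtomic.equal _ _).isQF

section Realize

variable {W C : Type} (pc qc : W → C)

def colStruct : σE.Structure W where
  funMap := fun {n} f _ => Empty.elim f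
  RelMap := fun {n} r =>
    match r with
    | EqRel2.P => fun v => pc (v 0) = pc (v 1)
    | EqRel2.Q => fun v => qc (v 0) = qc (v 1)

lemma relP (v : Fin 2 → W) :
    (colStruct pc qc).RelMap EqRel2.P v ↔ pc (v 0) = pc (v 1) := Iff.rfl

lemma relQ (v : Fin 2 → W) :
    (colStruct pc qc).RelMap EqRel2.Q v ↔ qc (v 0) = qc (v 1) := Iff.rfl

lemma realize_PhiU (v : Fin 1 → W) :
    (letI := colStruct pc qc; PhiU.Realize v) ↔
      ∃ z w k : W, pc z = pc (v 0) ∧ qc z ≠ qc (v 0) ∧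
        (∃ y, y ≠ z ∧ pc y = pc z ∧ qc y = qc z) ∧
        qc w = qc (v 0) ∧ pc w ≠ pc (v 0) ∧
        (∃ y, y ≠ w ∧ pc y = pc w ∧ qc y = qc w) ∧
        qc k = qc z ∧ pc k = pc w ∧
        (∃ y, y ≠ k ∧ pc y = pc k ∧ qc y = qc k) := by
  letI := colStruct pc qc
  rw [show PhiU = matU.exs from rfl, BoundedFormula.realize_exs]
  constructor
  · rintro ⟨xs, h⟩
    simp only [matU, pAtom, qAtom, BoundedFormula.realize_inf, BoundedFormula.realize_not,
      BoundedFormula.realize_rel₂, BoundedFormula.realize_bdEqual, Term.realize_var,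
      Sum.elim_inl, Sum.elim_inr, relP, relQ, Matrix.cons_val_zero, Matrix.cons_val_one,
      Matrix.head_cons] at h
    refine ⟨xs 0, xs 1, xs 2, ?_, ?_, ⟨xs 3, ?_, ?_, ?_⟩, ?_, ?_, ⟨xs 4, ?_, ?_, ?_⟩,
      ?_, ?_, ⟨xs 5, ?_, ?_, ?_⟩⟩ <;> tauto
  · rintro ⟨z, w, k, h1, h2, ⟨z', hz1, hz2, hz3⟩, h4, h5, ⟨w', hw1, hw2, hw3⟩,
      h7, h8, ⟨k', hk1, hk2, hk3⟩⟩
    refine ⟨fun i => match i with | 0 => z | 1 => w | 2 => k | 3 => z' | 4 => w' | 5 => k', ?_⟩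
    simp only [matU, pAtom, qAtom, BoundedFormula.realize_inf, BoundedFormula.realize_not,
      BoundedFormula.realize_rel₂, BoundedFormula.realize_bdEqual, Term.realize_var,
      Sum.elim_inl, Sum.elim_inr, relP, relQ, Matrix.cons_val_zero, Matrix.cons_val_one,
      Matrix.head_cons]
    tauto


lemma realize_PhiL (v : Fin 1 → W) :
    (letI := colStruct pc qc; PhiL.Realize v) ↔
      ∃ z : W, pc z = pc (v 0) ∧ qc z ≠ qc (v 0) ∧
        (∃ y1 y2, y1 ≠ z ∧ y2 ≠ z ∧ y1 ≠ y2 ∧ pc y1 = pc z ∧ qc y1 = qc z ∧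
          pc y2 = pc z ∧ qc y2 = qc z) := by
  letI := colStruct pc qc
  rw [show PhiL = matL.exs from rfl, BoundedFormula.realize_exs]
  constructor
  · rintro ⟨xs, h⟩
    simp only [matL, pAtom, qAtom, BoundedFormula.realize_inf, BoundedFormula.realize_not,
      BoundedFormula.realize_rel₂, BoundedFormula.realize_bdEqual, Term.realize_var,
      Sum.elim_inl, Sum.elim_inr, relP, relQ, Matrix.cons_val_zero, Matrix.cons_val_one,
      Matrix.head_cons] at h
    refine ⟨xs 0, ?_, ?_, ⟨xs 1, xs 2, ?_, ?_, ?_, ?_, ?_, ?_, ?_⟩⟩ <;> tauto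
  · rintro ⟨z, h1, h2, ⟨y1, y2, e1, e2, e3, p1, q1, p2, q2⟩⟩
    refine ⟨fun i => match i with | 0 => z | 1 => y1 | 2 => y2, ?_⟩
    simp only [matL, pAtom, qAtom, BoundedFormula.realize_inf, BoundedFormula.realize_not,
      BoundedFormula.realize_rel₂, BoundedFormula.realize_bdEqual, Term.realize_var,
      Sum.elim_inl, Sum.elim_inr, relP, relQ, Matrix.cons_val_zero, Matrix.cons_val_one,
      Matrix.head_cons]
    tauto

lemma realize_PhiR (v : Fin 1 → W) :
    (letI := colStruct pc qc; PhiR.Realize v) ↔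
      ∃ z : W, qc z = qc (v 0) ∧ pc z ≠ pc (v 0) ∧
        (∃ y1 y2, y1 ≠ z ∧ y2 ≠ z ∧ y1 ≠ y2 ∧ pc y1 = pc z ∧ qc y1 = qc z ∧
          pc y2 = pc z ∧ qc y2 = qc z) := by
  letI := colStruct pc qc
  rw [show PhiR = matR.exs from rfl, BoundedFormula.realize_exs]
  constructor
  · rintro ⟨xs, h⟩
    simp only [matR, pAtom, qAtom, BoundedFormula.realize_inf, BoundedFormula.realize_not,
      BoundedFormula.realize_rel₂, BoundedFormula.realize_bdEqual, Term.realize_var,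
      Sum.elim_inl, Sum.elim_inr, relP, relQ, Matrix.cons_val_zero, Matrix.cons_val_one,
      Matrix.head_cons] at h
    refine ⟨xs 0, ?_, ?_, ⟨xs 1, xs 2, ?_, ?_, ?_, ?_, ?_, ?_, ?_⟩⟩ <;> tauto
  · rintro ⟨z, h1, h2, ⟨y1, y2, e1, e2, e3, p1, q1, p2, q2⟩⟩
    refine ⟨fun i => match i with | 0 => z | 1 => y1 | 2 => y2, ?_⟩
    simp only [matR, pAtom, qAtom, BoundedFormula.realize_inf, BoundedFormula.realize_not,
      BoundedFormula.realize_rel₂, BoundedFormula.realize_bdEqual, Term.realize_var,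
      Sum.elim_inl, Sum.elim_inr, relP, relQ, Matrix.cons_val_zero, Matrix.cons_val_one,
      Matrix.head_cons]
    tauto

lemma realize_PhiE (v : Fin 2 → W) :
    (letI := colStruct pc qc; PhiE.Realize v) ↔
      ∃ z w u : W, pc z = pc (v 0) ∧ qc z ≠ qc (v 0) ∧
        (∃ y, y ≠ z ∧ pc y = pc z ∧ qc y = qc z) ∧
        qc w = qc z ∧ pc w ≠ pc z ∧ pc u = pc w ∧ qc u ≠ qc w ∧
        qc u = qc (v 1) ∧ qc u ≠ qc (v 0) := by
  letI := colStruct pc qc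
  rw [show PhiE = matE.exs from rfl, BoundedFormula.realize_exs]
  constructor
  · rintro ⟨xs, h⟩
    simp only [matE, pAtom, qAtom, BoundedFormula.realize_inf, BoundedFormula.realize_not,
      BoundedFormula.realize_rel₂, BoundedFormula.realize_bdEqual, Term.realize_var,
      Sum.elim_inl, Sum.elim_inr, relP, relQ, Matrix.cons_val_zero, Matrix.cons_val_one,
      Matrix.head_cons] at h
    refine ⟨xs 0, xs 1, xs 2, ?_, ?_, ⟨xs 3, ?_, ?_, ?_⟩, ?_, ?_, ?_, ?_, ?_, ?_⟩ <;> tauto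
  · rintro ⟨z, w, u, h1, h2, ⟨z', hz1, hz2, hz3⟩, h4, h5, h6, h7, h8, h9⟩
    refine ⟨fun i => match i with | 0 => z | 1 => w | 2 => u | 3 => z', ?_⟩
    simp only [matE, pAtom, qAtom, BoundedFormula.realize_inf, BoundedFormula.realize_not,
      BoundedFormula.realize_rel₂, BoundedFormula.realize_bdEqual, Term.realize_var,
      Sum.elim_inl, Sum.elim_inr, relP, relQ, Matrix.cons_val_zero, Matrix.cons_val_one,
      Matrix.head_cons]
    tauto

lemma realize_PhiNE (v : Fin 2 → W) :
    (letI := colStruct pc qc; PhiNE.Realize v) ↔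
      ∃ z : W, qc z = qc (v 0) ∧ pc z = pc (v 1) := by
  letI := colStruct pc qc
  rw [show PhiNE = matNE.exs from rfl, BoundedFormula.realize_exs]
  constructor
  · rintro ⟨xs, h⟩
    simp only [matNE, pAtom, qAtom, BoundedFormula.realize_inf,
      BoundedFormula.realize_rel₂, Term.realize_var,
      Sum.elim_inl, Sum.elim_inr, relP, relQ, Matrix.cons_val_zero, Matrix.cons_val_one,
      Matrix.head_cons] at h
    exact ⟨xs 0, h.1, h.2⟩
  · rintro ⟨z, h1, h2⟩
    refine ⟨fun _ => z, ?_⟩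
    simp only [matNE, pAtom, qAtom, BoundedFormula.realize_inf,
      BoundedFormula.realize_rel₂, Term.realize_var,
      Sum.elim_inl, Sum.elim_inr, relP, relQ, Matrix.cons_val_zero, Matrix.cons_val_one,
      Matrix.head_cons]
    exact ⟨h1, h2⟩

end Realize

end Plumb


section Assembly
open Test Test.Wit Test2 Test3 Plumb

variable {A : Type} {lft : A → Prop} {edg : A → A → Prop}

def enc : Wit lft edg → Fin 8 × A × A × Fin 3
  | vt a => (⟨0, by omega⟩, a, a, ⟨0, by omega⟩)
  | pm a i _ => (⟨1, by omega⟩, a, a, i)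
  | qm a i _ => (⟨2, by omega⟩, a, a, i)
  | kk a i => (⟨3, by omega⟩, a, a, ⟨i.val, by omega⟩)
  | zz a c _ i => (⟨4, by omega⟩, a, c, ⟨i.val, by omega⟩)
  | ww a c _ => (⟨5, by omega⟩, a, c, ⟨0, by omega⟩)
  | uu a c _ => (⟨6, by omega⟩, a, c, ⟨0, by omega⟩)
  | nn a b _ _ => (⟨7, by omega⟩, a, b, ⟨0, by omega⟩)

lemma enc_inj : Function.Injective (enc (lft := lft) (edg := edg)) := by
  intro x y h
  cases x <;> cases y <;> simp_all [enc, Fin.val_inj]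

lemma wit_finite (hA : Finite A) : Finite (Wit lft edg) :=
  Finite.of_injective enc enc_inj

end Assembly

/-- BiG*_fin is Σ₁-interpretable without parameters in 2Eq_fin. -/
theorem biGstarFin_sigma1_interpretable_in_twoEqFin :
    Sigma1Interpretable σG σE BiGstarFin TwoEqFin := by
  classical
  open Test Test.Wit Test2 Test3 Plumb in
  refine ⟨PhiU,
    (fun n R => match R with
      | GraphRel.left => PhiL
      | GraphRel.right => PhiR
      | GraphRel.edge => PhiE),
    (fun n R => match R with
      | GraphRel.left => PhiR
      | GraphRel.right => PhiL
      | GraphRel.edge => PhiNE),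
    sigma1_PhiU, ?_, ?_, ?_⟩
  · intro n R; cases R
    · exact sigma1_PhiL
    · exact sigma1_PhiR
    · exact sigma1_PhiE
  · intro n R; cases R
    · exact sigma1_PhiR
    · exact sigma1_PhiL
    · exact sigma1_PhiNE
  intro A SA hA
  obtain ⟨hfin, hLR, hE, hL3, hR3⟩ := hA
  haveI := hfin
  set lft : A → Prop := fun a => SA.RelMap GraphRel.left ![a] with hlft
  set edg : A → A → Prop := fun a b => SA.RelMap GraphRel.edge ![a, b] with hedg
  have hirr : ∀ c, ¬ edg c c := by
    intro c hc
    have h2 := hE c c hc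
    exact (hLR c).mp h2.1 h2.2
  have ha0 : Nonempty {a : A // lft a} := by
    by_contra h
    rw [not_nonempty_iff] at h
    rw [Nat.card_of_isEmpty] at hL3
    omega
  obtain ⟨⟨a0, -⟩⟩ := ha0
  haveI : Finite (Wit lft edg) := wit_finite hfin
  have e1 : ∀ a : Fin 1 → A, (![a 0] : Fin 1 → A) = a := by
    intro a; funext i; fin_cases i <;> rfl
  have e2 : ∀ a : Fin 2 → A, (![a 0, a 1] : Fin 2 → A) = a := by
    intro a; funext i; fin_cases i <;> rfl
  refine ⟨Wit lft edg, colStruct pcol qcol, ⟨?_, ⟨vt a0⟩, ?_, ?_⟩, ?_, ?_, ?_⟩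
  · exact wit_finite hfin
  · -- P is an equivalence
    have hP : ∀ x y : Wit lft edg,
        ((colStruct pcol qcol).RelMap EqRel2.P ![x, y] ↔ pcol x = pcol y) := by
      intro x y; rw [relP]; simp
    exact ⟨fun x => (hP x x).mpr rfl,
      fun h => (hP _ _).mpr ((hP _ _).mp h).symm,
      fun h h' => (hP _ _).mpr (((hP _ _).mp h).trans ((hP _ _).mp h'))⟩
  · have hQ : ∀ x y : Wit lft edg,
        ((colStruct pcol qcol).RelMap EqRel2.Q ![x, y] ↔ qcol x = qcol y) := by
      intro x y; rw [relQ]; simp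
    exact ⟨fun x => (hQ x x).mpr rfl,
      fun h => (hQ _ _).mpr ((hQ _ _).mp h).symm,
      fun h h' => (hQ _ _).mpr (((hQ _ _).mp h).trans ((hQ _ _).mp h'))⟩
  · -- (1) nonempty universe
    exact ⟨vt a0, (realize_PhiU pcol qcol _).mpr ((u_iff (vt a0)).mpr ⟨a0, rfl⟩)⟩
  · -- (2) complements
    intro n R b hb
    cases R with
    | left =>
      obtain ⟨c0, hc0⟩ := (u_iff (b 0)).mp ((realize_PhiU pcol qcol _).mp (hb 0))
      rw [realize_PhiR pcol qcol b, realize_PhiL pcol qcol b, hc0]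
      exact (right_iff c0).trans (not_congr (left_iff c0)).symm
    | right =>
      obtain ⟨c0, hc0⟩ := (u_iff (b 0)).mp ((realize_PhiU pcol qcol _).mp (hb 0))
      rw [realize_PhiL pcol qcol b, realize_PhiR pcol qcol b, hc0]
      exact (left_iff c0).trans (not_not.symm.trans (not_congr (right_iff c0)).symm)
    | edge =>
      obtain ⟨c0, hc0⟩ := (u_iff (b 0)).mp ((realize_PhiU pcol qcol _).mp (hb 0))
      obtain ⟨c1, hc1⟩ := (u_iff (b 1)).mp ((realize_PhiU pcol qcol _).mp (hb 1))
      rw [realize_PhiNE pcol qcol b, realize_PhiE pcol qcol b, hc0, hc1]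
      exact (nedge_iff hirr c0 c1).trans (not_congr (edge_iff hirr c0 c1)).symm
  · -- (3) isomorphism
    refine ⟨vt, fun a b h => by simpa using h, ?_, ?_⟩
    · intro b
      rw [realize_PhiU pcol qcol (fun _ => b)]
      exact (u_iff b).trans ⟨fun ⟨a, h⟩ => ⟨a, h.symm⟩, fun ⟨a, h⟩ => ⟨a, h.symm⟩⟩
    · intro n R a
      cases R with
      | left =>
        rw [realize_PhiL pcol qcol (vt ∘ a)]
        have key : SA.RelMap GraphRel.left a ↔ lft (a 0) := by
          rw [hlft]; simp only []; rw [e1 a]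
        exact key.trans (left_iff (a 0)).symm
      | right =>
        rw [realize_PhiR pcol qcol (vt ∘ a)]
        have key : SA.RelMap GraphRel.right a ↔ ¬ lft (a 0) := by
          have h := hLR (a 0)
          rw [e1 a] at h
          have h2 : lft (a 0) ↔ SA.RelMap GraphRel.left a := by
            rw [hlft]; simp only []; rw [e1 a]
          tauto
        exact key.trans (right_iff (a 0)).symm
      | edge =>
        rw [realize_PhiE pcol qcol (vt ∘ a)]
        have key : SA.RelMap GraphRel.edge a ↔ edg (a 0) (a 1) := by
          rw [hedg]; simp only []; rw [e2 a]
        exact key.trans (edge_iff hirr (a 0) (a 1)).symm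
end

section
/- For every finite bipartite graph G with vertex set V, left part L and right part R each of size at least three, and edge relation E ⊆ L × R, there exist a finite set B, two equivalence relations P and Q on B, and an injective map ι : V → B such that: (i) {b ∈ B : Ψ_L(b)} = ι(L) and {b ∈ B : Ψ_R(b)} = ι(R); (ii) for all u ∈ L and v ∈ R, exactly one of the following two conditions holds, and the first holds iff E(u, v): (a) there exist u_L, u_R, u_E, u_P ∈ B with Ψ_P(u_P), Q(ι u, u_L), Q(ι v, u_R), u_L, u_R, u_E pairwise P-equivalent, and Q(u_E, u_P); (b) there exist u_L, u_R, u_E, u_N ∈ B with Ψ_N(u_N), Q(ι u, u_L), Q(ι v, u_R), u_L, u_R, u_E pairwise P-equivalent, and Q(u_E, u_N). -/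
/-- The pair of tuples `(b₁,…,b_{k1}; d₁,…,d_{k2})` realizes `Θ_{k1,k2,k3}` with respect to
the relations `P`, `Q`: the `bᵢ` are pairwise `P`-equivalent, the `dⱼ` are pairwise
`P`-equivalent, `¬P(b₁, d₁)`, `¬Q(bᵢ, bⱼ)` and `¬Q(dᵢ, dⱼ)` for `i ≠ j`, and
`Q(bᵢ, dᵢ)` for all `i < k3`. -/
def RealizesTheta {B : Type} (P Q : B → B → Prop) {k1 k2 : ℕ} (k3 : ℕ)
    (b : Fin k1 → B) (d : Fin k2 → B) : Prop :=
  (∀ i j : Fin k1, P (b i) (b j)) ∧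
  (∀ i j : Fin k2, P (d i) (d j)) ∧
  (∀ (h1 : 0 < k1) (h2 : 0 < k2), ¬ P (b ⟨0, h1⟩) (d ⟨0, h2⟩)) ∧
  (∀ i j : Fin k1, i ≠ j → ¬ Q (b i) (b j)) ∧
  (∀ i j : Fin k2, i ≠ j → ¬ Q (d i) (d j)) ∧
  (∀ (i : ℕ) (h1 : i < k1) (h2 : i < k2), i < k3 → Q (b ⟨i, h1⟩) (d ⟨i, h2⟩))

/-- Ψ_L(x): there are b₁,…,b₄, d₁,…,d₄ such that (b₁,…,b₄,x; d₁,…,d₄) realizes Θ_{5,4,4}. -/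
def PsiL {B : Type} (P Q : B → B → Prop) (x : B) : Prop :=
  ∃ (b : Fin 4 → B) (d : Fin 4 → B), RealizesTheta P Q 4 (Fin.snoc b x) d

/-- Ψ_R(x): there are b₁,…,b₅, d₁,…,d₅ such that (b₁,…,b₅,x; d₁,…,d₅) realizes Θ_{6,5,3}. -/
def PsiR {B : Type} (P Q : B → B → Prop) (x : B) : Prop :=
  ∃ (b : Fin 5 → B) (d : Fin 5 → B), RealizesTheta P Q 3 (Fin.snoc b x) d

/-- Ψ_P(x): there are b₁,…,b₅, d₁,…,d₆ such that (x,b₁,…,b₅; d₁,…,d₆) or (b₁,…,b₅,x; d₁,…,d₆)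
realizes Θ_{6,6,2}. -/
def PsiP {B : Type} (P Q : B → B → Prop) (x : B) : Prop :=
  ∃ (b : Fin 5 → B) (d : Fin 6 → B),
    RealizesTheta P Q 2 (Fin.cons x b) d ∨ RealizesTheta P Q 2 (Fin.snoc b x) d

/-- Ψ_N(x): there are b₁,…,b₆, d₁,…,d₇ such that (x,b₁,…,b₆; d₁,…,d₇) or (b₁,…,b₆,x; d₁,…,d₇)
realizes Θ_{7,7,1}. -/
def PsiN {B : Type} (P Q : B → B → Prop) (x : B) : Prop :=
  ∃ (b : Fin 6 → B) (d : Fin 7 → B),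
    RealizesTheta P Q 1 (Fin.cons x b) d ∨ RealizesTheta P Q 1 (Fin.snoc b x) d

namespace BipEnc

variable {V : Type}

abbrev Col (V : Type) := V ⊕ Fin 32
abbrev Row (V : Type) := Fin 8 ⊕ V × V

def MemF (L R : Set V) (n : ℕ) (c : Col V) : Prop :=
  (n = 0 ∧ ((∃ u ∈ L, c = .inl u) ∨ (∃ k : Fin 32, c = .inr k ∧ k.val < 4))) ∨
  (n = 1 ∧ ((∃ v ∈ R, c = .inl v) ∨ (∃ k : Fin 32, c = .inr k ∧ 4 ≤ k.val ∧ k.val < 7))) ∨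
  (n = 2 ∧ (∃ k : Fin 32, c = .inr k ∧ k.val < 4)) ∨
  (n = 3 ∧ (∃ k : Fin 32, c = .inr k ∧ 4 ≤ k.val ∧ k.val < 9)) ∨
  (n = 4 ∧ (∃ k : Fin 32, c = .inr k ∧ 9 ≤ k.val ∧ k.val < 15)) ∨
  (n = 5 ∧ (∃ k : Fin 32, c = .inr k ∧ 13 ≤ k.val ∧ k.val < 19)) ∨
  (n = 6 ∧ (∃ k : Fin 32, c = .inr k ∧ 19 ≤ k.val ∧ k.val < 26)) ∨
  (n = 7 ∧ (∃ k : Fin 32, c = .inr k ∧ 25 ≤ k.val ∧ k.val < 32))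

def Mem (L R : Set V) (E : V → V → Prop) : Row V → Col V → Prop
  | .inl n, c => MemF L R n.val c
  | .inr (u, v), c => u ∈ L ∧ v ∈ R ∧
      (c = .inl u ∨ c = .inl v ∨ (E u v ∧ c = .inr 13) ∨ (¬ E u v ∧ c = .inr 25))

lemma memF_inl {L R : Set V} {n : ℕ} {w : V} (h : MemF L R n (.inl w)) :
    (n = 0 ∧ w ∈ L) ∨ (n = 1 ∧ w ∈ R) := by
  rcases h with ⟨h, ⟨u, hu, he⟩ | ⟨k, hk, _⟩⟩ | ⟨h, ⟨u, hu, he⟩ | ⟨k, hk, _⟩⟩ |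
    ⟨h, k, hk, _⟩ | ⟨h, k, hk, _⟩ | ⟨h, k, hk, _⟩ | ⟨h, k, hk, _⟩ | ⟨h, k, hk, _⟩ | ⟨h, k, hk, _⟩ <;>
    simp_all

lemma memF_inr {L R : Set V} {n : ℕ} {k : Fin 32} (h : MemF L R n (.inr k)) :
    ((n = 0 ∨ n = 2) ∧ k.val < 4) ∨ (n = 1 ∧ 4 ≤ k.val ∧ k.val < 7) ∨
    (n = 3 ∧ 4 ≤ k.val ∧ k.val < 9) ∨ (n = 4 ∧ 9 ≤ k.val ∧ k.val < 15) ∨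
    (n = 5 ∧ 13 ≤ k.val ∧ k.val < 19) ∨ (n = 6 ∧ 19 ≤ k.val ∧ k.val < 26) ∨
    (n = 7 ∧ 25 ≤ k.val ∧ k.val < 32) := by
  rcases h with ⟨h, ⟨u, hu, he⟩ | ⟨k', hk, hb⟩⟩ | ⟨h, ⟨u, hu, he⟩ | ⟨k', hk, hb⟩⟩ |
    ⟨h, k', hk, hb⟩ | ⟨h, k', hk, hb⟩ | ⟨h, k', hk, hb⟩ | ⟨h, k', hk, hb⟩ |
    ⟨h, k', hk, hb⟩ | ⟨h, k', hk, hb⟩ <;> simp_all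

/-- lower bound of the column range of helper row `n` (for `2 ≤ n ≤ 7`). -/
def rlo : ℕ → ℕ
  | 2 => 0 | 3 => 4 | 4 => 9 | 5 => 13 | 6 => 19 | _ => 25

def rhi : ℕ → ℕ
  | 2 => 4 | 3 => 9 | 4 => 15 | 5 => 19 | 6 => 26 | _ => 32

lemma memF_bounds {L R : Set V} {n : ℕ} {c : Col V} (hn : 2 ≤ n) (h : MemF L R n c) :
    ∃ k : Fin 32, c = .inr k ∧ rlo n ≤ k.val ∧ k.val < rhi n := by
  cases c with
  | inl w => rcases memF_inl h with ⟨h1, _⟩ | ⟨h1, _⟩ <;> omega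
  | inr k =>
    refine ⟨k, rfl, ?_⟩
    rcases memF_inr h with ⟨h1 | h1, hb⟩ | ⟨h1, hb⟩ | ⟨h1, hb⟩ | ⟨h1, hb⟩ | ⟨h1, hb⟩ |
      ⟨h1, hb⟩ | ⟨h1, hb⟩ <;> subst h1 <;> simp [rlo, rhi] <;> omega

lemma pigeon {m N : ℕ} (hm : N < m) (c : Fin m → Col V)
    (hd : ∀ i j, i ≠ j → c i ≠ c j)
    (f : Col V → ℕ) (hf : ∀ i, f (c i) < N)
    (hrec : ∀ i j, f (c i) = f (c j) → c i = c j) : False := by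
  have hinj : Function.Injective (fun i : Fin m => (⟨f (c i), hf i⟩ : Fin N)) := by
    intro i j hij
    by_contra hne
    exact hd i j hne (hrec i j (by simpa using hij))
  have := Fintype.card_le_of_injective _ hinj
  simp at this
  omega

def cIdx : Col V → ℕ
  | .inl _ => 50
  | .inr k => k.val

lemma pigeon_range {m lo hi : ℕ} (hsz : hi - lo < m) (c : Fin m → Col V)
    (hd : ∀ i j, i ≠ j → c i ≠ c j)
    (hmem : ∀ i, ∃ k : Fin 32, c i = .inr k ∧ lo ≤ k.val ∧ k.val < hi) : False := by
  refine pigeon hsz c hd (fun c => cIdx c - lo) (fun i => ?_) (fun i j hij => ?_)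
  · obtain ⟨k, hk, hb⟩ := hmem i
    rw [hk]; simp [cIdx]; omega
  · obtain ⟨k, hk, hb⟩ := hmem i
    obtain ⟨k', hk', hb'⟩ := hmem j
    rw [hk, hk'] at hij ⊢
    simp [cIdx] at hij
    have : k = k' := Fin.ext (by omega)
    rw [this]

lemma capPair {L R : Set V} {E : V → V → Prop} (hpart : ∀ v : V, v ∈ L ↔ v ∉ R)
    {u v : V} {m : ℕ} (hm : 3 < m) (c : Fin m → Col V)
    (hd : ∀ i j, i ≠ j → c i ≠ c j)
    (hmem : ∀ i, Mem L R E (.inr (u, v)) (c i)) : False := by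
  classical
  obtain ⟨hu, hv, -⟩ := hmem ⟨0, by omega⟩
  have huv : u ≠ v := fun h => ((hpart u).1 hu) (h ▸ hv)
  refine pigeon (N := 3) hm c hd
    (fun c => match c with | .inl w => if w = u then 0 else 1 | .inr _ => 2)
    (fun i => ?_) (fun i j hij => ?_)
  · rcases hmem i with ⟨-, -, h | h | ⟨_, h⟩ | ⟨_, h⟩⟩ <;> rw [h] <;> simp <;> split <;> omega
  · rcases hmem i with ⟨-, -, hi | hi | ⟨hEi, hi⟩ | ⟨hEi, hi⟩⟩ <;>
      rcases hmem j with ⟨-, -, hj | hj | ⟨hEj, hj⟩ | ⟨hEj, hj⟩⟩ <;>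
      rw [hi, hj] at hij ⊢ <;> simp_all [Ne.symm huv]

section Main

variable (L R : Set V) (E : V → V → Prop)

abbrev Bt := {p : Row V × Col V // Mem L R E p.1 p.2}

def Pr : Bt L R E → Bt L R E → Prop := fun p q => p.val.1 = q.val.1
def Qr : Bt L R E → Bt L R E → Prop := fun p q => p.val.2 = q.val.2

lemma realizes_of {k1 k2 : ℕ} (k3 : ℕ) {r1 r2 : Row V} (hr : r1 ≠ r2)
    (cb : Fin k1 → Col V) (cd : Fin k2 → Col V)
    (hb : ∀ i j, i ≠ j → cb i ≠ cb j) (hdd : ∀ i j, i ≠ j → cd i ≠ cd j)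
    (hm : ∀ (i : ℕ) (h1 : i < k1) (h2 : i < k2), i < k3 → cb ⟨i, h1⟩ = cd ⟨i, h2⟩)
    (mb : ∀ i, Mem L R E r1 (cb i)) (md : ∀ i, Mem L R E r2 (cd i)) :
    RealizesTheta (Pr L R E) (Qr L R E) k3
      (fun i => ⟨(r1, cb i), mb i⟩) (fun i => ⟨(r2, cd i), md i⟩) :=
  ⟨fun _ _ => rfl, fun _ _ => rfl, fun _ _ h => hr h,
    fun i j hij h => hb i j hij h, fun i j hij h => hdd i j hij h,
    fun i h1 h2 h3 => hm i h1 h2 h3⟩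

variable {L R E}


lemma rowne (a b : Fin 8) (h : a ≠ b) : (.inl a : Row V) ≠ .inl b :=
  fun hh => h (Sum.inl.inj hh)

lemma mem0inl {u : V} (h : u ∈ L) : Mem L R E (.inl 0) (.inl u) :=
  Or.inl ⟨rfl, Or.inl ⟨u, h, rfl⟩⟩

lemma mem0inr (k : Fin 32) (h : k.val < 4) : Mem L R E (.inl 0) (.inr k) :=
  Or.inl ⟨rfl, Or.inr ⟨k, rfl, h⟩⟩

lemma mem1inl {v : V} (h : v ∈ R) : Mem L R E (.inl 1) (.inl v) :=
  Or.inr (Or.inl ⟨rfl, Or.inl ⟨v, h, rfl⟩⟩)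

lemma mem1inr (k : Fin 32) (h1 : 4 ≤ k.val) (h2 : k.val < 7) : Mem L R E (.inl 1) (.inr k) :=
  Or.inr (Or.inl ⟨rfl, Or.inr ⟨k, rfl, h1, h2⟩⟩)

lemma mem2 (k : Fin 32) (h : k.val < 4) : Mem L R E (.inl 2) (.inr k) :=
  Or.inr (Or.inr (Or.inl ⟨rfl, k, rfl, h⟩))

lemma mem3 (k : Fin 32) (h1 : 4 ≤ k.val) (h2 : k.val < 9) : Mem L R E (.inl 3) (.inr k) :=
  Or.inr (Or.inr (Or.inr (Or.inl ⟨rfl, k, rfl, h1, h2⟩)))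

lemma mem4 (k : Fin 32) (h1 : 9 ≤ k.val) (h2 : k.val < 15) : Mem L R E (.inl 4) (.inr k) :=
  Or.inr (Or.inr (Or.inr (Or.inr (Or.inl ⟨rfl, k, rfl, h1, h2⟩))))

lemma mem5 (k : Fin 32) (h1 : 13 ≤ k.val) (h2 : k.val < 19) : Mem L R E (.inl 5) (.inr k) :=
  Or.inr (Or.inr (Or.inr (Or.inr (Or.inr (Or.inl ⟨rfl, k, rfl, h1, h2⟩)))))

lemma mem6 (k : Fin 32) (h1 : 19 ≤ k.val) (h2 : k.val < 26) : Mem L R E (.inl 6) (.inr k) :=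
  Or.inr (Or.inr (Or.inr (Or.inr (Or.inr (Or.inr (Or.inl ⟨rfl, k, rfl, h1, h2⟩))))))

lemma mem7 (k : Fin 32) (h1 : 25 ≤ k.val) (h2 : k.val < 32) : Mem L R E (.inl 7) (.inr k) :=
  Or.inr (Or.inr (Or.inr (Or.inr (Or.inr (Or.inr (Or.inr ⟨rfl, k, rfl, h1, h2⟩))))))

lemma memPairL {u v : V} (hu : u ∈ L) (hv : v ∈ R) : Mem L R E (.inr (u, v)) (.inl u) :=
  ⟨hu, hv, Or.inl rfl⟩

lemma memPairR {u v : V} (hu : u ∈ L) (hv : v ∈ R) : Mem L R E (.inr (u, v)) (.inl v) :=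
  ⟨hu, hv, Or.inr (Or.inl rfl)⟩

lemma memPairE {u v : V} (hu : u ∈ L) (hv : v ∈ R) (hE : E u v) :
    Mem L R E (.inr (u, v)) (.inr 13) := ⟨hu, hv, Or.inr (Or.inr (Or.inl ⟨hE, rfl⟩))⟩

lemma memPairN {u v : V} (hu : u ∈ L) (hv : v ∈ R) (hE : ¬ E u v) :
    Mem L R E (.inr (u, v)) (.inr 25) := ⟨hu, hv, Or.inr (Or.inr (Or.inr ⟨hE, rfl⟩))⟩

variable (L R E) in
open Classical in
noncomputable def iota (hpart : ∀ v : V, v ∈ L ↔ v ∉ R) : V → Bt L R E := fun v =>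
  if h : v ∈ L then ⟨(.inl 0, .inl v), mem0inl h⟩
  else ⟨(.inl 1, .inl v), mem1inl (by by_contra hnR; exact h ((hpart v).2 hnR))⟩

variable {hpart : ∀ v : V, v ∈ L ↔ v ∉ R}

lemma iota_col (v : V) : (iota L R E hpart v).val.2 = .inl v := by
  unfold iota; split <;> rfl

lemma iota_left {u : V} (h : u ∈ L) :
    iota L R E hpart u = ⟨(.inl 0, .inl u), mem0inl h⟩ := dif_pos h

lemma iota_right {v : V} (h : v ∈ R) :
    iota L R E hpart v = ⟨(.inl 1, .inl v), mem1inl h⟩ := by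
  unfold iota
  rw [dif_neg (fun hL => (hpart v).1 hL h)]

lemma psiL_pos {u : V} (hu : u ∈ L) : PsiL (Pr L R E) (Qr L R E) (iota L R E hpart u) := by
  have hb : ∀ i j : Fin 5, i ≠ j →
      (![.inr 0, .inr 1, .inr 2, .inr 3, .inl u] : Fin 5 → Col V) i ≠
      ![.inr 0, .inr 1, .inr 2, .inr 3, .inl u] j := by
    have EL0 : (![.inr 0, .inr 1, .inr 2, .inr 3, .inl u] : Fin 5 → Col V) 0 = .inr 0 := rfl
    have EL1 : (![.inr 0, .inr 1, .inr 2, .inr 3, .inl u] : Fin 5 → Col V) 1 = .inr 1 := rfl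
    have EL2 : (![.inr 0, .inr 1, .inr 2, .inr 3, .inl u] : Fin 5 → Col V) 2 = .inr 2 := rfl
    have EL3 : (![.inr 0, .inr 1, .inr 2, .inr 3, .inl u] : Fin 5 → Col V) 3 = .inr 3 := rfl
    have EL4 : (![.inr 0, .inr 1, .inr 2, .inr 3, .inl u] : Fin 5 → Col V) 4 = .inl u := rfl
    intro i j hij; fin_cases i <;> fin_cases j <;> simp_all [EL0, EL1, EL2, EL3, EL4]
  have hd : ∀ i j : Fin 4, i ≠ j →
      (![.inr 0, .inr 1, .inr 2, .inr 3] : Fin 4 → Col V) i ≠ ![.inr 0, .inr 1, .inr 2, .inr 3] j := by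
    have ED0 : (![.inr 0, .inr 1, .inr 2, .inr 3] : Fin 4 → Col V) 0 = .inr 0 := rfl
    have ED1 : (![.inr 0, .inr 1, .inr 2, .inr 3] : Fin 4 → Col V) 1 = .inr 1 := rfl
    have ED2 : (![.inr 0, .inr 1, .inr 2, .inr 3] : Fin 4 → Col V) 2 = .inr 2 := rfl
    have ED3 : (![.inr 0, .inr 1, .inr 2, .inr 3] : Fin 4 → Col V) 3 = .inr 3 := rfl
    intro i j hij; fin_cases i <;> fin_cases j <;> simp_all [ED0, ED1, ED2, ED3]
  have mb : ∀ i, Mem L R E (.inl 0) ((![.inr 0, .inr 1, .inr 2, .inr 3, .inl u] : Fin 5 → Col V) i) := by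
    intro i; fin_cases i
    · exact mem0inr 0 (by decide)
    · exact mem0inr 1 (by decide)
    · exact mem0inr 2 (by decide)
    · exact mem0inr 3 (by decide)
    · exact mem0inl hu
  have md : ∀ i, Mem L R E (.inl 2) ((![.inr 0, .inr 1, .inr 2, .inr 3] : Fin 4 → Col V) i) := by
    intro i; fin_cases i
    · exact mem2 0 (by decide)
    · exact mem2 1 (by decide)
    · exact mem2 2 (by decide)
    · exact mem2 3 (by decide)
  have hreal := realizes_of L R E 4 (r1 := .inl 0) (r2 := .inl 2) (rowne _ _ (by decide))
    _ _ hb hd (by intro i h1 h2 h3; interval_cases i <;> rfl) mb md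
  set F : Fin 5 → Bt L R E :=
    fun i => ⟨(.inl 0, ![.inr 0, .inr 1, .inr 2, .inr 3, .inl u] i), mb i⟩ with hF
  refine ⟨Fin.init F, fun i => ⟨(.inl 2, ![.inr 0, .inr 1, .inr 2, .inr 3] i), md i⟩, ?_⟩
  have hx : iota L R E hpart u = F (Fin.last 4) := by
    rw [iota_left hu]
    rfl
  rw [hx, Fin.snoc_init_self]
  exact hreal

lemma psiR_pos {v v1 v2 : V} (hv : v ∈ R) (hv1 : v1 ∈ R) (hv2 : v2 ∈ R)
    (h12 : v1 ≠ v2) (h1v : v1 ≠ v) (h2v : v2 ≠ v) :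
    PsiR (Pr L R E) (Qr L R E) (iota L R E hpart v) := by
  have h21 : v2 ≠ v1 := Ne.symm h12
  have hs1 : v ≠ v1 := Ne.symm h1v
  have hs2 : v ≠ v2 := Ne.symm h2v
  have hb : ∀ i j : Fin 6, i ≠ j →
      (![.inr 4, .inr 5, .inr 6, .inl v1, .inl v2, .inl v] : Fin 6 → Col V) i ≠
      ![.inr 4, .inr 5, .inr 6, .inl v1, .inl v2, .inl v] j := by
    have E0 : (![.inr 4, .inr 5, .inr 6, .inl v1, .inl v2, .inl v] : Fin 6 → Col V) 0 = .inr 4 := rfl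
    have E1 : (![.inr 4, .inr 5, .inr 6, .inl v1, .inl v2, .inl v] : Fin 6 → Col V) 1 = .inr 5 := rfl
    have E2 : (![.inr 4, .inr 5, .inr 6, .inl v1, .inl v2, .inl v] : Fin 6 → Col V) 2 = .inr 6 := rfl
    have E3 : (![.inr 4, .inr 5, .inr 6, .inl v1, .inl v2, .inl v] : Fin 6 → Col V) 3 = .inl v1 := rfl
    have E4 : (![.inr 4, .inr 5, .inr 6, .inl v1, .inl v2, .inl v] : Fin 6 → Col V) 4 = .inl v2 := rfl
    have E5 : (![.inr 4, .inr 5, .inr 6, .inl v1, .inl v2, .inl v] : Fin 6 → Col V) 5 = .inl v := rfl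
    intro i j hij; fin_cases i <;> fin_cases j <;> simp_all [E0, E1, E2, E3, E4, E5]
  have hd : ∀ i j : Fin 5, i ≠ j →
      (![.inr 4, .inr 5, .inr 6, .inr 7, .inr 8] : Fin 5 → Col V) i ≠
      ![.inr 4, .inr 5, .inr 6, .inr 7, .inr 8] j := by
    have ER0 : (![.inr 4, .inr 5, .inr 6, .inr 7, .inr 8] : Fin 5 → Col V) 0 = .inr 4 := rfl
    have ER1 : (![.inr 4, .inr 5, .inr 6, .inr 7, .inr 8] : Fin 5 → Col V) 1 = .inr 5 := rfl
    have ER2 : (![.inr 4, .inr 5, .inr 6, .inr 7, .inr 8] : Fin 5 → Col V) 2 = .inr 6 := rfl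
    have ER3 : (![.inr 4, .inr 5, .inr 6, .inr 7, .inr 8] : Fin 5 → Col V) 3 = .inr 7 := rfl
    have ER4 : (![.inr 4, .inr 5, .inr 6, .inr 7, .inr 8] : Fin 5 → Col V) 4 = .inr 8 := rfl
    intro i j hij; fin_cases i <;> fin_cases j <;> simp_all [ER0, ER1, ER2, ER3, ER4]
  have mb : ∀ i, Mem L R E (.inl 1)
      ((![.inr 4, .inr 5, .inr 6, .inl v1, .inl v2, .inl v] : Fin 6 → Col V) i) := by
    intro i; fin_cases i
    · exact mem1inr 4 (by decide) (by decide)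
    · exact mem1inr 5 (by decide) (by decide)
    · exact mem1inr 6 (by decide) (by decide)
    · exact mem1inl hv1
    · exact mem1inl hv2
    · exact mem1inl hv
  have md : ∀ i, Mem L R E (.inl 3)
      ((![.inr 4, .inr 5, .inr 6, .inr 7, .inr 8] : Fin 5 → Col V) i) := by
    intro i; fin_cases i
    · exact mem3 4 (by decide) (by decide)
    · exact mem3 5 (by decide) (by decide)
    · exact mem3 6 (by decide) (by decide)
    · exact mem3 7 (by decide) (by decide)
    · exact mem3 8 (by decide) (by decide)
  have hreal := realizes_of L R E 3 (r1 := .inl 1) (r2 := .inl 3) (rowne _ _ (by decide))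
    _ _ hb hd (by intro i h1 h2 h3; interval_cases i <;> rfl) mb md
  set F : Fin 6 → Bt L R E :=
    fun i => ⟨(.inl 1, ![.inr 4, .inr 5, .inr 6, .inl v1, .inl v2, .inl v] i), mb i⟩ with hF
  refine ⟨Fin.init F, fun i => ⟨(.inl 3, ![.inr 4, .inr 5, .inr 6, .inr 7, .inr 8] i), md i⟩, ?_⟩
  have hx : iota L R E hpart v = F (Fin.last 5) := by
    rw [iota_right (hpart := hpart) hv]
    rfl
  rw [hx, Fin.snoc_init_self]
  exact hreal

lemma psiP_pos (m4 : Mem L R E (.inl 4) (.inr 13)) :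
    PsiP (Pr L R E) (Qr L R E) ⟨((.inl 4 : Row V), (.inr 13 : Col V)), m4⟩ := by
  have hb : ∀ i j : Fin 6, i ≠ j →
      (![.inr 13, .inr 14, .inr 9, .inr 10, .inr 11, .inr 12] : Fin 6 → Col V) i ≠
      ![.inr 13, .inr 14, .inr 9, .inr 10, .inr 11, .inr 12] j := by
    have EP0 : (![.inr 13, .inr 14, .inr 9, .inr 10, .inr 11, .inr 12] : Fin 6 → Col V) 0 = .inr 13 := rfl
    have EP1 : (![.inr 13, .inr 14, .inr 9, .inr 10, .inr 11, .inr 12] : Fin 6 → Col V) 1 = .inr 14 := rfl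
    have EP2 : (![.inr 13, .inr 14, .inr 9, .inr 10, .inr 11, .inr 12] : Fin 6 → Col V) 2 = .inr 9 := rfl
    have EP3 : (![.inr 13, .inr 14, .inr 9, .inr 10, .inr 11, .inr 12] : Fin 6 → Col V) 3 = .inr 10 := rfl
    have EP4 : (![.inr 13, .inr 14, .inr 9, .inr 10, .inr 11, .inr 12] : Fin 6 → Col V) 4 = .inr 11 := rfl
    have EP5 : (![.inr 13, .inr 14, .inr 9, .inr 10, .inr 11, .inr 12] : Fin 6 → Col V) 5 = .inr 12 := rfl
    intro i j hij; fin_cases i <;> fin_cases j <;> simp_all [EP0, EP1, EP2, EP3, EP4, EP5]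
  have hd : ∀ i j : Fin 6, i ≠ j →
      (![.inr 13, .inr 14, .inr 15, .inr 16, .inr 17, .inr 18] : Fin 6 → Col V) i ≠
      ![.inr 13, .inr 14, .inr 15, .inr 16, .inr 17, .inr 18] j := by
    have EQ0 : (![.inr 13, .inr 14, .inr 15, .inr 16, .inr 17, .inr 18] : Fin 6 → Col V) 0 = .inr 13 := rfl
    have EQ1 : (![.inr 13, .inr 14, .inr 15, .inr 16, .inr 17, .inr 18] : Fin 6 → Col V) 1 = .inr 14 := rfl
    have EQ2 : (![.inr 13, .inr 14, .inr 15, .inr 16, .inr 17, .inr 18] : Fin 6 → Col V) 2 = .inr 15 := rfl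
    have EQ3 : (![.inr 13, .inr 14, .inr 15, .inr 16, .inr 17, .inr 18] : Fin 6 → Col V) 3 = .inr 16 := rfl
    have EQ4 : (![.inr 13, .inr 14, .inr 15, .inr 16, .inr 17, .inr 18] : Fin 6 → Col V) 4 = .inr 17 := rfl
    have EQ5 : (![.inr 13, .inr 14, .inr 15, .inr 16, .inr 17, .inr 18] : Fin 6 → Col V) 5 = .inr 18 := rfl
    intro i j hij; fin_cases i <;> fin_cases j <;> simp_all [EQ0, EQ1, EQ2, EQ3, EQ4, EQ5]
  have mb : ∀ i, Mem L R E (.inl 4)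
      ((![.inr 13, .inr 14, .inr 9, .inr 10, .inr 11, .inr 12] : Fin 6 → Col V) i) := by
    intro i; fin_cases i
    · exact mem4 13 (by decide) (by decide)
    · exact mem4 14 (by decide) (by decide)
    · exact mem4 9 (by decide) (by decide)
    · exact mem4 10 (by decide) (by decide)
    · exact mem4 11 (by decide) (by decide)
    · exact mem4 12 (by decide) (by decide)
  have md : ∀ i, Mem L R E (.inl 5)
      ((![.inr 13, .inr 14, .inr 15, .inr 16, .inr 17, .inr 18] : Fin 6 → Col V) i) := by
    intro i; fin_cases i
    · exact mem5 13 (by decide) (by decide)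
    · exact mem5 14 (by decide) (by decide)
    · exact mem5 15 (by decide) (by decide)
    · exact mem5 16 (by decide) (by decide)
    · exact mem5 17 (by decide) (by decide)
    · exact mem5 18 (by decide) (by decide)
  have hreal := realizes_of L R E 2 (r1 := .inl 4) (r2 := .inl 5) (rowne _ _ (by decide))
    _ _ hb hd (by intro i h1 h2 h3; interval_cases i <;> rfl) mb md
  set F : Fin 6 → Bt L R E :=
    fun i => ⟨(.inl 4, ![.inr 13, .inr 14, .inr 9, .inr 10, .inr 11, .inr 12] i), mb i⟩ with hF
  refine ⟨Fin.tail F, fun i => ⟨(.inl 5, ![.inr 13, .inr 14, .inr 15, .inr 16, .inr 17, .inr 18] i), md i⟩, Or.inl ?_⟩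
  have hx : (⟨((.inl 4 : Row V), (.inr 13 : Col V)), m4⟩ : Bt L R E) = F 0 := rfl
  rw [hx, Fin.cons_self_tail]
  exact hreal

lemma psiN_pos (m6 : Mem L R E (.inl 6) (.inr 25)) :
    PsiN (Pr L R E) (Qr L R E) ⟨((.inl 6 : Row V), (.inr 25 : Col V)), m6⟩ := by
  have hb : ∀ i j : Fin 7, i ≠ j →
      (![.inr 25, .inr 19, .inr 20, .inr 21, .inr 22, .inr 23, .inr 24] : Fin 7 → Col V) i ≠
      ![.inr 25, .inr 19, .inr 20, .inr 21, .inr 22, .inr 23, .inr 24] j := by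
    have EN0 : (![.inr 25, .inr 19, .inr 20, .inr 21, .inr 22, .inr 23, .inr 24] : Fin 7 → Col V) 0 = .inr 25 := rfl
    have EN1 : (![.inr 25, .inr 19, .inr 20, .inr 21, .inr 22, .inr 23, .inr 24] : Fin 7 → Col V) 1 = .inr 19 := rfl
    have EN2 : (![.inr 25, .inr 19, .inr 20, .inr 21, .inr 22, .inr 23, .inr 24] : Fin 7 → Col V) 2 = .inr 20 := rfl
    have EN3 : (![.inr 25, .inr 19, .inr 20, .inr 21, .inr 22, .inr 23, .inr 24] : Fin 7 → Col V) 3 = .inr 21 := rfl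
    have EN4 : (![.inr 25, .inr 19, .inr 20, .inr 21, .inr 22, .inr 23, .inr 24] : Fin 7 → Col V) 4 = .inr 22 := rfl
    have EN5 : (![.inr 25, .inr 19, .inr 20, .inr 21, .inr 22, .inr 23, .inr 24] : Fin 7 → Col V) 5 = .inr 23 := rfl
    have EN6 : (![.inr 25, .inr 19, .inr 20, .inr 21, .inr 22, .inr 23, .inr 24] : Fin 7 → Col V) 6 = .inr 24 := rfl
    intro i j hij; fin_cases i <;> fin_cases j <;> simp_all [EN0, EN1, EN2, EN3, EN4, EN5, EN6]
  have hd : ∀ i j : Fin 7, i ≠ j →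
      (![.inr 25, .inr 26, .inr 27, .inr 28, .inr 29, .inr 30, .inr 31] : Fin 7 → Col V) i ≠
      ![.inr 25, .inr 26, .inr 27, .inr 28, .inr 29, .inr 30, .inr 31] j := by
    have EM0 : (![.inr 25, .inr 26, .inr 27, .inr 28, .inr 29, .inr 30, .inr 31] : Fin 7 → Col V) 0 = .inr 25 := rfl
    have EM1 : (![.inr 25, .inr 26, .inr 27, .inr 28, .inr 29, .inr 30, .inr 31] : Fin 7 → Col V) 1 = .inr 26 := rfl
    have EM2 : (![.inr 25, .inr 26, .inr 27, .inr 28, .inr 29, .inr 30, .inr 31] : Fin 7 → Col V) 2 = .inr 27 := rfl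
    have EM3 : (![.inr 25, .inr 26, .inr 27, .inr 28, .inr 29, .inr 30, .inr 31] : Fin 7 → Col V) 3 = .inr 28 := rfl
    have EM4 : (![.inr 25, .inr 26, .inr 27, .inr 28, .inr 29, .inr 30, .inr 31] : Fin 7 → Col V) 4 = .inr 29 := rfl
    have EM5 : (![.inr 25, .inr 26, .inr 27, .inr 28, .inr 29, .inr 30, .inr 31] : Fin 7 → Col V) 5 = .inr 30 := rfl
    have EM6 : (![.inr 25, .inr 26, .inr 27, .inr 28, .inr 29, .inr 30, .inr 31] : Fin 7 → Col V) 6 = .inr 31 := rfl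
    intro i j hij; fin_cases i <;> fin_cases j <;> simp_all [EM0, EM1, EM2, EM3, EM4, EM5, EM6]
  have mb : ∀ i, Mem L R E (.inl 6)
      ((![.inr 25, .inr 19, .inr 20, .inr 21, .inr 22, .inr 23, .inr 24] : Fin 7 → Col V) i) := by
    intro i; fin_cases i
    · exact mem6 25 (by decide) (by decide)
    · exact mem6 19 (by decide) (by decide)
    · exact mem6 20 (by decide) (by decide)
    · exact mem6 21 (by decide) (by decide)
    · exact mem6 22 (by decide) (by decide)
    · exact mem6 23 (by decide) (by decide)
    · exact mem6 24 (by decide) (by decide)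
  have md : ∀ i, Mem L R E (.inl 7)
      ((![.inr 25, .inr 26, .inr 27, .inr 28, .inr 29, .inr 30, .inr 31] : Fin 7 → Col V) i) := by
    intro i; fin_cases i
    · exact mem7 25 (by decide) (by decide)
    · exact mem7 26 (by decide) (by decide)
    · exact mem7 27 (by decide) (by decide)
    · exact mem7 28 (by decide) (by decide)
    · exact mem7 29 (by decide) (by decide)
    · exact mem7 30 (by decide) (by decide)
    · exact mem7 31 (by decide) (by decide)
  have hreal := realizes_of L R E 1 (r1 := .inl 6) (r2 := .inl 7) (rowne _ _ (by decide))
    _ _ hb hd (by intro i h1 h2 h3; interval_cases i <;> rfl) mb md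
  set F : Fin 7 → Bt L R E :=
    fun i => ⟨(.inl 6, ![.inr 25, .inr 19, .inr 20, .inr 21, .inr 22, .inr 23, .inr 24] i), mb i⟩
    with hF
  refine ⟨Fin.tail F, fun i => ⟨(.inl 7, ![.inr 25, .inr 26, .inr 27, .inr 28, .inr 29, .inr 30, .inr 31] i), md i⟩, Or.inl ?_⟩
  have hx : (⟨((.inl 6 : Row V), (.inr 25 : Col V)), m6⟩ : Bt L R E) = F 0 := rfl
  rw [hx, Fin.cons_self_tail]
  exact hreal


lemma psiL_only (hpart : ∀ v : V, v ∈ L ↔ v ∉ R) {r1 r2 : Row V} (hne : r1 ≠ r2)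
    (cb : Fin 5 → Col V) (cd : Fin 4 → Col V)
    (hdb : ∀ i j, i ≠ j → cb i ≠ cb j) (hdd : ∀ i j, i ≠ j → cd i ≠ cd j)
    (mb : ∀ i, Mem L R E r1 (cb i)) (md : ∀ i, Mem L R E r2 (cd i))
    (hm : ∀ (i : ℕ) (h1 : i < 5) (h2 : i < 4), i < 4 → cb ⟨i, h1⟩ = cd ⟨i, h2⟩) :
    ∃ u, u ∈ L ∧ cb ⟨4, by omega⟩ = .inl u ∧ r1 = .inl 0 := by
  rcases r1 with n1 | ⟨pu, pv⟩
  swap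
  · exact (capPair hpart (by omega) cb hdb mb).elim
  rcases r2 with n2 | ⟨pu, pv⟩
  swap
  · exact (capPair hpart (by omega) cd hdd md).elim
  have hvne : n1.val ≠ n2.val := fun h => hne (congrArg Sum.inl (Fin.ext h))
  have hboth : ∀ i : Fin 4, MemF L R n1.val (cd i) ∧ MemF L R n2.val (cd i) := by
    intro i
    refine ⟨?_, md i⟩
    have h := mb ⟨i.val, by omega⟩
    rwa [hm i.val (by omega) i.isLt i.isLt] at h
  rcases hc0 : cd ⟨0, by omega⟩ with w | k
  · obtain ⟨h1c0, h2c0⟩ := hboth ⟨0, by omega⟩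
    rw [hc0] at h1c0 h2c0
    rcases memF_inl h1c0 with ⟨e1, hw1⟩ | ⟨e1, hw1⟩ <;>
      rcases memF_inl h2c0 with ⟨e2, hw2⟩ | ⟨e2, hw2⟩
    · omega
    · exact ((hpart w).1 hw1 hw2).elim
    · exact ((hpart w).1 hw2 hw1).elim
    · omega
  · obtain ⟨h1c0, h2c0⟩ := hboth ⟨0, by omega⟩
    rw [hc0] at h1c0 h2c0
    have hk1 := memF_inr h1c0
    have hk2 := memF_inr h2c0
    have hclass : (n1.val = 0 ∧ n2.val = 2) ∨ (n1.val = 2) ∨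
        ((n1.val = 1 ∧ n2.val = 3) ∨ (n1.val = 3 ∧ n2.val = 1)) ∨
        ((n1.val = 4 ∧ n2.val = 5) ∨ (n1.val = 5 ∧ n2.val = 4)) ∨
        ((n1.val = 6 ∧ n2.val = 7) ∨ (n1.val = 7 ∧ n2.val = 6)) := by
      rcases hk1 with ⟨h | h, hb⟩ | ⟨h, hb⟩ | ⟨h, hb⟩ | ⟨h, hb⟩ | ⟨h, hb⟩ | ⟨h, hb⟩ | ⟨h, hb⟩ <;>
        rcases hk2 with ⟨h' | h', hb'⟩ | ⟨h', hb'⟩ | ⟨h', hb'⟩ | ⟨h', hb'⟩ | ⟨h', hb'⟩ |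
          ⟨h', hb'⟩ | ⟨h', hb'⟩ <;> omega
    rcases hclass with ⟨e1, e2⟩ | e1 | (⟨e1, e2⟩ | ⟨e1, e2⟩) | hclass | hclass
    · -- n1 = 0 (big left row), n2 = 2 (left anchor)
      have hbound : ∀ i : Fin 4, ∃ k : Fin 32, cd i = .inr k ∧ k.val < 4 := by
        intro i
        obtain ⟨k', hk', hb1, hb2⟩ := memF_bounds (by omega) (hboth i).2
        rw [e2] at hb2
        simp [rhi] at hb2
        exact ⟨k', hk', hb2⟩
      rcases hcx : cb ⟨4, by omega⟩ with w | k'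
      · have h : MemF L R n1.val (.inl w) := by
          have h := mb ⟨4, by omega⟩; rwa [hcx] at h
        rcases memF_inl h with ⟨-, hw⟩ | ⟨e, -⟩
        · exact ⟨w, hw, rfl, congrArg Sum.inl (Fin.ext (by omega))⟩
        · omega
      · exfalso
        have h : MemF L R n1.val (.inr k') := by
          have h := mb ⟨4, by omega⟩; rwa [hcx] at h
        have hb4 : k'.val < 4 := by
          rcases memF_inr h with ⟨-, hb⟩ | ⟨e, hb⟩ | ⟨e, hb⟩ | ⟨e, hb⟩ | ⟨e, hb⟩ | ⟨e, hb⟩ |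
            ⟨e, hb⟩ <;> omega
        refine pigeon_range (lo := 0) (hi := 4) (by omega) cb hdb (fun i => ?_)
        by_cases hi : i.val < 4
        · obtain ⟨k'', hk'', hbk⟩ := hbound ⟨i.val, hi⟩
          exact ⟨k'', (hm i.val (by omega) hi hi).trans hk'', by omega⟩
        · have hival : i.val = 4 := by omega
          have hi4 : i = ⟨4, by omega⟩ := Fin.ext hival
          rw [hi4, hcx]
          exact ⟨k', rfl, by omega⟩
    · -- n1 = 2 : whole 5-tuple in the 4-column anchor row
      exfalso
      refine pigeon_range (lo := 0) (hi := 4) (by omega) cb hdb (fun i => ?_)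
      obtain ⟨k', hk', hb1, hb2⟩ := memF_bounds (by omega) (mb i)
      rw [e1] at hb2
      simp [rhi] at hb2
      exact ⟨k', hk', by omega, hb2⟩
    · -- n1 = 1, n2 = 3
      exfalso
      refine pigeon_range (lo := 4) (hi := 7) (by omega) cd hdd (fun i => ?_)
      obtain ⟨h1i, h2i⟩ := hboth i
      obtain ⟨k', hk', hb1, hb2⟩ := memF_bounds (by omega) h2i
      rw [e2] at hb1 hb2
      simp [rlo, rhi] at hb1 hb2
      rw [hk'] at h1i
      rcases memF_inr h1i with ⟨h | h, hb⟩ | ⟨h, hb⟩ | ⟨h, hb⟩ | ⟨h, hb⟩ | ⟨h, hb⟩ | ⟨h, hb⟩ |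
        ⟨h, hb⟩ <;> exact ⟨k', hk', by omega, by omega⟩
    · -- n1 = 3, n2 = 1
      exfalso
      refine pigeon_range (lo := 4) (hi := 7) (by omega) cd hdd (fun i => ?_)
      obtain ⟨h1i, h2i⟩ := hboth i
      obtain ⟨k', hk', hb1, hb2⟩ := memF_bounds (by omega) h1i
      rw [e1] at hb1 hb2
      simp [rlo, rhi] at hb1 hb2
      rw [hk'] at h2i
      rcases memF_inr h2i with ⟨h | h, hb⟩ | ⟨h, hb⟩ | ⟨h, hb⟩ | ⟨h, hb⟩ | ⟨h, hb⟩ | ⟨h, hb⟩ |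
        ⟨h, hb⟩ <;> exact ⟨k', hk', by omega, by omega⟩
    · -- {4,5}
      exfalso
      refine pigeon_range (lo := 13) (hi := 15) (by omega) cd hdd (fun i => ?_)
      obtain ⟨h1i, h2i⟩ := hboth i
      obtain ⟨k', hk', hb1, hb2⟩ := memF_bounds (n := n1.val) (by rcases hclass with ⟨e,-⟩|⟨e,-⟩ <;> omega) h1i
      obtain ⟨k'', hk'', hb1', hb2'⟩ := memF_bounds (n := n2.val) (by rcases hclass with ⟨-,e⟩|⟨-,e⟩ <;> omega) h2i
      rw [hk'] at hk''
      cases Sum.inr.inj hk''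
      rcases hclass with ⟨e1, e2⟩ | ⟨e1, e2⟩ <;> rw [e1] at hb1 hb2 <;> rw [e2] at hb1' hb2' <;>
        simp [rlo, rhi] at hb1 hb2 hb1' hb2' <;>
        exact ⟨k', hk', by omega, by omega⟩
    · -- {6,7}
      exfalso
      refine pigeon_range (lo := 25) (hi := 26) (by omega) cd hdd (fun i => ?_)
      obtain ⟨h1i, h2i⟩ := hboth i
      obtain ⟨k', hk', hb1, hb2⟩ := memF_bounds (n := n1.val) (by rcases hclass with ⟨e,-⟩|⟨e,-⟩ <;> omega) h1i
      obtain ⟨k'', hk'', hb1', hb2'⟩ := memF_bounds (n := n2.val) (by rcases hclass with ⟨-,e⟩|⟨-,e⟩ <;> omega) h2i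
      rw [hk'] at hk''
      cases Sum.inr.inj hk''
      rcases hclass with ⟨e1, e2⟩ | ⟨e1, e2⟩ <;> rw [e1] at hb1 hb2 <;> rw [e2] at hb1' hb2' <;>
        simp [rlo, rhi] at hb1 hb2 hb1' hb2' <;>
        exact ⟨k', hk', by omega, by omega⟩

lemma psiR_only (hpart : ∀ v : V, v ∈ L ↔ v ∉ R) {r1 r2 : Row V} (hne : r1 ≠ r2)
    (cb : Fin 6 → Col V) (cd : Fin 5 → Col V)
    (hdb : ∀ i j, i ≠ j → cb i ≠ cb j) (hdd : ∀ i j, i ≠ j → cd i ≠ cd j)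
    (mb : ∀ i, Mem L R E r1 (cb i)) (md : ∀ i, Mem L R E r2 (cd i))
    (hm : ∀ (i : ℕ) (h1 : i < 6) (h2 : i < 5), i < 3 → cb ⟨i, h1⟩ = cd ⟨i, h2⟩) :
    ∃ v, v ∈ R ∧ cb ⟨5, by omega⟩ = .inl v ∧ r1 = .inl 1 := by
  rcases r1 with n1 | ⟨pu, pv⟩
  swap
  · exact (capPair hpart (by omega) cb hdb mb).elim
  rcases r2 with n2 | ⟨pu, pv⟩
  swap
  · exact (capPair hpart (by omega) cd hdd md).elim
  have hvne : n1.val ≠ n2.val := fun h => hne (congrArg Sum.inl (Fin.ext h))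
  have hboth : ∀ i : Fin 3, MemF L R n1.val (cd ⟨i.val, by omega⟩) ∧
      MemF L R n2.val (cd ⟨i.val, by omega⟩) := by
    intro i
    refine ⟨?_, md _⟩
    have h := mb ⟨i.val, by omega⟩
    rwa [hm i.val (by omega) (by omega) (by omega)] at h
  rcases hc0 : cd ⟨0, by omega⟩ with w | k
  · obtain ⟨h1c0, h2c0⟩ := hboth ⟨0, by omega⟩
    rw [hc0] at h1c0 h2c0
    rcases memF_inl h1c0 with ⟨e1, hw1⟩ | ⟨e1, hw1⟩ <;>
      rcases memF_inl h2c0 with ⟨e2, hw2⟩ | ⟨e2, hw2⟩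
    · omega
    · exact ((hpart w).1 hw1 hw2).elim
    · exact ((hpart w).1 hw2 hw1).elim
    · omega
  · obtain ⟨h1c0, h2c0⟩ := hboth ⟨0, by omega⟩
    rw [hc0] at h1c0 h2c0
    have hk1 := memF_inr h1c0
    have hk2 := memF_inr h2c0
    have hclass : (n1.val = 0 ∧ n2.val = 2) ∨ (n1.val = 2) ∨
        ((n1.val = 1 ∧ n2.val = 3) ∨ (n1.val = 3 ∧ n2.val = 1)) ∨
        ((n1.val = 4 ∧ n2.val = 5) ∨ (n1.val = 5 ∧ n2.val = 4)) ∨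
        ((n1.val = 6 ∧ n2.val = 7) ∨ (n1.val = 7 ∧ n2.val = 6)) := by
      rcases hk1 with ⟨h | h, hb⟩ | ⟨h, hb⟩ | ⟨h, hb⟩ | ⟨h, hb⟩ | ⟨h, hb⟩ | ⟨h, hb⟩ | ⟨h, hb⟩ <;>
        rcases hk2 with ⟨h' | h', hb'⟩ | ⟨h', hb'⟩ | ⟨h', hb'⟩ | ⟨h', hb'⟩ | ⟨h', hb'⟩ |
          ⟨h', hb'⟩ | ⟨h', hb'⟩ <;> omega
    have hsharedBounds : ∀ lo hi : ℕ, 2 ≤ n2.val →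
        (∀ k : Fin 32, MemF L R n1.val (.inr k) → MemF L R n2.val (.inr k) →
          lo ≤ k.val ∧ k.val < hi) →
        ∀ i : Fin 3, ∃ k : Fin 32, cd ⟨i.val, by omega⟩ = .inr k ∧ lo ≤ k.val ∧ k.val < hi := by
      intro lo hi h2n hrange i
      obtain ⟨h1i, h2i⟩ := hboth i
      obtain ⟨k', hk', -, -⟩ := memF_bounds h2n h2i
      rw [hk'] at h1i h2i
      exact ⟨k', hk', hrange k' h1i h2i⟩
    rcases hclass with ⟨e1, e2⟩ | e1 | (⟨e1, e2⟩ | ⟨e1, e2⟩) | hclass | hclass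
    · -- n1 = 0, n2 = 2 : the 5 columns of cd sit in the 4-column anchor row
      exfalso
      refine pigeon_range (lo := 0) (hi := 4) (by omega) cd hdd (fun i => ?_)
      obtain ⟨k', hk', hb1, hb2⟩ := memF_bounds (by omega) (md i)
      rw [e2] at hb2
      simp [rhi] at hb2
      exact ⟨k', hk', by omega, hb2⟩
    · -- n1 = 2
      exfalso
      refine pigeon_range (lo := 0) (hi := 4) (by omega) cb hdb (fun i => ?_)
      obtain ⟨k', hk', hb1, hb2⟩ := memF_bounds (by omega) (mb i)
      rw [e1] at hb2
      simp [rhi] at hb2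
      exact ⟨k', hk', by omega, hb2⟩
    · -- n1 = 1, n2 = 3 : the good case
      have hsh : ∀ i : Fin 3, ∃ k : Fin 32, cd ⟨i.val, by omega⟩ = .inr k ∧
          4 ≤ k.val ∧ k.val < 7 := by
        refine hsharedBounds 4 7 (by omega) (fun k' hk1' hk2' => ?_)
        rcases memF_inr hk1' with ⟨h | h, hb⟩ | ⟨h, hb⟩ | ⟨h, hb⟩ | ⟨h, hb⟩ | ⟨h, hb⟩ |
          ⟨h, hb⟩ | ⟨h, hb⟩ <;> omega
      rcases hcx : cb ⟨5, by omega⟩ with w | k'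
      · have h : MemF L R n1.val (.inl w) := by
          have h := mb ⟨5, by omega⟩; rwa [hcx] at h
        rcases memF_inl h with ⟨e, -⟩ | ⟨-, hw⟩
        · omega
        · exact ⟨w, hw, rfl, congrArg Sum.inl (Fin.ext (by omega))⟩
      · exfalso
        have h : MemF L R n1.val (.inr k') := by
          have h := mb ⟨5, by omega⟩; rwa [hcx] at h
        have hb5 : 4 ≤ k'.val ∧ k'.val < 7 := by
          rcases memF_inr h with ⟨h' | h', hb⟩ | ⟨h', hb⟩ | ⟨h', hb⟩ | ⟨h', hb⟩ | ⟨h', hb⟩ |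
            ⟨h', hb⟩ | ⟨h', hb⟩ <;> omega
        have hdt : ∀ i j : Fin 4, i ≠ j →
            (fun i : Fin 4 => if h : i.val < 3 then cd ⟨i.val, by omega⟩ else cb ⟨5, by omega⟩) i ≠
            (fun i : Fin 4 => if h : i.val < 3 then cd ⟨i.val, by omega⟩ else cb ⟨5, by omega⟩) j := by
          intro i j hij
          dsimp only
          have hvij : i.val ≠ j.val := fun h => hij (Fin.ext h)
          by_cases hi : i.val < 3 <;> by_cases hj : j.val < 3 <;>
            simp only [hi, hj, dif_pos, dif_neg, dite_true, dite_false]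
          · exact hdd ⟨i.val, by omega⟩ ⟨j.val, by omega⟩ (fun h => hvij (by
              have := congrArg Fin.val h; simpa using this))
          · rw [← hm i.val (by omega) (by omega) hi]
            exact hdb ⟨i.val, by omega⟩ ⟨5, by omega⟩ (fun h => by
              have := congrArg Fin.val h; simp at this; omega)
          · rw [← hm j.val (by omega) (by omega) hj]
            exact fun h => hdb ⟨j.val, by omega⟩ ⟨5, by omega⟩ (fun hh => by
              have := congrArg Fin.val hh; simp at this; omega) h.symm
          · omega
        refine pigeon_range (lo := 4) (hi := 7) (by omega)
          (fun i : Fin 4 => if h : i.val < 3 then cd ⟨i.val, by omega⟩ else cb ⟨5, by omega⟩)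
          hdt (fun i => ?_)
        by_cases hi : i.val < 3
        · obtain ⟨k'', hk'', hbk⟩ := hsh ⟨i.val, hi⟩
          refine ⟨k'', ?_, hbk⟩
          simpa [hi] using hk''
        · refine ⟨k', ?_, hb5⟩
          simpa [hi] using hcx
    · -- n1 = 3 : the 6 columns of cb sit in the 5-column anchor
      exfalso
      refine pigeon_range (lo := 4) (hi := 9) (by omega) cb hdb (fun i => ?_)
      obtain ⟨k', hk', hb1, hb2⟩ := memF_bounds (by omega) (mb i)
      rw [e1] at hb1 hb2
      simp [rlo, rhi] at hb1 hb2
      exact ⟨k', hk', by omega, by omega⟩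
    · -- {4,5}
      exfalso
      have hsh := hsharedBounds 13 15 (by rcases hclass with ⟨-, e⟩ | ⟨-, e⟩ <;> omega)
        (fun k' hk1' hk2' => by
          rcases hclass with ⟨e1, e2⟩ | ⟨e1, e2⟩ <;>
            rcases memF_inr hk1' with ⟨h | h, hb⟩ | ⟨h, hb⟩ | ⟨h, hb⟩ | ⟨h, hb⟩ | ⟨h, hb⟩ |
              ⟨h, hb⟩ | ⟨h, hb⟩ <;>
            rcases memF_inr hk2' with ⟨h' | h', hb'⟩ | ⟨h', hb'⟩ | ⟨h', hb'⟩ | ⟨h', hb'⟩ |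
              ⟨h', hb'⟩ | ⟨h', hb'⟩ | ⟨h', hb'⟩ <;> omega)
      refine pigeon_range (lo := 13) (hi := 15) (by omega)
        (fun i : Fin 3 => cd ⟨i.val, by omega⟩)
        (fun i j hij => hdd _ _ (fun h => hij (Fin.ext (by
          have := congrArg Fin.val h; simpa using this)))) (fun i => hsh i)
    · -- {6,7}
      exfalso
      have hsh := hsharedBounds 25 26 (by rcases hclass with ⟨-, e⟩ | ⟨-, e⟩ <;> omega)
        (fun k' hk1' hk2' => by
          rcases hclass with ⟨e1, e2⟩ | ⟨e1, e2⟩ <;>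
            rcases memF_inr hk1' with ⟨h | h, hb⟩ | ⟨h, hb⟩ | ⟨h, hb⟩ | ⟨h, hb⟩ | ⟨h, hb⟩ |
              ⟨h, hb⟩ | ⟨h, hb⟩ <;>
            rcases memF_inr hk2' with ⟨h' | h', hb'⟩ | ⟨h', hb'⟩ | ⟨h', hb'⟩ | ⟨h', hb'⟩ |
              ⟨h', hb'⟩ | ⟨h', hb'⟩ | ⟨h', hb'⟩ <;> omega)
      refine pigeon_range (lo := 25) (hi := 26) (by omega)
        (fun i : Fin 3 => cd ⟨i.val, by omega⟩)
        (fun i j hij => hdd _ _ (fun h => hij (Fin.ext (by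
          have := congrArg Fin.val h; simpa using this)))) (fun i => hsh i)

lemma psiP_only (hpart : ∀ v : V, v ∈ L ↔ v ∉ R) {r1 r2 : Row V} (hne : r1 ≠ r2)
    (cb : Fin 6 → Col V) (cd : Fin 6 → Col V)
    (hdb : ∀ i j, i ≠ j → cb i ≠ cb j) (hdd : ∀ i j, i ≠ j → cd i ≠ cd j)
    (mb : ∀ i, Mem L R E r1 (cb i)) (md : ∀ i, Mem L R E r2 (cd i))
    (hm : ∀ (i : ℕ) (h1 : i < 6) (h2 : i < 6), i < 2 → cb ⟨i, h1⟩ = cd ⟨i, h2⟩) :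
    r1 = .inl 4 ∨ r1 = .inl 5 := by
  rcases r1 with n1 | ⟨pu, pv⟩
  swap
  · exact (capPair hpart (by omega) cb hdb mb).elim
  rcases r2 with n2 | ⟨pu, pv⟩
  swap
  · exact (capPair hpart (by omega) cd hdd md).elim
  have hvne : n1.val ≠ n2.val := fun h => hne (congrArg Sum.inl (Fin.ext h))
  have hboth : ∀ i : Fin 2, MemF L R n1.val (cd ⟨i.val, by omega⟩) ∧
      MemF L R n2.val (cd ⟨i.val, by omega⟩) := by
    intro i
    refine ⟨?_, md _⟩
    have h := mb ⟨i.val, by omega⟩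
    rwa [hm i.val (by omega) (by omega) (by omega)] at h
  rcases hc0 : cd ⟨0, by omega⟩ with w | k
  · obtain ⟨h1c0, h2c0⟩ := hboth ⟨0, by omega⟩
    rw [hc0] at h1c0 h2c0
    rcases memF_inl h1c0 with ⟨e1, hw1⟩ | ⟨e1, hw1⟩ <;>
      rcases memF_inl h2c0 with ⟨e2, hw2⟩ | ⟨e2, hw2⟩
    · omega
    · exact ((hpart w).1 hw1 hw2).elim
    · exact ((hpart w).1 hw2 hw1).elim
    · omega
  · obtain ⟨h1c0, h2c0⟩ := hboth ⟨0, by omega⟩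
    rw [hc0] at h1c0 h2c0
    have hk1 := memF_inr h1c0
    have hk2 := memF_inr h2c0
    have hclass : (n1.val = 0 ∧ n2.val = 2) ∨ (n1.val = 2) ∨
        ((n1.val = 1 ∧ n2.val = 3) ∨ (n1.val = 3 ∧ n2.val = 1)) ∨
        ((n1.val = 4 ∨ n1.val = 5) ∧ (n2.val = 4 ∨ n2.val = 5)) ∨
        ((n1.val = 6 ∧ n2.val = 7) ∨ (n1.val = 7 ∧ n2.val = 6)) := by
      rcases hk1 with ⟨h | h, hb⟩ | ⟨h, hb⟩ | ⟨h, hb⟩ | ⟨h, hb⟩ | ⟨h, hb⟩ | ⟨h, hb⟩ | ⟨h, hb⟩ <;>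
        rcases hk2 with ⟨h' | h', hb'⟩ | ⟨h', hb'⟩ | ⟨h', hb'⟩ | ⟨h', hb'⟩ | ⟨h', hb'⟩ |
          ⟨h', hb'⟩ | ⟨h', hb'⟩ <;> omega
    rcases hclass with ⟨e1, e2⟩ | e1 | (⟨e1, e2⟩ | ⟨e1, e2⟩) | ⟨e1, e2⟩ | hclass
    · -- n2 = 2 : 6 columns of cd in the 4-column anchor
      exfalso
      refine pigeon_range (lo := 0) (hi := 4) (by omega) cd hdd (fun i => ?_)
      obtain ⟨k', hk', hb1, hb2⟩ := memF_bounds (by omega) (md i)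
      rw [e2] at hb2
      simp [rhi] at hb2
      exact ⟨k', hk', by omega, hb2⟩
    · exfalso
      refine pigeon_range (lo := 0) (hi := 4) (by omega) cb hdb (fun i => ?_)
      obtain ⟨k', hk', hb1, hb2⟩ := memF_bounds (by omega) (mb i)
      rw [e1] at hb2
      simp [rhi] at hb2
      exact ⟨k', hk', by omega, hb2⟩
    · -- n2 = 3 : 6 columns of cd in the 5-column anchor
      exfalso
      refine pigeon_range (lo := 4) (hi := 9) (by omega) cd hdd (fun i => ?_)
      obtain ⟨k', hk', hb1, hb2⟩ := memF_bounds (by omega) (md i)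
      rw [e2] at hb1 hb2
      simp [rlo, rhi] at hb1 hb2
      exact ⟨k', hk', by omega, by omega⟩
    · -- n1 = 3
      exfalso
      refine pigeon_range (lo := 4) (hi := 9) (by omega) cb hdb (fun i => ?_)
      obtain ⟨k', hk', hb1, hb2⟩ := memF_bounds (by omega) (mb i)
      rw [e1] at hb1 hb2
      simp [rlo, rhi] at hb1 hb2
      exact ⟨k', hk', by omega, by omega⟩
    · -- {4,5} : goal
      rcases e1 with e1 | e1
      · exact Or.inl (congrArg Sum.inl (Fin.ext e1))
      · exact Or.inr (congrArg Sum.inl (Fin.ext e1))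
    · -- {6,7} : two distinct shared columns in a single slot
      exfalso
      have hsh : ∀ i : Fin 2, ∃ k : Fin 32, cd ⟨i.val, by omega⟩ = .inr k ∧
          25 ≤ k.val ∧ k.val < 26 := by
        intro i
        obtain ⟨h1i, h2i⟩ := hboth i
        obtain ⟨k', hk', -, -⟩ := memF_bounds (n := n2.val)
          (by rcases hclass with ⟨-, e⟩ | ⟨-, e⟩ <;> omega) h2i
        rw [hk'] at h1i h2i
        refine ⟨k', hk', ?_⟩
        rcases hclass with ⟨e1, e2⟩ | ⟨e1, e2⟩ <;>
          rcases memF_inr h1i with ⟨h | h, hb⟩ | ⟨h, hb⟩ | ⟨h, hb⟩ | ⟨h, hb⟩ | ⟨h, hb⟩ |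
            ⟨h, hb⟩ | ⟨h, hb⟩ <;>
          rcases memF_inr h2i with ⟨h' | h', hb'⟩ | ⟨h', hb'⟩ | ⟨h', hb'⟩ | ⟨h', hb'⟩ |
            ⟨h', hb'⟩ | ⟨h', hb'⟩ | ⟨h', hb'⟩ <;> omega
      refine pigeon_range (lo := 25) (hi := 26) (by omega)
        (fun i : Fin 2 => cd ⟨i.val, by omega⟩)
        (fun i j hij => hdd _ _ (fun h => hij (Fin.ext (by
          have := congrArg Fin.val h; simpa using this)))) (fun i => hsh i)

lemma psiN_only (hpart : ∀ v : V, v ∈ L ↔ v ∉ R) {r1 r2 : Row V} (hne : r1 ≠ r2)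
    (cb : Fin 7 → Col V) (cd : Fin 7 → Col V)
    (hdb : ∀ i j, i ≠ j → cb i ≠ cb j) (hdd : ∀ i j, i ≠ j → cd i ≠ cd j)
    (mb : ∀ i, Mem L R E r1 (cb i)) (md : ∀ i, Mem L R E r2 (cd i))
    (hm : ∀ (i : ℕ) (h1 : i < 7) (h2 : i < 7), i < 1 → cb ⟨i, h1⟩ = cd ⟨i, h2⟩) :
    r1 = .inl 6 ∨ r1 = .inl 7 := by
  rcases r1 with n1 | ⟨pu, pv⟩
  swap
  · exact (capPair hpart (by omega) cb hdb mb).elim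
  rcases r2 with n2 | ⟨pu, pv⟩
  swap
  · exact (capPair hpart (by omega) cd hdd md).elim
  have hvne : n1.val ≠ n2.val := fun h => hne (congrArg Sum.inl (Fin.ext h))
  have hc0m : MemF L R n1.val (cd ⟨0, by omega⟩) ∧ MemF L R n2.val (cd ⟨0, by omega⟩) := by
    refine ⟨?_, md _⟩
    have h := mb ⟨0, by omega⟩
    rwa [hm 0 (by omega) (by omega) (by omega)] at h
  rcases hc0 : cd ⟨0, by omega⟩ with w | k
  · obtain ⟨h1c0, h2c0⟩ := hc0m
    rw [hc0] at h1c0 h2c0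
    rcases memF_inl h1c0 with ⟨e1, hw1⟩ | ⟨e1, hw1⟩ <;>
      rcases memF_inl h2c0 with ⟨e2, hw2⟩ | ⟨e2, hw2⟩
    · omega
    · exact ((hpart w).1 hw1 hw2).elim
    · exact ((hpart w).1 hw2 hw1).elim
    · omega
  · obtain ⟨h1c0, h2c0⟩ := hc0m
    rw [hc0] at h1c0 h2c0
    have hk1 := memF_inr h1c0
    have hk2 := memF_inr h2c0
    have hclass : (n1.val = 0 ∧ n2.val = 2) ∨ (n1.val = 2) ∨
        ((n1.val = 1 ∧ n2.val = 3) ∨ (n1.val = 3 ∧ n2.val = 1)) ∨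
        (n1.val = 4 ∨ n1.val = 5) ∨
        ((n1.val = 6 ∨ n1.val = 7) ∧ (n2.val = 6 ∨ n2.val = 7)) := by
      rcases hk1 with ⟨h | h, hb⟩ | ⟨h, hb⟩ | ⟨h, hb⟩ | ⟨h, hb⟩ | ⟨h, hb⟩ | ⟨h, hb⟩ | ⟨h, hb⟩ <;>
        rcases hk2 with ⟨h' | h', hb'⟩ | ⟨h', hb'⟩ | ⟨h', hb'⟩ | ⟨h', hb'⟩ | ⟨h', hb'⟩ |
          ⟨h', hb'⟩ | ⟨h', hb'⟩ <;> omega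
    rcases hclass with ⟨e1, e2⟩ | e1 | (⟨e1, e2⟩ | ⟨e1, e2⟩) | e1 | ⟨e1, e2⟩
    · exfalso
      refine pigeon_range (lo := 0) (hi := 4) (by omega) cd hdd (fun i => ?_)
      obtain ⟨k', hk', hb1, hb2⟩ := memF_bounds (by omega) (md i)
      rw [e2] at hb2
      simp [rhi] at hb2
      exact ⟨k', hk', by omega, hb2⟩
    · exfalso
      refine pigeon_range (lo := 0) (hi := 4) (by omega) cb hdb (fun i => ?_)
      obtain ⟨k', hk', hb1, hb2⟩ := memF_bounds (by omega) (mb i)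
      rw [e1] at hb2
      simp [rhi] at hb2
      exact ⟨k', hk', by omega, hb2⟩
    · exfalso
      refine pigeon_range (lo := 4) (hi := 9) (by omega) cd hdd (fun i => ?_)
      obtain ⟨k', hk', hb1, hb2⟩ := memF_bounds (by omega) (md i)
      rw [e2] at hb1 hb2
      simp [rlo, rhi] at hb1 hb2
      exact ⟨k', hk', by omega, by omega⟩
    · exfalso
      refine pigeon_range (lo := 4) (hi := 9) (by omega) cb hdb (fun i => ?_)
      obtain ⟨k', hk', hb1, hb2⟩ := memF_bounds (by omega) (mb i)
      rw [e1] at hb1 hb2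
      simp [rlo, rhi] at hb1 hb2
      exact ⟨k', hk', by omega, by omega⟩
    · -- n1 ∈ {4,5} : a 7-tuple in a 6-column row
      exfalso
      rcases e1 with e1 | e1
      · refine pigeon_range (lo := 9) (hi := 15) (by omega) cb hdb (fun i => ?_)
        obtain ⟨k', hk', hb1, hb2⟩ := memF_bounds (by omega) (mb i)
        rw [e1] at hb1 hb2
        simp [rlo, rhi] at hb1 hb2
        exact ⟨k', hk', by omega, by omega⟩
      · refine pigeon_range (lo := 13) (hi := 19) (by omega) cb hdb (fun i => ?_)
        obtain ⟨k', hk', hb1, hb2⟩ := memF_bounds (by omega) (mb i)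
        rw [e1] at hb1 hb2
        simp [rlo, rhi] at hb1 hb2
        exact ⟨k', hk', by omega, by omega⟩
    · -- {6,7} : goal
      rcases e1 with e1 | e1
      · exact Or.inl (congrArg Sum.inl (Fin.ext e1))
      · exact Or.inr (congrArg Sum.inl (Fin.ext e1))

variable {hpart : ∀ v : V, v ∈ L ↔ v ∉ R}

lemma psiL_char (hpa : ∀ v : V, v ∈ L ↔ v ∉ R) {x : Bt L R E}
    (h : PsiL (Pr L R E) (Qr L R E) x) : ∃ u, u ∈ L ∧ x = iota L R E hpa u := by
  obtain ⟨bt, dt, hreal⟩ := h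
  obtain ⟨hPb, hPd, hPbd, hQb, hQd, hQm⟩ := hreal
  have hrowb : ∀ i : Fin 5, ((Fin.snoc bt x : Fin 5 → Bt L R E) i).val.1 = x.val.1 := by
    intro i
    have h := hPb i (Fin.last 4)
    rw [Fin.snoc_last] at h
    exact h
  have hner : x.val.1 ≠ (dt 0).val.1 := fun hc =>
    hPbd (by omega) (by omega) ((hrowb ⟨0, by omega⟩).trans hc)
  obtain ⟨u, hu, hcx, hr1⟩ := psiL_only hpa hner
    (fun i => ((Fin.snoc bt x : Fin 5 → Bt L R E) i).val.2) (fun i => (dt i).val.2)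
    (fun i j hij heq => hQb i j hij heq)
    (fun i j hij heq => hQd i j hij heq)
    (fun i => by have h := ((Fin.snoc bt x : Fin 5 → Bt L R E) i).2; rwa [hrowb i] at h)
    (fun i => by have h := (dt i).2; rwa [hPd i 0] at h)
    (fun i h1 h2 h3 => hQm i h1 h2 h3)
  have hxcol : x.val.2 = .inl u := by
    have h2 : ((Fin.snoc bt x : Fin 5 → Bt L R E) (Fin.last 4)).val.2 = .inl u := hcx
    rwa [Fin.snoc_last] at h2
  refine ⟨u, hu, ?_⟩
  rw [iota_left hu]
  exact Subtype.ext (Prod.ext hr1 hxcol)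

lemma psiR_char (hpa : ∀ v : V, v ∈ L ↔ v ∉ R) {x : Bt L R E}
    (h : PsiR (Pr L R E) (Qr L R E) x) : ∃ v, v ∈ R ∧ x = iota L R E hpa v := by
  obtain ⟨bt, dt, hreal⟩ := h
  obtain ⟨hPb, hPd, hPbd, hQb, hQd, hQm⟩ := hreal
  have hrowb : ∀ i : Fin 6, ((Fin.snoc bt x : Fin 6 → Bt L R E) i).val.1 = x.val.1 := by
    intro i
    have h := hPb i (Fin.last 5)
    rw [Fin.snoc_last] at h
    exact h
  have hner : x.val.1 ≠ (dt 0).val.1 := fun hc =>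
    hPbd (by omega) (by omega) ((hrowb ⟨0, by omega⟩).trans hc)
  obtain ⟨v, hv, hcx, hr1⟩ := psiR_only hpa hner
    (fun i => ((Fin.snoc bt x : Fin 6 → Bt L R E) i).val.2) (fun i => (dt i).val.2)
    (fun i j hij heq => hQb i j hij heq)
    (fun i j hij heq => hQd i j hij heq)
    (fun i => by have h := ((Fin.snoc bt x : Fin 6 → Bt L R E) i).2; rwa [hrowb i] at h)
    (fun i => by have h := (dt i).2; rwa [hPd i 0] at h)
    (fun i h1 h2 h3 => hQm i h1 h2 h3)
  have hxcol : x.val.2 = .inl v := by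
    have h2 : ((Fin.snoc bt x : Fin 6 → Bt L R E) (Fin.last 5)).val.2 = .inl v := hcx
    rwa [Fin.snoc_last] at h2
  refine ⟨v, hv, ?_⟩
  rw [iota_right (hpart := hpa) hv]
  exact Subtype.ext (Prod.ext hr1 hxcol)

lemma psiP_imp (hpa : ∀ v : V, v ∈ L ↔ v ∉ R) {x : Bt L R E}
    (h : PsiP (Pr L R E) (Qr L R E) x) : x.val.1 = .inl 4 ∨ x.val.1 = .inl 5 := by
  obtain ⟨bt, dt, hc | hs⟩ := h
  · obtain ⟨hPb, hPd, hPbd, hQb, hQd, hQm⟩ := hc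
    have hrowb : ∀ i : Fin 6, ((Fin.cons x bt : Fin 6 → Bt L R E) i).val.1 = x.val.1 := by
      intro i
      have h := hPb i 0
      exact h
    have hner : x.val.1 ≠ (dt 0).val.1 := fun hc =>
      hPbd (by omega) (by omega) ((hrowb ⟨0, by omega⟩).trans hc)
    exact psiP_only hpa hner
      (fun i => ((Fin.cons x bt : Fin 6 → Bt L R E) i).val.2) (fun i => (dt i).val.2)
      (fun i j hij heq => hQb i j hij heq)
      (fun i j hij heq => hQd i j hij heq)
      (fun i => by have h := ((Fin.cons x bt : Fin 6 → Bt L R E) i).2; rwa [hrowb i] at h)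
      (fun i => by have h := (dt i).2; rwa [hPd i 0] at h)
      (fun i h1 h2 h3 => hQm i h1 h2 h3)
  · obtain ⟨hPb, hPd, hPbd, hQb, hQd, hQm⟩ := hs
    have hrowb : ∀ i : Fin 6, ((Fin.snoc bt x : Fin 6 → Bt L R E) i).val.1 = x.val.1 := by
      intro i
      have h := hPb i (Fin.last 5)
      rw [Fin.snoc_last] at h
      exact h
    have hner : x.val.1 ≠ (dt 0).val.1 := fun hc =>
      hPbd (by omega) (by omega) ((hrowb ⟨0, by omega⟩).trans hc)
    exact psiP_only hpa hner
      (fun i => ((Fin.snoc bt x : Fin 6 → Bt L R E) i).val.2) (fun i => (dt i).val.2)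
      (fun i j hij heq => hQb i j hij heq)
      (fun i j hij heq => hQd i j hij heq)
      (fun i => by have h := ((Fin.snoc bt x : Fin 6 → Bt L R E) i).2; rwa [hrowb i] at h)
      (fun i => by have h := (dt i).2; rwa [hPd i 0] at h)
      (fun i h1 h2 h3 => hQm i h1 h2 h3)

lemma psiN_imp (hpa : ∀ v : V, v ∈ L ↔ v ∉ R) {x : Bt L R E}
    (h : PsiN (Pr L R E) (Qr L R E) x) : x.val.1 = .inl 6 ∨ x.val.1 = .inl 7 := by
  obtain ⟨bt, dt, hc | hs⟩ := h
  · obtain ⟨hPb, hPd, hPbd, hQb, hQd, hQm⟩ := hc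
    have hrowb : ∀ i : Fin 7, ((Fin.cons x bt : Fin 7 → Bt L R E) i).val.1 = x.val.1 := by
      intro i
      have h := hPb i 0
      exact h
    have hner : x.val.1 ≠ (dt 0).val.1 := fun hc =>
      hPbd (by omega) (by omega) ((hrowb ⟨0, by omega⟩).trans hc)
    exact psiN_only hpa hner
      (fun i => ((Fin.cons x bt : Fin 7 → Bt L R E) i).val.2) (fun i => (dt i).val.2)
      (fun i j hij heq => hQb i j hij heq)
      (fun i j hij heq => hQd i j hij heq)
      (fun i => by have h := ((Fin.cons x bt : Fin 7 → Bt L R E) i).2; rwa [hrowb i] at h)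
      (fun i => by have h := (dt i).2; rwa [hPd i 0] at h)
      (fun i h1 h2 h3 => hQm i h1 h2 h3)
  · obtain ⟨hPb, hPd, hPbd, hQb, hQd, hQm⟩ := hs
    have hrowb : ∀ i : Fin 7, ((Fin.snoc bt x : Fin 7 → Bt L R E) i).val.1 = x.val.1 := by
      intro i
      have h := hPb i (Fin.last 6)
      rw [Fin.snoc_last] at h
      exact h
    have hner : x.val.1 ≠ (dt 0).val.1 := fun hc =>
      hPbd (by omega) (by omega) ((hrowb ⟨0, by omega⟩).trans hc)
    exact psiN_only hpa hner
      (fun i => ((Fin.snoc bt x : Fin 7 → Bt L R E) i).val.2) (fun i => (dt i).val.2)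
      (fun i j hij heq => hQb i j hij heq)
      (fun i j hij heq => hQd i j hij heq)
      (fun i => by have h := ((Fin.snoc bt x : Fin 7 → Bt L R E) i).2; rwa [hrowb i] at h)
      (fun i => by have h := (dt i).2; rwa [hPd i 0] at h)
      (fun i h1 h2 h3 => hQm i h1 h2 h3)

lemma row_two (hpa : ∀ v : V, v ∈ L ↔ v ∉ R) {u v : V} (hu : u ∈ L) (hv : v ∈ R) {r : Row V}
    (h1 : Mem L R E r (.inl u)) (h2 : Mem L R E r (.inl v)) : r = .inr (u, v) := by
  rcases r with n | ⟨pu, pv⟩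
  · exfalso
    rcases memF_inl h1 with ⟨e1, hw1⟩ | ⟨e1, hw1⟩ <;>
      rcases memF_inl h2 with ⟨e2, hw2⟩ | ⟨e2, hw2⟩
    · exact (hpa v).1 hw2 hv
    · omega
    · omega
    · exact (hpa u).1 hu hw1
  · obtain ⟨hpu, hpv, hc1⟩ := h1
    obtain ⟨-, -, hc2⟩ := h2
    have he1 : u = pu := by
      rcases hc1 with h | h | ⟨-, h⟩ | ⟨-, h⟩
      · exact Sum.inl.inj h
      · exact ((hpa u).1 hu (Sum.inl.inj h ▸ hpv)).elim
      · exact (Sum.inl_ne_inr h).elim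
      · exact (Sum.inl_ne_inr h).elim
    have he2 : v = pv := by
      rcases hc2 with h | h | ⟨-, h⟩ | ⟨-, h⟩
      · exact ((hpa v).1 (Sum.inl.inj h ▸ hpu) hv).elim
      · exact Sum.inl.inj h
      · exact (Sum.inl_ne_inr h).elim
      · exact (Sum.inl_ne_inr h).elim
    rw [he1, he2]

lemma condA_iff (hpa : ∀ v : V, v ∈ L ↔ v ∉ R) {u v : V} (hu : u ∈ L) (hv : v ∈ R) :
    (∃ uL uR uE uP : Bt L R E, PsiP (Pr L R E) (Qr L R E) uP ∧
      Qr L R E (iota L R E hpa u) uL ∧ Qr L R E (iota L R E hpa v) uR ∧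
      (Pr L R E uL uR ∧ Pr L R E uL uE ∧ Pr L R E uR uE) ∧ Qr L R E uE uP) ↔ E u v := by
  constructor
  · rintro ⟨uL, uR, uE, uP, hPsi, hQL, hQR, ⟨hLR, hLE, hRE⟩, hQEP⟩
    have hcolL : uL.val.2 = .inl u := hQL.symm.trans (iota_col u)
    have hcolR : uR.val.2 = .inl v := hQR.symm.trans (iota_col v)
    have mL : Mem L R E uL.val.1 (.inl u) := by have h := uL.2; rwa [hcolL] at h
    have mR : Mem L R E uL.val.1 (.inl v) := by
      have h := uR.2; rw [hcolR] at h; rwa [← hLR] at h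
    have hrow : uL.val.1 = .inr (u, v) := row_two hpa hu hv mL mR
    have hErow : uE.val.1 = .inr (u, v) := hLE.symm.trans hrow
    have hE2 := uE.2
    rw [hErow] at hE2
    obtain ⟨-, -, hc⟩ := hE2
    have hProw := psiP_imp (E := E) hpa hPsi
    have hPcol : ∃ kk : Fin 32, uP.val.2 = .inr kk ∧ 9 ≤ kk.val ∧ kk.val < 19 := by
      have h := uP.2
      rcases hProw with hP | hP <;> rw [hP] at h
      · obtain ⟨kk, hkk, hb1, hb2⟩ := memF_bounds (by decide) h
        refine ⟨kk, hkk, ?_⟩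
        rw [show ((4 : Fin 8) : ℕ) = 4 from rfl] at hb1 hb2
        simp [rlo, rhi] at hb1 hb2
        omega
      · obtain ⟨kk, hkk, hb1, hb2⟩ := memF_bounds (by decide) h
        refine ⟨kk, hkk, ?_⟩
        rw [show ((5 : Fin 8) : ℕ) = 5 from rfl] at hb1 hb2
        simp [rlo, rhi] at hb1 hb2
        omega
    obtain ⟨kk, hkk, hbk⟩ := hPcol
    have hQEP' : uE.val.2 = .inr kk := hQEP.trans hkk
    rcases hc with h | h | ⟨hE, -⟩ | ⟨-, h⟩
    · rw [h] at hQEP'; exact (Sum.inl_ne_inr hQEP').elim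
    · rw [h] at hQEP'; exact (Sum.inl_ne_inr hQEP').elim
    · exact hE
    · rw [h] at hQEP'
      have : (25 : Fin 32) = kk := Sum.inr.inj hQEP'
      have h25 : kk.val = 25 := by rw [← this]; rfl
      omega
  · intro hE
    refine ⟨⟨(.inr (u, v), .inl u), memPairL hu hv⟩, ⟨(.inr (u, v), .inl v), memPairR hu hv⟩,
      ⟨(.inr (u, v), .inr 13), memPairE hu hv hE⟩,
      ⟨(.inl 4, .inr 13), mem4 13 (by decide) (by decide)⟩,
      psiP_pos _, ?_, ?_, ⟨rfl, rfl, rfl⟩, rfl⟩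
    · exact iota_col u
    · exact iota_col v

lemma condB_iff (hpa : ∀ v : V, v ∈ L ↔ v ∉ R) {u v : V} (hu : u ∈ L) (hv : v ∈ R) :
    (∃ uL uR uE uN : Bt L R E, PsiN (Pr L R E) (Qr L R E) uN ∧
      Qr L R E (iota L R E hpa u) uL ∧ Qr L R E (iota L R E hpa v) uR ∧
      (Pr L R E uL uR ∧ Pr L R E uL uE ∧ Pr L R E uR uE) ∧ Qr L R E uE uN) ↔ ¬ E u v := by
  constructor
  · rintro ⟨uL, uR, uE, uN, hPsi, hQL, hQR, ⟨hLR, hLE, hRE⟩, hQEN⟩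
    have hcolL : uL.val.2 = .inl u := hQL.symm.trans (iota_col u)
    have hcolR : uR.val.2 = .inl v := hQR.symm.trans (iota_col v)
    have mL : Mem L R E uL.val.1 (.inl u) := by have h := uL.2; rwa [hcolL] at h
    have mR : Mem L R E uL.val.1 (.inl v) := by
      have h := uR.2; rw [hcolR] at h; rwa [← hLR] at h
    have hrow : uL.val.1 = .inr (u, v) := row_two hpa hu hv mL mR
    have hErow : uE.val.1 = .inr (u, v) := hLE.symm.trans hrow
    have hE2 := uE.2
    rw [hErow] at hE2
    obtain ⟨-, -, hc⟩ := hE2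
    have hNrow := psiN_imp (E := E) hpa hPsi
    have hNcol : ∃ kk : Fin 32, uN.val.2 = .inr kk ∧ 19 ≤ kk.val ∧ kk.val < 32 := by
      have h := uN.2
      rcases hNrow with hN | hN <;> rw [hN] at h
      · obtain ⟨kk, hkk, hb1, hb2⟩ := memF_bounds (by decide) h
        refine ⟨kk, hkk, ?_⟩
        rw [show ((6 : Fin 8) : ℕ) = 6 from rfl] at hb1 hb2
        simp [rlo, rhi] at hb1 hb2
        omega
      · obtain ⟨kk, hkk, hb1, hb2⟩ := memF_bounds (by decide) h
        refine ⟨kk, hkk, ?_⟩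
        rw [show ((7 : Fin 8) : ℕ) = 7 from rfl] at hb1 hb2
        simp [rlo, rhi] at hb1 hb2
        omega
    obtain ⟨kk, hkk, hbk⟩ := hNcol
    have hQEN' : uE.val.2 = .inr kk := hQEN.trans hkk
    rcases hc with h | h | ⟨-, h⟩ | ⟨hnE, -⟩
    · rw [h] at hQEN'; exact (Sum.inl_ne_inr hQEN').elim
    · rw [h] at hQEN'; exact (Sum.inl_ne_inr hQEN').elim
    · rw [h] at hQEN'
      have : (13 : Fin 32) = kk := Sum.inr.inj hQEN'
      have h13 : kk.val = 13 := by rw [← this]; rfl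
      omega
    · exact hnE
  · intro hE
    refine ⟨⟨(.inr (u, v), .inl u), memPairL hu hv⟩, ⟨(.inr (u, v), .inl v), memPairR hu hv⟩,
      ⟨(.inr (u, v), .inr 25), memPairN hu hv hE⟩,
      ⟨(.inl 6, .inr 25), mem6 25 (by decide) (by decide)⟩,
      psiN_pos _, ?_, ?_, ⟨rfl, rfl, rfl⟩, rfl⟩
    · exact iota_col u
    · exact iota_col v

lemma two_more [Finite V] (hR3 : 3 ≤ Nat.card R) {v : V} (hv : v ∈ R) :
    ∃ v1 v2, v1 ∈ R ∧ v2 ∈ R ∧ v1 ≠ v2 ∧ v1 ≠ v ∧ v2 ≠ v := by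
  have hfin : R.Finite := Set.toFinite R
  have hcard : R.ncard = Nat.card R := rfl
  have h1 : 1 < (R \ {v}).ncard := by
    have h2 := Set.ncard_diff_singleton_of_mem hv
    omega
  obtain ⟨v1, hv1, v2, hv2, h12⟩ := (Set.one_lt_ncard hfin.diff).1 h1
  exact ⟨v1, v2, hv1.1, hv2.1, h12, hv1.2, hv2.2⟩

end Main
end BipEnc

/-- Semantic content of the parameter-free Σ₁-interpretation of finite bipartite graphs in
finite models of two equivalences. -/
theorem bipartite_into_two_equivalences_param_free
    (V : Type) [Finite V] (L R : Set V) (E : V → V → Prop)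
    (hpart : ∀ v : V, v ∈ L ↔ v ∉ R)
    (hL : 3 ≤ Nat.card L) (hR : 3 ≤ Nat.card R)
    (hE : ∀ u v : V, E u v → u ∈ L ∧ v ∈ R) :
    ∃ (B : Type) (_ : Finite B) (P Q : B → B → Prop)
      (_ : Equivalence P) (_ : Equivalence Q) (ι : V → B),
      Function.Injective ι ∧
      -- (i) Ψ_L defines the image of the left part and Ψ_R the image of the right part
      {b : B | PsiL P Q b} = ι '' L ∧
      {b : B | PsiR P Q b} = ι '' R ∧
      -- (ii) exactly one of (a), (b) holds, and (a) holds iff E(u,v)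
      (∀ u ∈ L, ∀ v ∈ R,
        Xor'
          (∃ uL uR uE uP : B, PsiP P Q uP ∧ Q (ι u) uL ∧ Q (ι v) uR ∧
            (P uL uR ∧ P uL uE ∧ P uR uE) ∧ Q uE uP)
          (∃ uL uR uE uN : B, PsiN P Q uN ∧ Q (ι u) uL ∧ Q (ι v) uR ∧
            (P uL uR ∧ P uL uE ∧ P uR uE) ∧ Q uE uN) ∧
        (E u v ↔
          (∃ uL uR uE uP : B, PsiP P Q uP ∧ Q (ι u) uL ∧ Q (ι v) uR ∧
            (P uL uR ∧ P uL uE ∧ P uR uE) ∧ Q uE uP))) := by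
  classical
  refine ⟨BipEnc.Bt L R E, inferInstance, BipEnc.Pr L R E, BipEnc.Qr L R E,
    ⟨fun _ => rfl, fun h => h.symm, fun h1 h2 => h1.trans h2⟩,
    ⟨fun _ => rfl, fun h => h.symm, fun h1 h2 => h1.trans h2⟩,
    BipEnc.iota L R E hpart, ?_, ?_, ?_, ?_⟩
  · intro a b h
    have h2 := congrArg (fun z => (z : BipEnc.Bt L R E).val.2) h
    simp only [BipEnc.iota_col] at h2
    exact Sum.inl.inj h2
  · ext x
    simp only [Set.mem_setOf_eq, Set.mem_image]
    constructor
    · intro h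
      obtain ⟨u, hu, hx⟩ := BipEnc.psiL_char hpart h
      exact ⟨u, hu, hx.symm⟩
    · rintro ⟨u, hu, rfl⟩
      exact BipEnc.psiL_pos (hpart := hpart) hu
  · ext x
    simp only [Set.mem_setOf_eq, Set.mem_image]
    constructor
    · intro h
      obtain ⟨v, hv, hx⟩ := BipEnc.psiR_char hpart h
      exact ⟨v, hv, hx.symm⟩
    · rintro ⟨v, hv, rfl⟩
      obtain ⟨v1, v2, hv1, hv2, h12, h1v, h2v⟩ := BipEnc.two_more hR hv
      exact BipEnc.psiR_pos (hpart := hpart) hv hv1 hv2 h12 h1v h2v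
  · intro u hu v hv
    have hA := BipEnc.condA_iff (E := E) hpart hu hv
    have hB := BipEnc.condB_iff (E := E) hpart hu hv
    refine ⟨?_, ⟨fun hEuv => hA.2 hEuv, fun ha => hA.1 ha⟩⟩
    by_cases hEuv : E u v
    · exact Or.inl ⟨hA.2 hEuv, fun hb => (hB.1 hb) hEuv⟩
    · exact Or.inr ⟨hB.2 hEuv, fun ha => hEuv (hA.1 ha)⟩
end

section
/- For every finite nonempty set A equipped with two equivalence relations P and Q, there exist a finite set B equipped with a strict linear order < and an equivalence relation ≈, an element a* ∈ B, and an injective map ι : A → B such that: (i) the image of ι equals {b ∈ B : ∃ z0, z1, z2 ∈ B, z0 ≈ z1 ∧ z1 ≈ z2 ∧ z0 < a* < z1 < b < z2}; (ii) for all a1, a2 ∈ A: Q(a1, a2) iff ι a1 ≈ ι a2; (iii) for all a1, a2 ∈ A: P(a1, a2) iff there exist z0, z1, z2 ∈ B with z0 ≈ z1 ∧ z1 ≈ z2, z0 < a* < z1 < ι a1 < z2 and z1 < ι a2 < z2; (iv) for all a1, a2 ∈ A: ¬P(a1, a2) iff there exist z, z0 ∈ B with z0 ≈ z, ¬(a*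 < z0), and either ι a1 < z < ι a2 or ι a2 < z < ι a1. Moreover, the construction can be carried out so that in addition a* is the unique element b ∈ B satisfying both: no x ∈ B with x > b has x ≈ b, and any x1, x2 ∈ B with x1 < x2 < b satisfy ¬(x1 ≈ x2). -/
namespace TwoEqAux

variable {A : Type} {sP : Setoid A}

/-- The carrier: markers (one per P-class), the parameter `star`,
delimiters (left/right per P-class), and copies of elements of `A`. -/
abbrev BB (A : Type) (sP : Setoid A) : Type :=
  (Quotient sP ⊕ Unit) ⊕ ((Quotient sP × Bool) ⊕ A)

def mkM (c : Quotient sP) : BB A sP := Sum.inl (Sum.inl c)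
def mkS : BB A sP := Sum.inl (Sum.inr ())
def mkL (c : Quotient sP) : BB A sP := Sum.inr (Sum.inl (c, false))
def mkR (c : Quotient sP) : BB A sP := Sum.inr (Sum.inl (c, true))
def mkE (a : A) : BB A sP := Sum.inr (Sum.inr a)

variable (sP) in
/-- numeric key (triple, compared lexicographically) -/
def kk (cl : Quotient sP → ℕ) (pos : A → ℕ) (n : ℕ) : BB A sP → ℕ × ℕ × ℕ
  | Sum.inl (Sum.inl c) => (0, cl c, 0)
  | Sum.inl (Sum.inr _) => (1, 0, 0)
  | Sum.inr (Sum.inl (c, false)) => (2, cl c, 0)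
  | Sum.inr (Sum.inl (c, true)) => (2, cl c, n+1)
  | Sum.inr (Sum.inr a) => (2, cl (Quotient.mk sP a), pos a + 1)

variable (sP) in
def blt (cl : Quotient sP → ℕ) (pos : A → ℕ) (n : ℕ) (x y : BB A sP) : Prop :=
  (kk sP cl pos n x).1 < (kk sP cl pos n y).1 ∨
  ((kk sP cl pos n x).1 = (kk sP cl pos n y).1 ∧
    ((kk sP cl pos n x).2.1 < (kk sP cl pos n y).2.1 ∨
     ((kk sP cl pos n x).2.1 = (kk sP cl pos n y).2.1 ∧
      (kk sP cl pos n x).2.2 < (kk sP cl pos n y).2.2)))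

variable (sP) in
def tg (sQ : Setoid A) : BB A sP → Quotient sP ⊕ (Unit ⊕ Quotient sQ)
  | Sum.inl (Sum.inl c) => Sum.inl c
  | Sum.inl (Sum.inr _) => Sum.inr (Sum.inl ())
  | Sum.inr (Sum.inl (c, _)) => Sum.inl c
  | Sum.inr (Sum.inr a) => Sum.inr (Sum.inr (Quotient.mk sQ a))

section lemmas

variable (cl : Quotient sP → ℕ) (pos : A → ℕ) (n : ℕ) (sQ : Setoid A)

local notation x " ≺ " y => blt sP cl pos n x y

theorem blt_irrefl (x : BB A sP) : ¬ (x ≺ x) := by simp [blt]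

theorem blt_trans {x y z : BB A sP} (h1 : x ≺ y) (h2 : y ≺ z) : x ≺ z := by
  simp only [blt] at *; omega

theorem kk_inj (hcl : Function.Injective cl) (hpos : Function.Injective pos)
    (hb : ∀ a, pos a < n) : Function.Injective (kk sP cl pos n) := by
  intro x y h
  rcases x with ((c|u)|(⟨c,(_|_)⟩|a)) <;> rcases y with ((c'|u')|(⟨c',(_|_)⟩|a')) <;>
    simp_all [kk, Prod.ext_iff] <;>
    first
      | (exact hcl h)
      | (exact hcl h.1)
      | (exact hpos h)
      | (exact hpos h.2)
      | (have := hb a; omega)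
      | (have := hb a'; omega)
      | omega

theorem blt_trichotomy (hcl : Function.Injective cl) (hpos : Function.Injective pos)
    (hb : ∀ a, pos a < n) (x y : BB A sP) : (x ≺ y) ∨ x = y ∨ (y ≺ x) := by
  rcases eq_or_ne (kk sP cl pos n x) (kk sP cl pos n y) with h | h
  · exact Or.inr (Or.inl (kk_inj cl pos n hcl hpos hb h))
  · have h2 : ¬((kk sP cl pos n x).1 = (kk sP cl pos n y).1 ∧
        (kk sP cl pos n x).2.1 = (kk sP cl pos n y).2.1 ∧
        (kk sP cl pos n x).2.2 = (kk sP cl pos n y).2.2) := by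
      rintro ⟨h1, h2, h3⟩
      exact h (Prod.ext h1 (Prod.ext h2 h3))
    have : (x ≺ y) ∨ (y ≺ x) := by simp only [blt]; omega
    tauto

theorem lt_star_iff {z : BB A sP} : (z ≺ mkS) ↔ ∃ c, z = mkM c := by
  constructor
  · rcases z with ((c|u)|(⟨c,(_|_)⟩|a)) <;> simp [blt, kk, mkS, mkM]
  · rintro ⟨c, rfl⟩; simp [blt, kk, mkS, mkM]

theorem not_star_lt_iff {z : BB A sP} : ¬ (mkS ≺ z) ↔ (∃ c, z = mkM c) ∨ z = mkS := by
  rcases z with ((c|u)|(⟨c,(_|_)⟩|a)) <;> simp [blt, kk, mkS, mkM]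

theorem tg_inl {z : BB A sP} {c : Quotient sP} :
    tg sP sQ z = Sum.inl c ↔ z = mkM c ∨ z = mkL c ∨ z = mkR c := by
  rcases z with ((c'|u)|(⟨c',(_|_)⟩|a)) <;>
    simp [tg, mkM, mkL, mkR, Prod.ext_iff, eq_comm]

theorem tg_star {z : BB A sP} :
    tg sP sQ z = Sum.inr (Sum.inl ()) ↔ z = mkS := by
  rcases z with ((c'|u)|(⟨c',(_|_)⟩|a)) <;> simp [tg, mkS]

theorem between (hcl : Function.Injective cl) (hb : ∀ a, pos a < n) {c : Quotient sP}
    {b : BB A sP} (h1 : mkL c ≺ b) (h2 : b ≺ mkR c) :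
    ∃ a, b = mkE a ∧ Quotient.mk sP a = c := by
  rcases b with ((c'|u)|(⟨c',(_|_)⟩|a)) <;>
    simp only [blt, kk, mkL, mkR, mkE] at h1 h2 ⊢
  · omega
  · omega
  · omega
  · omega
  · exact ⟨a, rfl, hcl (by omega)⟩

theorem delims {c : Quotient sP} {z1 z2 : BB A sP}
    (hs : mkS ≺ z1) (h1 : z1 = mkM c ∨ z1 = mkL c ∨ z1 = mkR c)
    (h2 : z2 = mkM c ∨ z2 = mkL c ∨ z2 = mkR c) (h12 : z1 ≺ z2) :
    z1 = mkL c ∧ z2 = mkR c := by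
  rcases h1 with rfl | rfl | rfl <;> rcases h2 with rfl | rfl | rfl <;>
    first
      | exact ⟨rfl, rfl⟩
      | (exfalso; simp only [blt, kk, mkM, mkL, mkR, mkS] at hs h12; omega)

theorem M_lt_S (c : Quotient sP) : mkM c ≺ mkS := by simp [blt, kk, mkM, mkS]
theorem S_lt_L (c : Quotient sP) : mkS ≺ mkL c := by simp [blt, kk, mkL, mkS]
theorem M_lt_L (c : Quotient sP) : mkM c ≺ mkL c := by simp [blt, kk, mkL, mkM]
theorem L_lt_E (a : A) : mkL (Quotient.mk sP a) ≺ mkE a := by simp [blt, kk, mkL, mkE]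
theorem L_lt_R (c : Quotient sP) : mkL c ≺ mkR c := by simp [blt, kk, mkL, mkR]
theorem E_lt_R (hb : ∀ a, pos a < n) (a : A) : mkE a ≺ mkR (Quotient.mk sP a) := by
  have := hb a; simp [blt, kk, mkR, mkE]; omega
theorem R_lt_E {a1 a2 : A} (h : cl (Quotient.mk sP a1) < cl (Quotient.mk sP a2)) :
    mkR (Quotient.mk sP a1) ≺ mkE a2 := by
  simp [blt, kk, mkR, mkE]; omega

theorem not_E_lt_S (a : A) : ¬ (mkE a ≺ mkS) := by simp [blt, kk, mkE, mkS]
theorem not_E_lt_M (a : A) (c : Quotient sP) : ¬ (mkE a ≺ mkM c) := by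
  simp [blt, kk, mkE, mkM]
theorem not_S_lt_M (c : Quotient sP) : ¬ (mkS ≺ mkM c) := by simp [blt, kk, mkS, mkM]

theorem sep (hb : ∀ a, pos a < n) {c : Quotient sP} {z : BB A sP} {a1 a2 : A}
    (hz : z = mkL c ∨ z = mkR c) (h1 : mkE a1 ≺ z) (h2 : z ≺ mkE a2) :
    cl (Quotient.mk sP a1) < cl (Quotient.mk sP a2) := by
  have b1 := hb a1; have b2 := hb a2
  rcases hz with rfl | rfl <;> simp only [blt, kk, mkL, mkR, mkE] at h1 h2 <;> omega

theorem mkE_inj : Function.Injective (mkE (A := A) (sP := sP)) := fun a b h => by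
  simpa [mkE] using h

end lemmas
end TwoEqAux
open TwoEqAux in
/-- Semantic content of the Σ₁-interpretation with one parameter of finite models of two
equivalences in finite models of a linear order and an equivalence; the final clause shows
that the parameter `a*` is definable by a Π₁ condition. -/
theorem two_equivalences_into_linear_order_equivalence_with_param
    (A : Type) [Finite A] [Nonempty A] (P Q : A → A → Prop)
    (hP : Equivalence P) (hQ : Equivalence Q) :
    ∃ (B : Type) (_ : Finite B) (lt eqv : B → B → Prop),
      -- lt is a strict linear order on B
      (∀ x : B, ¬ lt x x) ∧
      (∀ x y z : B, lt x y → lt y z → lt x z) ∧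
      (∀ x y : B, lt x y ∨ x = y ∨ lt y x) ∧
      -- eqv is an equivalence relation on B
      Equivalence eqv ∧
      ∃ (astar : B) (ι : A → B),
        Function.Injective ι ∧
        -- (i) the image of ι is exactly the set defined by Φ_U(·, a*)
        (∀ b : B, (∃ z0 z1 z2 : B, eqv z0 z1 ∧ eqv z1 z2 ∧
            lt z0 astar ∧ lt astar z1 ∧ lt z1 b ∧ lt b z2) ↔ b ∈ Set.range ι) ∧
        -- (ii) Q is defined by eqv
        (∀ a1 a2 : A, Q a1 a2 ↔ eqv (ι a1) (ι a2)) ∧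
        -- (iii) P is defined by Φ_P(·, ·, a*)
        (∀ a1 a2 : A, P a1 a2 ↔ ∃ z0 z1 z2 : B, eqv z0 z1 ∧ eqv z1 z2 ∧
            lt z0 astar ∧ lt astar z1 ∧ lt z1 (ι a1) ∧ lt (ι a1) z2 ∧
            lt z1 (ι a2) ∧ lt (ι a2) z2) ∧
        -- (iv) ¬P is defined by Φ_¬P(·, ·, a*)
        (∀ a1 a2 : A, ¬ P a1 a2 ↔ ∃ z z0 : B, eqv z0 z ∧ ¬ lt astar z0 ∧
            ((lt (ι a1) z ∧ lt z (ι a2)) ∨ (lt (ι a2) z ∧ lt z (ι a1)))) ∧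
        -- moreover: a* is the unique element satisfying the Π₁ condition
        (∀ b : B, ((∀ x : B, lt b x → ¬ eqv x b) ∧
            (∀ x1 x2 : B, lt x1 x2 → lt x2 b → ¬ eqv x1 x2)) ↔ b = astar) := by
  classical
  obtain ⟨n, ⟨eA⟩⟩ := Finite.exists_equiv_fin A
  let sP : Setoid A := ⟨P, hP⟩
  let sQ : Setoid A := ⟨Q, hQ⟩
  obtain ⟨cl, hcl⟩ := (countable_iff_exists_injective (Quotient sP)).mp inferInstance
  let pos : A → ℕ := fun a => (eA a : ℕ)
  have hpos : Function.Injective pos := fun a b h => eA.injective (Fin.val_injective h)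
  have hb : ∀ a, pos a < n := fun a => (eA a).isLt
  refine ⟨BB A sP, inferInstance, blt sP cl pos n,
    fun x y => tg sP sQ x = tg sP sQ y,
    blt_irrefl cl pos n,
    fun x y z h1 h2 => blt_trans cl pos n h1 h2,
    blt_trichotomy cl pos n hcl hpos hb,
    ⟨fun _ => rfl, Eq.symm, Eq.trans⟩,
    mkS, mkE, mkE_inj, ?_, ?_, ?_, ?_, ?_⟩
  · -- (i)
    intro b
    constructor
    · rintro ⟨z0, z1, z2, e01, e12, h0, h1, h2, h3⟩
      obtain ⟨c, rfl⟩ := (lt_star_iff cl pos n).mp h0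
      have t1 : z1 = mkM c ∨ z1 = mkL c ∨ z1 = mkR c := (tg_inl sQ).mp e01.symm
      have t2 : z2 = mkM c ∨ z2 = mkL c ∨ z2 = mkR c :=
        (tg_inl sQ).mp (e12.symm.trans e01.symm)
      obtain ⟨hz1, hz2⟩ := delims cl pos n h1 t1 t2 (blt_trans cl pos n h2 h3)
      subst hz1; subst hz2
      obtain ⟨a, rfl, -⟩ := between cl pos n hcl hb h2 h3
      exact ⟨a, rfl⟩
    · rintro ⟨a, rfl⟩
      exact ⟨mkM (Quotient.mk sP a), mkL (Quotient.mk sP a), mkR (Quotient.mk sP a),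
        rfl, rfl, M_lt_S cl pos n _, S_lt_L cl pos n _, L_lt_E cl pos n a, E_lt_R cl pos n hb a⟩
  · -- (ii)
    intro a1 a2
    have hiff : (tg sP sQ (mkE a1) = tg sP sQ (mkE a2)) ↔
        Quotient.mk sQ a1 = Quotient.mk sQ a2 := by simp [tg, mkE]
    show Q a1 a2 ↔ tg sP sQ (mkE a1) = tg sP sQ (mkE a2)
    rw [hiff]
    exact ⟨fun h => Quotient.sound h, fun h => Quotient.exact h⟩
  · -- (iii)
    intro a1 a2
    constructor
    · intro h
      have hc : Quotient.mk sP a2 = Quotient.mk sP a1 := Quotient.sound (hP.symm h)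
      refine ⟨mkM (Quotient.mk sP a1), mkL (Quotient.mk sP a1), mkR (Quotient.mk sP a1),
        rfl, rfl, M_lt_S cl pos n _, S_lt_L cl pos n _, L_lt_E cl pos n a1,
        E_lt_R cl pos n hb a1, ?_, ?_⟩
      · have h2 := L_lt_E cl pos n (sP := sP) a2; rwa [hc] at h2
      · have h2 := E_lt_R cl pos n (sP := sP) hb a2; rwa [hc] at h2
    · rintro ⟨z0, z1, z2, e01, e12, h0, h1, h2, h3, h4, h5⟩
      obtain ⟨c, rfl⟩ := (lt_star_iff cl pos n).mp h0
      have t1 : z1 = mkM c ∨ z1 = mkL c ∨ z1 = mkR c := (tg_inl sQ).mp e01.symm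
      have t2 : z2 = mkM c ∨ z2 = mkL c ∨ z2 = mkR c :=
        (tg_inl sQ).mp (e12.symm.trans e01.symm)
      obtain ⟨hz1, hz2⟩ := delims cl pos n h1 t1 t2 (blt_trans cl pos n h2 h3)
      subst hz1; subst hz2
      obtain ⟨a1', he1, hc1⟩ := between cl pos n hcl hb h2 h3
      obtain ⟨a2', he2, hc2⟩ := between cl pos n hcl hb h4 h5
      have ha1 : a1' = a1 := mkE_inj he1.symm
      have ha2 : a2' = a2 := mkE_inj he2.symm
      subst ha1; subst ha2
      exact Quotient.exact (hc1.trans hc2.symm)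
  · -- (iv)
    intro a1 a2
    constructor
    · intro h
      have hne : Quotient.mk sP a1 ≠ Quotient.mk sP a2 := fun he => h (Quotient.exact he)
      have hcne : cl (Quotient.mk sP a1) ≠ cl (Quotient.mk sP a2) := fun he => hne (hcl he)
      rcases lt_or_gt_of_ne hcne with hlt | hlt
      · exact ⟨mkR (Quotient.mk sP a1), mkM (Quotient.mk sP a1), rfl,
          not_S_lt_M cl pos n _, Or.inl ⟨E_lt_R cl pos n hb a1, R_lt_E cl pos n hlt⟩⟩
      · exact ⟨mkR (Quotient.mk sP a2), mkM (Quotient.mk sP a2), rfl,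
          not_S_lt_M cl pos n _, Or.inr ⟨E_lt_R cl pos n hb a2, R_lt_E cl pos n hlt⟩⟩
    · rintro ⟨z, z0, he, hns, hor⟩ hp
      rcases (not_star_lt_iff cl pos n).mp hns with ⟨c, rfl⟩ | rfl
      · have hz : z = mkM c ∨ z = mkL c ∨ z = mkR c := (tg_inl sQ).mp he.symm
        rcases hz with rfl | hz
        · rcases hor with ⟨h1, h2⟩ | ⟨h1, h2⟩ <;> exact not_E_lt_M cl pos n _ _ h1
        · have hlt : cl (Quotient.mk sP a1) < cl (Quotient.mk sP a2) ∨
              cl (Quotient.mk sP a2) < cl (Quotient.mk sP a1) := by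
            rcases hor with ⟨h1, h2⟩ | ⟨h1, h2⟩
            · exact Or.inl (sep cl pos n hb hz h1 h2)
            · exact Or.inr (sep cl pos n hb hz h1 h2)
          have heq : Quotient.mk sP a1 = Quotient.mk sP a2 := Quotient.sound hp
          rw [heq] at hlt
          omega
      · have hz : z = mkS := (tg_star sQ).mp he.symm
        subst hz
        rcases hor with ⟨h1, h2⟩ | ⟨h1, h2⟩ <;> exact not_E_lt_S cl pos n _ h1
  · -- (v)
    intro b
    constructor
    · rintro ⟨hA, hB⟩
      rcases b with ((c | u) | (⟨c, (_ | _)⟩ | a))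
      · exact absurd rfl (hA (mkL c) (M_lt_L cl pos n c))
      · rfl
      · exact absurd rfl (hA (mkR c) (L_lt_R cl pos n c))
      · exact absurd rfl (hB (mkM c) (mkL c) (M_lt_L cl pos n c) (L_lt_R cl pos n c))
      · exact absurd rfl
          (hB (mkM (Quotient.mk sP a)) (mkL (Quotient.mk sP a)) (M_lt_L cl pos n _)
            (L_lt_E cl pos n a))
    · rintro rfl
      constructor
      · intro x hx he
        have hz : x = mkS := (tg_star sQ).mp he
        subst hz
        exact blt_irrefl cl pos n _ hx
      · intro x1 x2 h12 h2s he
        obtain ⟨c2, rfl⟩ := (lt_star_iff cl pos n).mp h2s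
        obtain ⟨c1, rfl⟩ := (lt_star_iff cl pos n).mp (blt_trans cl pos n h12 h2s)
        have hc : c1 = c2 := by simpa [tg, mkM] using he
        subst hc
        exact blt_irrefl cl pos n _ h12
end

section
/- A Π2 sentence of the language {P², Q²} (two binary relation symbols) is true in every nonempty model of two equivalences if and only if it is true in every finite nonempty model of two equivalences. That is, the Π2-theory of the class 2Eq of all nonempty models of two equivalences coincides with the Π2-theory of the class 2Eq_fin of all finite nonempty models of two equivalences. -/
open FirstOrder FirstOrder.Language

universe u

/-- A σE-structure is a model of two equivalences when both P and Q are interpreted as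
equivalence relations. -/
def IsTwoEq (M : Type u) [σE.Structure M] : Prop :=
  Equivalence (fun x y : M => Structure.RelMap (L := σE) EqRel2.P ![x, y]) ∧
  Equivalence (fun x y : M => Structure.RelMap (L := σE) EqRel2.Q ![x, y])

lemma IsSigma1.isExistential {L : Language} {α : Type*} {n : ℕ}
    {φ : L.BoundedFormula α n} (h : IsSigma1 φ) : φ.IsExistential := by
  induction h with
  | of_isQF h => exact BoundedFormula.IsExistential.of_isQF h
  | ex _ ih => exact ih.ex

lemma relMap_sub {M : Type u} [σE.Structure M] {S : σE.Substructure M}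
    (r : EqRel2 2) (x y : S) :
    Structure.RelMap (L := σE) r ![x, y] ↔
      Structure.RelMap (L := σE) r ![(x : M), (y : M)] := by
  have e : (fun i => ((![x, y] : Fin 2 → S) i : M)) = ![(x : M), (y : M)] := by
    funext i; fin_cases i <;> rfl
  have d : Structure.RelMap (L := σE) r ![x, y] =
      Structure.RelMap (L := σE) r (fun i => ((![x, y] : Fin 2 → S) i : M)) := rfl
  rw [d, e]

lemma key {M : Type u} [σE.Structure M] [Nonempty M] :
    ∀ {n : ℕ} {φ : σE.BoundedFormula Empty n}, IsPi2 φ →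
      ∀ xs : Fin n → M,
      (∀ S : σE.Substructure M, (S : Set M).Finite → Nonempty S →
        ∀ ys : Fin n → S, (∀ i, (ys i : M) = xs i) →
          φ.Realize default ys) →
      φ.Realize default xs := by
  intro n φ hφ
  induction hφ with
  | @of_isSigma1 n φ hσ =>
    intro xs h
    obtain ⟨m⟩ := ‹Nonempty M›
    set S : σE.Substructure M :=
      { carrier := insert m (Set.range xs)
        fun_mem := fun f => Empty.elim f } with hS
    have hfin : (S : Set M).Finite := (Set.finite_range xs).insert m
    have hne : Nonempty S := ⟨⟨m, Set.mem_insert m _⟩⟩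
    have hys : ∀ i, xs i ∈ S := fun i => Set.mem_insert_of_mem m ⟨i, rfl⟩
    have hreal := h S hfin hne (fun i => ⟨xs i, hys i⟩) (fun i => rfl)
    have := hσ.isExistential.realize_embedding S.subtype hreal
    have e1 : S.subtype ∘ (default : Empty → S) = (default : Empty → M) :=
      Subsingleton.elim _ _
    have e2 : S.subtype ∘ (fun i => (⟨xs i, hys i⟩ : S)) = xs := rfl
    rwa [e1, e2] at this
  | @all n φ hπ ih =>
    intro xs h
    rw [BoundedFormula.realize_all]
    intro x
    apply ih (Fin.snoc xs x)
    intro S hfin hne ys hys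
    have h1 := h S hfin hne (fun i => ys i.castSucc)
      (fun i => by rw [hys i.castSucc]; simp)
    rw [BoundedFormula.realize_all] at h1
    have h2 := h1 (ys (Fin.last n))
    convert h2 using 1
    funext i
    refine Fin.lastCases ?_ ?_ i <;> simp

/-- A Π₂ sentence of {P², Q²} is true in every nonempty model of two equivalences iff it is
true in every finite nonempty model of two equivalences: the Π₂-theory of 2Eq coincides with
the Π₂-theory of 2Eq_fin. -/
theorem pi2_theory_twoEq_eq_pi2_theory_twoEqFin (φ : σE.Sentence) (hφ : IsPi2 φ) :
    (∀ (M : Type u) [σE.Structure M] [Nonempty M], IsTwoEq M → M ⊨ φ) ↔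
      (∀ (M : Type u) [σE.Structure M] [Nonempty M] [Finite M], IsTwoEq M → M ⊨ φ) := by
  constructor
  · intro h M _ _ _ hM
    exact h M hM
  · intro h M _ _ hM
    have : BoundedFormula.Realize φ (default : Empty → M) (default : Fin 0 → M) := by
      apply key hφ
      intro S hfin hne ys hys
      haveI : Finite S := hfin
      have hSTE : IsTwoEq S := by
        constructor
        · exact ⟨fun x => (relMap_sub _ x x).2 (hM.1.refl _),
            fun hxy => (relMap_sub _ _ _).2 (hM.1.symm ((relMap_sub _ _ _).1 hxy)),
            fun hxy hyz => (relMap_sub _ _ _).2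
              (hM.1.trans ((relMap_sub _ _ _).1 hxy) ((relMap_sub _ _ _).1 hyz))⟩
        · exact ⟨fun x => (relMap_sub _ x x).2 (hM.2.refl _),
            fun hxy => (relMap_sub _ _ _).2 (hM.2.symm ((relMap_sub _ _ _).1 hxy)),
            fun hxy hyz => (relMap_sub _ _ _).2
              (hM.2.trans ((relMap_sub _ _ _).1 hxy) ((relMap_sub _ _ _).1 hyz))⟩
      have := h S hSTE
      have h0 : BoundedFormula.Realize φ (default : Empty → S) (default : Fin 0 → S) := this
      convert h0 using 1 <;> exact Subsingleton.elim _ _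
    exact this
end
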